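/- arXiv:1712.06278 — 5 statements merged into one kernel-verified Lean document; each statement's English description precedes it below -/
import Mathlib

section
/- Under the assumptions of the previous setting (i.i.d. inter-arrival times with mean 1/λ and finite variance σ_T²), E[M²(t)] = λ³σ_T²(t + E[R(t)]) for all t ≥ 0, where M(t) = Σ_{n=1}^{N(t)} (1 − λT_n) and R(t) is the residual time. -/
open MeasureTheory ProbabilityTheory Filter Set
open scoped ENNReal NNReal Topology

section RenewalAux

variable {Ω : Type*} {mΩ : MeasurableSpace Ω} {μ : Measure Ω}
variable {T : ℕ → Ω → ℝ} {lam t : ℝ}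

/-- indicator of the event `S_n ≤ t`. -/
noncomputable def rchi (T : ℕ → Ω → ℝ) (t : ℝ) (n : ℕ) (ω : Ω) : ℝ :=
  if ∑ i ∈ Finset.range n, T i ω ≤ t then 1 else 0

/-- the `n`-th summand of the truncated renewal martingale. -/
noncomputable def rY (T : ℕ → Ω → ℝ) (lam t : ℝ) (n : ℕ) (ω : Ω) : ℝ :=
  (1 - lam * T n ω) * rchi T t n ω

lemma rchi_nonneg (n : ℕ) (ω : Ω) : 0 ≤ rchi T t n ω := by
  unfold rchi; split <;> norm_num

lemma rchi_le_one (n : ℕ) (ω : Ω) : rchi T t n ω ≤ 1 := by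
  unfold rchi; split <;> norm_num

lemma rchi_sq (n : ℕ) (ω : Ω) : rchi T t n ω * rchi T t n ω = rchi T t n ω := by
  unfold rchi; split <;> norm_num

lemma rchi_mul (hpos : ∀ n ω, 0 < T n ω) {m n : ℕ} (hmn : m ≤ n) (ω : Ω) :
    rchi T t m ω * rchi T t n ω = rchi T t n ω := by
  unfold rchi
  by_cases h : ∑ i ∈ Finset.range n, T i ω ≤ t
  · have h' : ∑ i ∈ Finset.range m, T i ω ≤ t :=
      le_trans (Finset.sum_le_sum_of_subset_of_nonneg (Finset.range_subset_range.2 hmn)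
        (fun i _ _ => (hpos i ω).le)) h
    simp [h, h']
  · simp [h]

lemma rchi_measurable (hmeas : ∀ n, Measurable (T n)) (n : ℕ) :
    Measurable (rchi T t n : Ω → ℝ) := by
  unfold rchi
  exact Measurable.ite
    (measurableSet_le (Finset.measurable_sum _ fun i _ => hmeas i) measurable_const)
    measurable_const measurable_const

lemma rchi_memℒp_top [IsProbabilityMeasure μ] (hmeas : ∀ n, Measurable (T n)) (n : ℕ) :
    MemLp (rchi T t n) ⊤ μ :=
  memLp_top_of_bound (rchi_measurable hmeas n).aestronglyMeasurable 1
    (ae_of_all _ fun ω => by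
      rw [Real.norm_eq_abs, abs_of_nonneg (rchi_nonneg n ω)]; exact rchi_le_one n ω)

lemma rchi_memℒp_two [IsProbabilityMeasure μ] (hmeas : ∀ n, Measurable (T n)) (n : ℕ) :
    MemLp (rchi T t n) 2 μ :=
  (rchi_memℒp_top (μ := μ) hmeas n).mono_exponent le_top

lemma rchi_integrable [IsProbabilityMeasure μ] (hmeas : ∀ n, Measurable (T n)) (n : ℕ) :
    Integrable (rchi T t n) μ :=
  ((rchi_memℒp_top (μ := μ) hmeas n).mono_exponent le_top :
    MemLp (rchi T t n) 1 μ).integrable le_rfl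

lemma X_memℒp [IsProbabilityMeasure μ] (hT2 : MemLp (T 0) 2 μ)
    (hident : ∀ n, IdentDistrib (T n) (T 0) μ μ) (n : ℕ) :
    MemLp (fun ω => 1 - lam * T n ω) 2 μ := by
  have h : MemLp (T n) 2 μ := (hident n).memLp_iff.2 hT2
  exact (memLp_const 1).sub (h.const_mul lam)

lemma mul_integrable_of_memℒp_two [IsProbabilityMeasure μ] {f g : Ω → ℝ}
    (hf : MemLp f 2 μ) (hg : MemLp g 2 μ) :
    Integrable (fun ω => f ω * g ω) μ := by
  have h : MemLp (g • f) 1 μ :=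
    hf.smul hg
  exact (memLp_one_iff_integrable.1 h).congr (ae_of_all _ fun ω => mul_comm _ _)

lemma rY_memℒp [IsProbabilityMeasure μ] (hmeas : ∀ n, Measurable (T n))
    (hT2 : MemLp (T 0) 2 μ) (hident : ∀ n, IdentDistrib (T n) (T 0) μ μ) (n : ℕ) :
    MemLp (rY T lam t n) 2 μ := by
  have h : rY T lam t n = rchi T t n • (fun ω => 1 - lam * T n ω) := by
    funext ω; simp [rY, Pi.smul_apply, smul_eq_mul, mul_comm]
  rw [h]
  exact (X_memℒp hT2 hident n).smul (rchi_memℒp_top hmeas n)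

/-- any measurable function of `T_0, …, T_{n-1}` is independent of any measurable
function of `T n`. -/
lemma indep_helper [IsProbabilityMeasure μ]
    (hiid : iIndepFun T μ) (hmeas : ∀ n, Measurable (T n)) (n : ℕ)
    {φ : (↥(Finset.range n) → ℝ) → ℝ} {ψ : ℝ → ℝ}
    (hφ : Measurable φ) (hψ : Measurable ψ) :
    IndepFun (fun ω => φ fun i => T i ω) (fun ω => ψ (T n ω)) μ := by
  have hd : Disjoint (Finset.range n) ({n} : Finset ℕ) := by
    simp [Finset.disjoint_singleton_right]
  have base := hiid.indepFun_finset (Finset.range n) {n} hd hmeas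
  have hψ' : Measurable fun v : (({n} : Finset ℕ) : Finset ℕ) → ℝ =>
      ψ (v ⟨n, Finset.mem_singleton_self n⟩) := hψ.comp (measurable_pi_apply _)
  exact base.comp hφ hψ'

lemma integral_X_eq_zero [IsProbabilityMeasure μ] (hT2 : MemLp (T 0) 2 μ)
    (hident : ∀ n, IdentDistrib (T n) (T 0) μ μ) (hlam : 0 < lam)
    (hmean : ∫ ω, T 0 ω ∂μ = 1 / lam) (n : ℕ) :
    ∫ ω, (1 - lam * T n ω) ∂μ = 0 := by
  have hint : Integrable (T n) μ :=
    ((hident n).memLp_iff.2 hT2).integrable one_le_two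
  rw [integral_sub (integrable_const 1) (hint.const_mul lam), integral_const,
    integral_const_mul, (hident n).integral_eq, hmean]
  have : lam ≠ 0 := hlam.ne'
  field_simp
  simp

lemma integral_X_sq [IsProbabilityMeasure μ] (hT2 : MemLp (T 0) 2 μ)
    (hident : ∀ n, IdentDistrib (T n) (T 0) μ μ) (hlam : 0 < lam)
    (hmean : ∫ ω, T 0 ω ∂μ = 1 / lam) (n : ℕ) :
    ∫ ω, (1 - lam * T n ω)^2 ∂μ = lam^2 * variance (T 0) μ := by
  have hmm : Measurable fun x : ℝ => (1 - lam * x)^2 :=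
    ((measurable_const.sub (measurable_id.const_mul lam)).pow measurable_const)
  have h1 : ∫ ω, (1 - lam * T n ω)^2 ∂μ = ∫ ω, (1 - lam * T 0 ω)^2 ∂μ :=
    ((hident n).comp hmm).integral_eq
  rw [h1, variance_eq_integral hT2.1.aemeasurable, hmean]
  rw [← integral_const_mul]
  congr 1; funext ω
  have hl : lam ≠ 0 := hlam.ne'
  field_simp
  ring

lemma core_integral_sq [IsProbabilityMeasure μ]
    (hmeas : ∀ n, Measurable (T n)) (hpos : ∀ n ω, 0 < T n ω)
    (hiid : iIndepFun T μ)
    (hident : ∀ n, IdentDistrib (T n) (T 0) μ μ) (hT2 : MemLp (T 0) 2 μ)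
    (hlam : 0 < lam) (hmean : ∫ ω, T 0 ω ∂μ = 1 / lam) (s : Finset ℕ) :
    ∫ ω, (∑ n ∈ s, rY T lam t n ω)^2 ∂μ
      = (lam^2 * variance (T 0) μ) * ∑ n ∈ s, ∫ ω, rchi T t n ω ∂μ := by
  have hYL2 : ∀ n, MemLp (rY T lam t n) 2 μ := rY_memℒp hmeas hT2 hident
  have hprod : ∀ m n, Integrable (fun ω => rY T lam t m ω * rY T lam t n ω) μ :=
    fun m n => mul_integrable_of_memℒp_two (hYL2 m) (hYL2 n)
  -- cross terms vanish
  have cross : ∀ m n, m < n → ∫ ω, rY T lam t m ω * rY T lam t n ω ∂μ = 0 := by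
    intro m n hmn
    have hptwise : ∀ ω, rY T lam t m ω * rY T lam t n ω
        = ((1 - lam * T m ω) * rchi T t n ω) * (1 - lam * T n ω) := by
      intro ω
      unfold rY
      rw [show (1 - lam * T m ω) * rchi T t m ω * ((1 - lam * T n ω) * rchi T t n ω)
          = (1 - lam * T m ω) * (rchi T t m ω * rchi T t n ω) * (1 - lam * T n ω) by ring,
        rchi_mul hpos hmn.le]
    have hm : m ∈ Finset.range n := Finset.mem_range.2 hmn
    set φ : (↥(Finset.range n) → ℝ) → ℝ := fun v =>
      (1 - lam * v ⟨m, hm⟩) * (if (∑ i, v i) ≤ t then 1 else 0) with hφ_def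
    have hφ : Measurable φ := by
      apply Measurable.mul
      · fun_prop
      · exact Measurable.ite
          (measurableSet_le (Finset.measurable_sum _ fun i _ => measurable_pi_apply i)
            measurable_const) measurable_const measurable_const
    have hψ : Measurable fun x : ℝ => 1 - lam * x :=
      measurable_const.sub (measurable_id.const_mul lam)
    have hind := indep_helper hiid hmeas n hφ hψ
    have hcomp : (fun ω => φ fun i => T i ω)
        = fun ω => (1 - lam * T m ω) * rchi T t n ω := by
      funext ω
      simp only [hφ_def]
      rw [Finset.sum_coe_sort (Finset.range n) (fun i => T i ω)]
      rfl
    rw [hcomp] at hind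
    have hint1 : Integrable (fun ω => (1 - lam * T m ω) * rchi T t n ω) μ :=
      mul_integrable_of_memℒp_two (X_memℒp hT2 hident m) (rchi_memℒp_two hmeas n)
    have hint2 : Integrable (fun ω => 1 - lam * T n ω) μ := by
      have := (X_memℒp (lam := lam) hT2 hident n).integrable one_le_two
      exact this
    have := hind.integral_fun_mul_eq_mul_integral hint1.aestronglyMeasurable hint2.aestronglyMeasurable
    have hzero := integral_X_eq_zero hT2 hident hlam hmean n
    calc ∫ ω, rY T lam t m ω * rY T lam t n ω ∂μ
        = ∫ ω, ((1 - lam * T m ω) * rchi T t n ω) * (1 - lam * T n ω) ∂μ := by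
          exact integral_congr_ae (ae_of_all _ hptwise)
      _ = (∫ ω, (1 - lam * T m ω) * rchi T t n ω ∂μ) * ∫ ω, (1 - lam * T n ω) ∂μ := this
      _ = 0 := by rw [hzero, mul_zero]
  -- diagonal terms
  have diag : ∀ n, ∫ ω, rY T lam t n ω * rY T lam t n ω ∂μ
      = (lam^2 * variance (T 0) μ) * ∫ ω, rchi T t n ω ∂μ := by
    intro n
    have hptwise : ∀ ω, rY T lam t n ω * rY T lam t n ω
        = rchi T t n ω * (1 - lam * T n ω)^2 := by
      intro ω
      unfold rY
      rw [show (1 - lam * T n ω) * rchi T t n ω * ((1 - lam * T n ω) * rchi T t n ω)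
          = (rchi T t n ω * rchi T t n ω) * ((1 - lam * T n ω) * (1 - lam * T n ω)) by ring,
        rchi_sq, ← sq]
    set φ : (↥(Finset.range n) → ℝ) → ℝ := fun v =>
      if (∑ i, v i) ≤ t then 1 else 0 with hφ_def
    have hφ : Measurable φ :=
      Measurable.ite
        (measurableSet_le (Finset.measurable_sum _ fun i _ => measurable_pi_apply i)
          measurable_const) measurable_const measurable_const
    have hψ : Measurable fun x : ℝ => (1 - lam * x)^2 :=
      (measurable_const.sub (measurable_id.const_mul lam)).pow measurable_const
    have hind := indep_helper hiid hmeas n hφ hψ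
    have hcomp : (fun ω => φ fun i => T i ω) = rchi T t n := by
      funext ω
      simp only [hφ_def]
      rw [Finset.sum_coe_sort (Finset.range n) (fun i => T i ω)]
      rfl
    rw [hcomp] at hind
    have hXsq : MemLp (fun ω => (1 - lam * T n ω)^2) 1 μ := by
      have h2 := X_memℒp (lam := lam) hT2 hident n
      have := mul_integrable_of_memℒp_two h2 h2
      rw [memLp_one_iff_integrable]
      simpa [sq] using this
    have hint2 : Integrable (fun ω => (1 - lam * T n ω)^2) μ :=
      memLp_one_iff_integrable.1 hXsq
    have := hind.integral_fun_mul_eq_mul_integral (rchi_integrable hmeas n).aestronglyMeasurable hint2.aestronglyMeasurable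
    calc ∫ ω, rY T lam t n ω * rY T lam t n ω ∂μ
        = ∫ ω, rchi T t n ω * (1 - lam * T n ω)^2 ∂μ :=
          integral_congr_ae (ae_of_all _ hptwise)
      _ = (∫ ω, rchi T t n ω ∂μ) * ∫ ω, (1 - lam * T n ω)^2 ∂μ := this
      _ = (lam^2 * variance (T 0) μ) * ∫ ω, rchi T t n ω ∂μ := by
          rw [integral_X_sq hT2 hident hlam hmean n]; ring
  -- put it together
  have hexp : ∀ ω, (∑ n ∈ s, rY T lam t n ω)^2
      = ∑ m ∈ s, ∑ n ∈ s, rY T lam t m ω * rY T lam t n ω := by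
    intro ω; rw [sq, Finset.sum_mul_sum]
  rw [integral_congr_ae (ae_of_all _ hexp)]
  rw [integral_finset_sum s fun m _ => integrable_finset_sum s fun n _ => hprod m n]
  have : ∀ m ∈ s, ∫ ω, ∑ n ∈ s, rY T lam t m ω * rY T lam t n ω ∂μ
      = (lam^2 * variance (T 0) μ) * ∫ ω, rchi T t m ω ∂μ := by
    intro m hm
    rw [integral_finset_sum s fun n _ => hprod m n]
    rw [Finset.sum_eq_single_of_mem m hm]
    · exact diag m
    · intro n _ hne
      rcases hne.lt_or_gt with h | h
      · -- n < m
        have := cross n m h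
        rw [← this]
        exact integral_congr_ae (ae_of_all _ fun ω => mul_comm _ _)
      · exact cross m n h
  rw [Finset.sum_congr rfl this, ← Finset.mul_sum]

end RenewalAux

/-- `E[M²(t)] = λ³ σ_T² (t + E[R(t)])` for the renewal martingale `M`. -/
theorem renewal_martingale_second_moment
    {Ω : Type*} {mΩ : MeasurableSpace Ω} (μ : Measure Ω) [IsProbabilityMeasure μ]
    (T : ℕ → Ω → ℝ) (N : ℝ → Ω → ℕ) (R : ℝ → Ω → ℝ) (lam σT2 : ℝ)
    (hmeas : ∀ n, Measurable (T n))
    (hpos : ∀ n ω, 0 < T n ω)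
    (hiid : iIndepFun T μ)
    (hident : ∀ n, IdentDistrib (T n) (T 0) μ μ)
    (hT2 : MemLp (T 0) 2 μ)
    (hlam : 0 < lam) (hmean : ∫ ω, T 0 ω ∂μ = 1 / lam)
    (hvar : σT2 = variance (T 0) μ)
    (hN : ∀ t : ℝ, 0 ≤ t → ∀ ω n, n < N t ω ↔ ∑ i ∈ Finset.range n, T i ω ≤ t)
    (hR : ∀ t : ℝ, ∀ ω, R t ω = ∑ i ∈ Finset.range (N t ω), T i ω - t)
    (hNint : ∀ t : ℝ, 0 ≤ t → Integrable (fun ω => (N t ω : ℝ)) μ)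
    (hRint : ∀ t : ℝ, 0 ≤ t → Integrable (R t) μ) :
    ∀ t : ℝ, 0 ≤ t →
      ∫ ω, (∑ i ∈ Finset.range (N t ω), (1 - lam * T i ω))^2 ∂μ
        = lam^3 * σT2 * (t + ∫ ω, R t ω ∂μ) := by
  intro t ht
  set M : Ω → ℝ := fun ω => ∑ i ∈ Finset.range (N t ω), (1 - lam * T i ω) with hM_def
  set fk : ℕ → Ω → ℝ := fun k ω => ∑ n ∈ Finset.range k, rY T lam t n ω with hfk_def
  set p : ℕ → ℝ := fun n => ∫ ω, rchi T t n ω ∂μ with hp_def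
  set V : ℝ := lam ^ 2 * variance (T 0) μ with hV_def
  set A : ℝ := ∫ ω, (N t ω : ℝ) ∂μ with hA_def
  have hchi_eq : ∀ n ω, rchi T t n ω = if n < N t ω then (1 : ℝ) else 0 := by
    intro n ω
    unfold rchi
    by_cases h : n < N t ω
    · rw [if_pos ((hN t ht ω n).1 h), if_pos h]
    · have h2 : ¬ (∑ i ∈ Finset.range n, T i ω ≤ t) := fun hc => h ((hN t ht ω n).2 hc)
      rw [if_neg h2, if_neg h]
  have hfkM : ∀ ω k, N t ω ≤ k → fk k ω = M ω := by
    intro ω k hk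
    calc fk k ω = ∑ n ∈ Finset.range k, (if n < N t ω then (1 - lam * T n ω) else 0) := by
          apply Finset.sum_congr rfl
          intro n _
          simp only [rY, hchi_eq]
          split <;> simp
      _ = ∑ n ∈ (Finset.range k).filter (fun n => n < N t ω), (1 - lam * T n ω) :=
          (Finset.sum_filter _ _).symm
      _ = M ω := by
          apply Finset.sum_congr _ (fun _ _ => rfl)
          ext n
          simp only [Finset.mem_filter, Finset.mem_range]
          exact ⟨fun h => h.2, fun h => ⟨lt_of_lt_of_le h hk, h⟩⟩
  have hsum_chi : ∀ ω k, N t ω ≤ k → ∑ n ∈ Finset.range k, rchi T t n ω = (N t ω : ℝ) := by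
    intro ω k hk
    calc ∑ n ∈ Finset.range k, rchi T t n ω
        = ∑ n ∈ Finset.range k, (if n < N t ω then (1:ℝ) else 0) :=
          Finset.sum_congr rfl fun n _ => hchi_eq n ω
      _ = ∑ n ∈ (Finset.range k).filter (fun n => n < N t ω), (1:ℝ) :=
          (Finset.sum_filter _ _).symm
      _ = (N t ω : ℝ) := by
          rw [show (Finset.range k).filter (fun n => n < N t ω) = Finset.range (N t ω) from ?_]
          · simp
          · ext n
            simp only [Finset.mem_filter, Finset.mem_range]
            exact ⟨fun h => h.2, fun h => ⟨lt_of_lt_of_le h hk, h⟩⟩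
  have hsum_T : ∀ ω k, N t ω ≤ k →
      ∑ n ∈ Finset.range k, rchi T t n ω * T n ω = ∑ i ∈ Finset.range (N t ω), T i ω := by
    intro ω k hk
    calc ∑ n ∈ Finset.range k, rchi T t n ω * T n ω
        = ∑ n ∈ Finset.range k, (if n < N t ω then T n ω else 0) := by
          apply Finset.sum_congr rfl
          intro n _
          simp only [hchi_eq]
          split <;> simp
      _ = ∑ n ∈ (Finset.range k).filter (fun n => n < N t ω), T n ω :=
          (Finset.sum_filter _ _).symm
      _ = ∑ i ∈ Finset.range (N t ω), T i ω := by
          apply Finset.sum_congr _ (fun _ _ => rfl)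
          ext n
          simp only [Finset.mem_filter, Finset.mem_range]
          exact ⟨fun h => h.2, fun h => ⟨lt_of_lt_of_le h hk, h⟩⟩
  -- measurability and integrability
  have hY_meas : ∀ n, Measurable (rY T lam t n) := fun n =>
    (measurable_const.sub ((hmeas n).const_mul lam)).mul (rchi_measurable hmeas n)
  have hfk_meas : ∀ k, Measurable (fk k) := fun k =>
    Finset.measurable_sum _ fun n _ => hY_meas n
  have hfk_tendsto : ∀ ω, Tendsto (fun k => fk k ω) atTop (𝓝 (M ω)) := fun ω =>
    tendsto_atTop_of_eventually_const (i₀ := N t ω) fun k hk => hfkM ω k hk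
  have hM_meas : Measurable M := by
    apply measurable_of_tendsto_metrizable' atTop hfk_meas
    rw [tendsto_pi_nhds]
    exact hfk_tendsto
  have hY_L2 : ∀ n, MemLp (rY T lam t n) 2 μ := rY_memℒp hmeas hT2 hident
  have hfk_L2 : ∀ k, MemLp (fk k) 2 μ := by
    intro k
    have h := memLp_finset_sum' (Finset.range k) (fun n _ => hY_L2 n) (μ := μ) (p := 2)
    apply h.ae_eq
    filter_upwards with ω
    simp [hfk_def]
  have hchi_int : ∀ n, Integrable (rchi T t n) μ := rchi_integrable hmeas
  have hp_nonneg : ∀ n, 0 ≤ p n := fun n => integral_nonneg fun ω => rchi_nonneg n ω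
  -- first MCT: partial sums of p converge to A
  have hMCT1 : Tendsto (fun k => ∑ n ∈ Finset.range k, p n) atTop (𝓝 A) := by
    have h := integral_tendsto_of_tendsto_of_monotone
      (f := fun k ω => ∑ n ∈ Finset.range k, rchi T t n ω)
      (F := fun ω => (N t ω : ℝ))
      (fun k => integrable_finset_sum _ fun n _ => hchi_int n)
      (hNint t ht)
      (ae_of_all _ fun ω j k hjk => Finset.sum_le_sum_of_subset_of_nonneg
        (Finset.range_subset_range.2 hjk) fun i _ _ => rchi_nonneg i ω)
      (ae_of_all _ fun ω => tendsto_atTop_of_eventually_const (i₀ := N t ω)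
        fun k hk => hsum_chi ω k hk)
    have heq : ∀ k, ∫ ω, ∑ n ∈ Finset.range k, rchi T t n ω ∂μ = ∑ n ∈ Finset.range k, p n :=
      fun k => integral_finset_sum _ fun n _ => hchi_int n
    simpa only [heq] using h
  have hpartial_mono : Monotone fun k => ∑ n ∈ Finset.range k, p n := fun j k hjk =>
    Finset.sum_le_sum_of_subset_of_nonneg (Finset.range_subset_range.2 hjk) fun i _ _ => hp_nonneg i
  have hpartial_le : ∀ k, ∑ n ∈ Finset.range k, p n ≤ A := fun k =>
    hpartial_mono.ge_of_tendsto hMCT1 k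
  -- Wald's first identity
  have hTn_int : ∀ n, Integrable (T n) μ := fun n =>
    ((hident n).memLp_iff.2 hT2).integrable one_le_two
  have hint_Tchi : ∀ n, ∫ ω, rchi T t n ω * T n ω ∂μ = p n * (1 / lam) := by
    intro n
    set φ : (↥(Finset.range n) → ℝ) → ℝ := fun v => if (∑ i, v i) ≤ t then 1 else 0 with hφ_def
    have hφ : Measurable φ :=
      Measurable.ite (measurableSet_le (Finset.measurable_sum _ fun i _ => measurable_pi_apply i)
        measurable_const) measurable_const measurable_const
    have hind := indep_helper hiid hmeas n hφ measurable_id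
    have hcomp : (fun ω => φ fun i => T i ω) = rchi T t n := by
      funext ω
      simp only [hφ_def]
      rw [Finset.sum_coe_sort (Finset.range n) (fun i => T i ω)]
      rfl
    rw [hcomp] at hind
    have h := hind.integral_fun_mul_eq_mul_integral (hchi_int n).aestronglyMeasurable (hTn_int n).aestronglyMeasurable
    calc ∫ ω, rchi T t n ω * T n ω ∂μ = (∫ ω, rchi T t n ω ∂μ) * ∫ ω, T n ω ∂μ := h
      _ = p n * (1 / lam) := by rw [(hident n).integral_eq, hmean]
  have hSN_int : Integrable (fun ω => ∑ i ∈ Finset.range (N t ω), T i ω) μ := by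
    apply Integrable.congr ((hRint t ht).add (integrable_const t))
    filter_upwards with ω
    simp only [Pi.add_apply]
    rw [hR t ω]; ring
  have hMCT2 : Tendsto (fun k => ∑ n ∈ Finset.range k, p n * (1 / lam)) atTop
      (𝓝 ((∫ ω, R t ω ∂μ) + t)) := by
    have h := integral_tendsto_of_tendsto_of_monotone
      (f := fun k ω => ∑ n ∈ Finset.range k, rchi T t n ω * T n ω)
      (F := fun ω => ∑ i ∈ Finset.range (N t ω), T i ω)
      (fun k => integrable_finset_sum _ fun n _ =>
        mul_integrable_of_memℒp_two (rchi_memℒp_two hmeas n) ((hident n).memLp_iff.2 hT2))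
      hSN_int
      (ae_of_all _ fun ω j k hjk => Finset.sum_le_sum_of_subset_of_nonneg
        (Finset.range_subset_range.2 hjk) fun i _ _ =>
          mul_nonneg (rchi_nonneg i ω) (hpos i ω).le)
      (ae_of_all _ fun ω => tendsto_atTop_of_eventually_const (i₀ := N t ω)
        fun k hk => hsum_T ω k hk)
    have heq : ∀ k, ∫ ω, ∑ n ∈ Finset.range k, rchi T t n ω * T n ω ∂μ
        = ∑ n ∈ Finset.range k, p n * (1 / lam) := fun k => by
      rw [integral_finset_sum _ fun n _ =>
        mul_integrable_of_memℒp_two (rchi_memℒp_two hmeas n) ((hident n).memLp_iff.2 hT2)]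
      exact Finset.sum_congr rfl fun n _ => hint_Tchi n
    have hF : ∫ ω, (∑ i ∈ Finset.range (N t ω), T i ω) ∂μ = (∫ ω, R t ω ∂μ) + t := by
      have : (fun ω => ∑ i ∈ Finset.range (N t ω), T i ω) = fun ω => R t ω + t := by
        funext ω; rw [hR t ω]; ring
      rw [this, integral_add (hRint t ht) (integrable_const t), integral_const]
      simp
    rw [hF] at h
    simpa only [heq] using h
  have hAeq : A = lam * (t + ∫ ω, R t ω ∂μ) := by
    have h2' : Tendsto (fun k => (∑ n ∈ Finset.range k, p n) * (1 / lam)) atTop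
        (𝓝 (A * (1 / lam))) := hMCT1.mul_const _
    have huni : A * (1 / lam) = (∫ ω, R t ω ∂μ) + t := by
      apply tendsto_nhds_unique _ hMCT2
      simpa only [Finset.sum_mul] using h2'
    have hl : lam ≠ 0 := hlam.ne'
    field_simp at huni
    linarith
  -- the core identity for all finite index sets
  have hcore : ∀ s : Finset ℕ, ∫ ω, (∑ n ∈ s, rY T lam t n ω)^2 ∂μ = V * ∑ n ∈ s, p n :=
    fun s => core_integral_sq hmeas hpos hiid hident hT2 hlam hmean s
  have hV_nonneg : 0 ≤ V := mul_nonneg (sq_nonneg lam) (variance_nonneg _ μ)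
  -- ℒ² machinery
  have nnnorm_sq : ∀ x : ℝ, ((‖x‖₊ : ℝ≥0∞)) ^ 2 = ENNReal.ofReal (x ^ 2) := by
    intro x
    rw [show ((‖x‖₊ : ℝ≥0∞)) = ENNReal.ofReal ‖x‖ from (ofReal_norm x).symm, ← ENNReal.ofReal_pow (norm_nonneg x)]
    rw [Real.norm_eq_abs, sq_abs]
  have sqInt : ∀ g : Ω → ℝ, MemLp g 2 μ →
      ∫⁻ ω, ((‖g ω‖₊ : ℝ≥0∞)) ^ 2 ∂μ = ENNReal.ofReal (∫ ω, (g ω) ^ 2 ∂μ) := by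
    intro g hg
    rw [ofReal_integral_eq_lintegral_ofReal hg.integrable_sq
      (ae_of_all _ fun ω => sq_nonneg _)]
    exact lintegral_congr fun ω => nnnorm_sq (g ω)
  have eLp2 : ∀ g : Ω → ℝ, eLpNorm g 2 μ
      = (∫⁻ ω, ((‖g ω‖₊ : ℝ≥0∞)) ^ 2 ∂μ) ^ ((1 : ℝ) / 2) := by
    intro g
    rw [eLpNorm_eq_lintegral_rpow_enorm_toReal two_ne_zero ENNReal.ofNat_ne_top]
    have hpt : ∀ ω : Ω, (‖g ω‖₊ : ℝ≥0∞) ^ ((2 : ℝ≥0∞).toReal) = (‖g ω‖₊ : ℝ≥0∞) ^ (2 : ℕ) := by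
      intro ω
      rw [show ((2 : ℝ≥0∞).toReal) = ((2 : ℕ) : ℝ) by simp, ENNReal.rpow_natCast]
    rw [show (∫⁻ x, ‖g x‖ₑ ^ ENNReal.toReal 2 ∂μ) = ∫⁻ ω, (‖g ω‖₊ : ℝ≥0∞) ^ (2:ℕ) ∂μ from lintegral_congr hpt]
    norm_num
  have hdiff_bound : ∀ k, ∫⁻ ω, ((‖M ω - fk k ω‖₊ : ℝ≥0∞)) ^ 2 ∂μ
      ≤ ENNReal.ofReal (V * (A - ∑ n ∈ Finset.range k, p n)) := by
    intro k
    have hptlim : ∀ ω, Tendsto (fun j => ((‖fk j ω - fk k ω‖₊ : ℝ≥0∞)) ^ 2) atTop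
        (𝓝 (((‖M ω - fk k ω‖₊ : ℝ≥0∞)) ^ 2)) := by
      intro ω
      apply tendsto_atTop_of_eventually_const (i₀ := N t ω)
      intro j hj
      rw [hfkM ω j hj]
    have hmeasj : ∀ j, Measurable fun ω => ((‖fk j ω - fk k ω‖₊ : ℝ≥0∞)) ^ 2 := fun j =>
      ((((hfk_meas j).sub (hfk_meas k)).nnnorm).coe_nnreal_ennreal).pow_const 2
    calc ∫⁻ ω, ((‖M ω - fk k ω‖₊ : ℝ≥0∞)) ^ 2 ∂μ
        = ∫⁻ ω, atTop.liminf (fun j => ((‖fk j ω - fk k ω‖₊ : ℝ≥0∞)) ^ 2) ∂μ :=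
          lintegral_congr fun ω => ((hptlim ω).liminf_eq).symm
      _ ≤ atTop.liminf fun j => ∫⁻ ω, ((‖fk j ω - fk k ω‖₊ : ℝ≥0∞)) ^ 2 ∂μ :=
          lintegral_liminf_le hmeasj
      _ ≤ ENNReal.ofReal (V * (A - ∑ n ∈ Finset.range k, p n)) := by
          apply liminf_le_of_frequently_le'
          apply Filter.Eventually.frequently
          filter_upwards [eventually_ge_atTop k] with j hj
          have hL2diff : MemLp (fun ω => fk j ω - fk k ω) 2 μ := by
            have h := (hfk_L2 j).sub (hfk_L2 k)
            apply h.ae_eq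
            filter_upwards with ω
            simp
          have hdiffsum : ∀ ω, fk j ω - fk k ω
              = ∑ n ∈ Finset.range j \ Finset.range k, rY T lam t n ω := by
            intro ω
            rw [Finset.sum_sdiff_eq_sub (Finset.range_subset_range.2 hj)]
          calc ∫⁻ ω, ((‖fk j ω - fk k ω‖₊ : ℝ≥0∞)) ^ 2 ∂μ
              = ENNReal.ofReal (∫ ω, (fk j ω - fk k ω) ^ 2 ∂μ) := sqInt _ hL2diff
            _ = ENNReal.ofReal (V * ((∑ n ∈ Finset.range j \ Finset.range k, p n))) := by
                rw [show ∫ ω, (fk j ω - fk k ω) ^ 2 ∂μ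
                    = ∫ ω, (∑ n ∈ Finset.range j \ Finset.range k, rY T lam t n ω) ^ 2 ∂μ from
                  integral_congr_ae (ae_of_all _ fun ω => congrArg (fun x : ℝ => x ^ 2) (hdiffsum ω)), hcore]
            _ ≤ ENNReal.ofReal (V * (A - ∑ n ∈ Finset.range k, p n)) := by
                apply ENNReal.ofReal_le_ofReal
                apply mul_le_mul_of_nonneg_left _ hV_nonneg
                rw [Finset.sum_sdiff_eq_sub (Finset.range_subset_range.2 hj)]
                exact sub_le_sub_right (hpartial_le j) _
  have hM_L2 : MemLp M 2 μ := by
    refine ⟨hM_meas.aestronglyMeasurable, ?_⟩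
    rw [eLp2]
    have h0 : ∫⁻ ω, ((‖M ω‖₊ : ℝ≥0∞)) ^ 2 ∂μ
        ≤ ENNReal.ofReal (V * (A - ∑ n ∈ Finset.range 0, p n)) := by
      have h := hdiff_bound 0
      have heq : ∀ ω, M ω - fk 0 ω = M ω := by
        intro ω; simp [hfk_def]
      calc ∫⁻ ω, ((‖M ω‖₊ : ℝ≥0∞)) ^ 2 ∂μ
          = ∫⁻ ω, ((‖M ω - fk 0 ω‖₊ : ℝ≥0∞)) ^ 2 ∂μ :=
            lintegral_congr fun ω => by rw [heq ω]
        _ ≤ _ := h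
    calc (∫⁻ ω, ((‖M ω‖₊ : ℝ≥0∞)) ^ 2 ∂μ) ^ ((1:ℝ)/2)
        ≤ (ENNReal.ofReal (V * (A - ∑ n ∈ Finset.range 0, p n))) ^ ((1:ℝ)/2) :=
          ENNReal.rpow_le_rpow h0 (by norm_num)
      _ < ⊤ := ENNReal.rpow_lt_top_of_nonneg (by norm_num) ENNReal.ofReal_ne_top
  have sqVal : ∀ g : Ω → ℝ, MemLp g 2 μ →
      ((eLpNorm g 2 μ).toReal) ^ 2 = ∫ ω, (g ω) ^ 2 ∂μ := by
    intro g hg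
    have hnn : 0 ≤ ∫ ω, (g ω) ^ 2 ∂μ := integral_nonneg fun ω => sq_nonneg _
    rw [eLp2 g, sqInt g hg, ← ENNReal.toReal_rpow, ENNReal.toReal_ofReal hnn,
      ← Real.rpow_natCast ((∫ ω, (g ω) ^ 2 ∂μ) ^ ((1:ℝ)/2)) 2, ← Real.rpow_mul hnn]
    norm_num
  -- triangle inequalities on toReal level
  have htri : ∀ a b c : ℝ≥0∞, b ≠ ⊤ → c ≠ ⊤ → a ≤ b + c →
      a.toReal ≤ b.toReal + c.toReal := by
    intro a b c hb hc h
    have hbc : b + c ≠ ⊤ := ENNReal.add_ne_top.2 ⟨hb, hc⟩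
    calc a.toReal ≤ (b + c).toReal := ENNReal.toReal_mono hbc h
      _ = b.toReal + c.toReal := ENNReal.toReal_add hb hc
  have hMsub_L2 : ∀ k, MemLp (fun ω => M ω - fk k ω) 2 μ := by
    intro k
    have h := hM_L2.sub (hfk_L2 k)
    apply h.ae_eq
    filter_upwards with ω
    simp
  have hdk_bound : ∀ k, (eLpNorm (fun ω => M ω - fk k ω) 2 μ).toReal
      ≤ Real.sqrt (V * (A - ∑ n ∈ Finset.range k, p n)) := by
    intro k
    have hX0 : 0 ≤ V * (A - ∑ n ∈ Finset.range k, p n) :=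
      mul_nonneg hV_nonneg (sub_nonneg.2 (hpartial_le k))
    have h1 : eLpNorm (fun ω => M ω - fk k ω) 2 μ
        ≤ (ENNReal.ofReal (V * (A - ∑ n ∈ Finset.range k, p n))) ^ ((1:ℝ)/2) := by
      rw [eLp2]
      exact ENNReal.rpow_le_rpow (hdiff_bound k) (by norm_num)
    have h2 := ENNReal.toReal_mono
      (ENNReal.rpow_ne_top_of_nonneg (by norm_num) ENNReal.ofReal_ne_top) h1
    rwa [← ENNReal.toReal_rpow, ENNReal.toReal_ofReal hX0, ← Real.sqrt_eq_rpow] at h2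
  have hdk0 : Tendsto (fun k => (eLpNorm (fun ω => M ω - fk k ω) 2 μ).toReal) atTop (𝓝 0) := by
    apply squeeze_zero (fun k => ENNReal.toReal_nonneg) hdk_bound
    have h0 : Tendsto (fun k => V * (A - ∑ n ∈ Finset.range k, p n)) atTop (𝓝 0) := by
      have := Filter.Tendsto.const_mul V ((tendsto_const_nhds (x := A)).sub hMCT1)
      simpa using this
    have := (Real.continuous_sqrt.tendsto 0).comp h0
    simpa [Function.comp_def] using this
  have htriangle : ∀ k, |(eLpNorm M 2 μ).toReal - (eLpNorm (fk k) 2 μ).toReal|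
      ≤ (eLpNorm (fun ω => M ω - fk k ω) 2 μ).toReal := by
    intro k
    rw [abs_sub_le_iff]
    constructor
    · have h1 : eLpNorm M 2 μ
          ≤ eLpNorm (fun ω => M ω - fk k ω) 2 μ + eLpNorm (fk k) 2 μ := by
        have h := eLpNorm_add_le (hMsub_L2 k).aestronglyMeasurable
          (hfk_L2 k).aestronglyMeasurable one_le_two
        have heq : (fun ω => M ω - fk k ω) + fk k = M := by
          funext ω; simp
        rwa [heq] at h
      have := htri _ _ _ (hMsub_L2 k).eLpNorm_ne_top (hfk_L2 k).eLpNorm_ne_top h1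
      linarith
    · have h1 : eLpNorm (fk k) 2 μ
          ≤ eLpNorm (fun ω => M ω - fk k ω) 2 μ + eLpNorm M 2 μ := by
        have h := eLpNorm_add_le ((hMsub_L2 k).neg).aestronglyMeasurable
          hM_L2.aestronglyMeasurable one_le_two
        have heq : (-fun ω => M ω - fk k ω) + M = fk k := by
          funext ω; simp
        rw [heq] at h
        calc eLpNorm (fk k) 2 μ ≤ eLpNorm (-fun ω => M ω - fk k ω) 2 μ + eLpNorm M 2 μ := h
          _ = eLpNorm (fun ω => M ω - fk k ω) 2 μ + eLpNorm M 2 μ := by rw [eLpNorm_neg]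
      have := htri _ _ _ (hMsub_L2 k).eLpNorm_ne_top hM_L2.eLpNorm_ne_top h1
      linarith
  have hak : Tendsto (fun k => (eLpNorm (fk k) 2 μ).toReal) atTop
      (𝓝 ((eLpNorm M 2 μ).toReal)) := by
    rw [tendsto_iff_dist_tendsto_zero]
    apply squeeze_zero (fun k => dist_nonneg) (fun k => ?_) hdk0
    rw [Real.dist_eq, abs_sub_comm]
    exact htriangle k
  have hsq : Tendsto (fun k => ((eLpNorm (fk k) 2 μ).toReal) ^ 2) atTop
      (𝓝 (((eLpNorm M 2 μ).toReal) ^ 2)) := hak.pow 2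
  have hval : ∀ k, ((eLpNorm (fk k) 2 μ).toReal) ^ 2 = V * ∑ n ∈ Finset.range k, p n := by
    intro k
    rw [sqVal _ (hfk_L2 k)]
    exact hcore (Finset.range k)
  have h2 : Tendsto (fun k => V * ∑ n ∈ Finset.range k, p n) atTop (𝓝 (V * A)) :=
    hMCT1.const_mul V
  have hMsq : ((eLpNorm M 2 μ).toReal) ^ 2 = V * A := by
    apply tendsto_nhds_unique _ h2
    simpa only [hval] using hsq
  rw [sqVal M hM_L2] at hMsq
  calc ∫ ω, (∑ i ∈ Finset.range (N t ω), (1 - lam * T i ω)) ^ 2 ∂μ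
      = ∫ ω, (M ω) ^ 2 ∂μ := rfl
    _ = V * A := hMsq
    _ = lam ^ 3 * σT2 * (t + ∫ ω, R t ω ∂μ) := by
        rw [hAeq, hV_def, hvar]; ring
end

section
/- Let N be a renewal process with i.i.d. positive inter-arrival times with finite mean 1/λ, and suppose R(t) converges in distribution as t → ∞. Then lim_{t→∞} E[N(t)]/t = λ. -/
open MeasureTheory ProbabilityTheory Filter Set
open scoped ENNReal

/-- Elementary renewal theorem under weak convergence of the residual time:
`E[N(t)]/t → λ` as `t → ∞`. -/
theorem renewal_elementary_renewal_theorem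
    {Ω : Type*} {mΩ : MeasurableSpace Ω} (μ : Measure Ω) [IsProbabilityMeasure μ]
    (T : ℕ → Ω → ℝ) (N : ℝ → Ω → ℕ) (R : ℝ → Ω → ℝ) (lam : ℝ)
    (ν : Measure ℝ) [IsProbabilityMeasure ν]
    (hmeas : ∀ n, Measurable (T n))
    (hRmeas : ∀ t, Measurable (R t))
    (hpos : ∀ n ω, 0 < T n ω)
    (hiid : iIndepFun T μ)
    (hident : ∀ n, IdentDistrib (T n) (T 0) μ μ)
    (hTint : Integrable (T 0) μ)
    (hlam : 0 < lam) (hmean : ∫ ω, T 0 ω ∂μ = 1 / lam)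
    (hN : ∀ t : ℝ, 0 ≤ t → ∀ ω n, n < N t ω ↔ ∑ i ∈ Finset.range n, T i ω ≤ t)
    (hR : ∀ t : ℝ, ∀ ω, R t ω = ∑ i ∈ Finset.range (N t ω), T i ω - t)
    (hNint : ∀ t : ℝ, 0 ≤ t → Integrable (fun ω => (N t ω : ℝ)) μ)
    (hconv : ∀ f : BoundedContinuousFunction ℝ ℝ,
      Tendsto (fun t => ∫ ω, f (R t ω) ∂μ) atTop (nhds (∫ x, f x ∂ν))) :
    Tendsto (fun t : ℝ => (∫ ω, (N t ω : ℝ) ∂μ) / t) atTop (nhds lam) := by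
  classical
  set S : ℕ → Ω → ℝ := fun n ω => ∑ i ∈ Finset.range n, T i ω with hSdef
  have hSval : ∀ n ω, S n ω = ∑ i ∈ Finset.range n, T i ω := fun n ω => rfl
  have hSmeas : ∀ n, Measurable (S n) := fun n => Finset.measurable_sum _ fun i _ => hmeas i
  have hAmeas : ∀ (n : ℕ) (t : ℝ), MeasurableSet {ω | S n ω ≤ t} := fun n t =>
    measurableSet_le (hSmeas n) measurable_const
  have hN' : ∀ t : ℝ, 0 ≤ t → ∀ ω n, n < N t ω ↔ S n ω ≤ t := hN
  -- independence of S n and T n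
  have hindSn : ∀ n, IndepFun (S n) (T n) μ := by
    intro n
    have h := hiid.indepFun_finsetSum_of_notMem hmeas (Finset.notMem_range_self (n := n))
    have he : S n = ∑ i ∈ Finset.range n, T i := by funext ω; simp [hSval]
    rw [he]; exact h
  -- key product identity
  have key : ∀ ψ : ℝ → ℝ≥0∞, Measurable ψ → ∀ (n : ℕ) (t : ℝ),
      ∫⁻ ω, {ω | S n ω ≤ t}.indicator (fun ω => ψ (T n ω)) ω ∂μ
        = μ {ω | S n ω ≤ t} * ∫⁻ ω, ψ (T 0 ω) ∂μ := by
    intro ψ hψ n t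
    set φ : ℝ → ℝ≥0∞ := fun x => (Set.Iic t).indicator (fun _ => (1:ℝ≥0∞)) x with hφdef
    have hφ : Measurable φ := measurable_const.indicator measurableSet_Iic
    have hi := lintegral_mul_eq_lintegral_mul_lintegral_of_indepFun
      (hφ.comp (hSmeas n)) (hψ.comp (hmeas n)) ((hindSn n).comp hφ hψ)
    have h1 : (fun ω => ((φ ∘ S n) * (ψ ∘ T n)) ω)
        = fun ω => {ω | S n ω ≤ t}.indicator (fun ω => ψ (T n ω)) ω := by
      funext ω
      by_cases h : S n ω ≤ t <;>
        simp [hφdef, Set.indicator_apply, h]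
    have h2 : ∫⁻ ω, (φ ∘ S n) ω ∂μ = μ {ω | S n ω ≤ t} := by
      have hpt : ∀ ω, (φ ∘ S n) ω = {ω | S n ω ≤ t}.indicator (fun _ => (1:ℝ≥0∞)) ω := by
        intro ω
        by_cases h : S n ω ≤ t <;> simp [hφdef, Set.indicator_apply, h]
      rw [lintegral_congr hpt]
      exact lintegral_indicator_one (hAmeas n t)
    have h3 : ∫⁻ ω, (ψ ∘ T n) ω ∂μ = ∫⁻ ω, ψ (T 0 ω) ∂μ :=
      ((hident n).comp hψ).lintegral_eq
    rw [← h1.symm] at hi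
    rw [hi, h2, h3]
  -- counting identity
  have hcount : ∀ t : ℝ, 0 ≤ t →
      (∫⁻ ω, (N t ω : ℝ≥0∞) ∂μ) = ∑' n, μ {ω | S n ω ≤ t} := by
    intro t ht
    have hpt : ∀ ω, ((N t ω : ℝ≥0∞))
        = ∑' n, {ω | S n ω ≤ t}.indicator (fun _ => (1:ℝ≥0∞)) ω := by
      intro ω
      have h1 : ∀ n : ℕ, {ω | S n ω ≤ t}.indicator (fun _ => (1:ℝ≥0∞)) ω
          = if n < N t ω then 1 else 0 := by
        intro n
        simp only [Set.indicator_apply, Set.mem_setOf_eq, ← hN' t ht ω n]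
      rw [tsum_congr h1, tsum_eq_sum (s := Finset.range (N t ω))
        (by intro n hn; simp only [Finset.mem_range, not_lt] at hn; simp [Nat.not_lt.mpr hn]),
        Finset.sum_congr rfl fun n hn => if_pos (Finset.mem_range.1 hn)]
      simp
    rw [lintegral_congr hpt, lintegral_tsum
      (fun n => (measurable_const.indicator (hAmeas n t)).aemeasurable)]
    exact tsum_congr fun n => lintegral_indicator_one (hAmeas n t)
  -- Wald's identity
  set I : ℝ≥0∞ := ∫⁻ ω, ENNReal.ofReal (T 0 ω) ∂μ with hIdef
  have hwald : ∀ t : ℝ, 0 ≤ t → ∫⁻ ω, ENNReal.ofReal (S (N t ω) ω) ∂μ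
      = I * ∫⁻ ω, (N t ω : ℝ≥0∞) ∂μ := by
    intro t ht
    have hpt : ∀ ω, ENNReal.ofReal (S (N t ω) ω)
        = ∑' n, {ω | S n ω ≤ t}.indicator (fun ω => ENNReal.ofReal (T n ω)) ω := by
      intro ω
      have h1 : ENNReal.ofReal (S (N t ω) ω)
          = ∑ i ∈ Finset.range (N t ω), ENNReal.ofReal (T i ω) := by
        rw [hSval]
        exact ENNReal.ofReal_sum_of_nonneg fun i _ => (hpos i ω).le
      have h2 : ∀ n : ℕ, {ω | S n ω ≤ t}.indicator (fun ω => ENNReal.ofReal (T n ω)) ω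
          = if n < N t ω then ENNReal.ofReal (T n ω) else 0 := by
        intro n
        simp only [Set.indicator_apply, Set.mem_setOf_eq, ← hN' t ht ω n]
      rw [h1, eq_comm, tsum_congr h2, tsum_eq_sum (s := Finset.range (N t ω))
        (by intro n hn; simp only [Finset.mem_range, not_lt] at hn; simp [Nat.not_lt.mpr hn])]
      exact Finset.sum_congr rfl fun n hn => if_pos (Finset.mem_range.1 hn)
    rw [lintegral_congr hpt, lintegral_tsum
      (f := fun n => {ω | S n ω ≤ t}.indicator fun ω => ENNReal.ofReal (T n ω))
      (fun n => (Measurable.indicator (by exact ENNReal.measurable_ofReal.comp (hmeas n))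
        (hAmeas n t)).aemeasurable),
      tsum_congr (fun n => key _ ENNReal.measurable_ofReal n t),
      ENNReal.tsum_mul_right, ← hcount t ht, mul_comm]
  -- residual identity
  have hstop : ∀ t : ℝ, 0 ≤ t → ∀ ω, S (N t ω) ω = t + R t ω ∧ 0 ≤ R t ω := by
    intro t ht ω
    have hgt : t < S (N t ω) ω := by
      by_contra h
      push_neg at h
      exact lt_irrefl _ ((hN' t ht ω (N t ω)).2 h)
    have hRv : R t ω = S (N t ω) ω - t := hR t ω
    constructor
    · rw [hRv]; ring
    · rw [hRv]; linarith
  have hwald2 : ∀ t : ℝ, 0 ≤ t → I * (∫⁻ ω, (N t ω : ℝ≥0∞) ∂μ)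
      = ENNReal.ofReal t + ∫⁻ ω, ENNReal.ofReal (R t ω) ∂μ := by
    intro t ht
    rw [← hwald t ht]
    have hpt : ∀ ω, ENNReal.ofReal (S (N t ω) ω)
        = ENNReal.ofReal t + ENNReal.ofReal (R t ω) := by
      intro ω
      obtain ⟨h1, h2⟩ := hstop t ht ω
      rw [h1, ENNReal.ofReal_add ht h2]
    rw [lintegral_congr hpt, lintegral_add_left measurable_const, lintegral_const]
    simp
  -- truncated tail quantity
  set e : ℕ → ℝ≥0∞ := fun M =>
    ∫⁻ ω, (Set.Ioi (M:ℝ)).indicator ENNReal.ofReal (T 0 ω) ∂μ with hedef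
  have hψmeas : ∀ M : ℕ, Measurable fun x : ℝ => (Set.Ioi (M:ℝ)).indicator ENNReal.ofReal x :=
    fun M => ENNReal.measurable_ofReal.indicator measurableSet_Ioi
  -- tail bound
  have htail : ∀ (M : ℕ) (t : ℝ), 0 ≤ t →
      (∫⁻ ω, ENNReal.ofReal (R t ω) ∂μ)
        ≤ ENNReal.ofReal M + e M * ∫⁻ ω, (N t ω : ℝ≥0∞) ∂μ := by
    intro M t ht
    have hpt : ∀ ω, ENNReal.ofReal (R t ω) ≤ ENNReal.ofReal M
        + ∑' n, {ω | S n ω ≤ t}.indicator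
            (fun ω => (Set.Ioi (M:ℝ)).indicator ENNReal.ofReal (T n ω)) ω := by
      intro ω
      have hk : 0 < N t ω := by
        refine (hN' t ht ω 0).2 ?_
        simpa [hSval] using ht
      set j := N t ω - 1 with hj
      have hjk : j < N t ω := Nat.sub_lt hk one_pos
      have hSj : S j ω ≤ t := (hN' t ht ω j).1 hjk
      have hsucc : j + 1 = N t ω := Nat.succ_pred_eq_of_pos hk
      have hRT : R t ω ≤ T j ω := by
        have hs : S (j+1) ω = S j ω + T j ω := by
          simp [hSval, Finset.sum_range_succ]
        have h1 : R t ω = S (N t ω) ω - t := hR t ω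
        rw [← hsucc] at h1
        rw [h1, hs]; linarith
      by_cases hc : T j ω ≤ (M:ℝ)
      · exact le_trans (ENNReal.ofReal_le_ofReal (hRT.trans hc)) le_self_add
      · push_neg at hc
        have hterm : ENNReal.ofReal (R t ω)
            ≤ {ω | S j ω ≤ t}.indicator
                (fun ω => (Set.Ioi (M:ℝ)).indicator ENNReal.ofReal (T j ω)) ω := by
          rw [Set.indicator_of_mem (show ω ∈ {ω | S j ω ≤ t} from hSj),
            Set.indicator_of_mem (show T j ω ∈ Set.Ioi (M:ℝ) from hc)]
          exact ENNReal.ofReal_le_ofReal hRT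
        exact le_trans hterm (le_trans (ENNReal.le_tsum j) le_add_self)
    calc ∫⁻ ω, ENNReal.ofReal (R t ω) ∂μ
        ≤ ∫⁻ ω, (ENNReal.ofReal M + ∑' n, {ω | S n ω ≤ t}.indicator
            (fun ω => (Set.Ioi (M:ℝ)).indicator ENNReal.ofReal (T n ω)) ω) ∂μ :=
          lintegral_mono hpt
      _ = ENNReal.ofReal M + ∑' n, ∫⁻ ω, {ω | S n ω ≤ t}.indicator
            (fun ω => (Set.Ioi (M:ℝ)).indicator ENNReal.ofReal (T n ω)) ω ∂μ := by
          rw [lintegral_add_left measurable_const, lintegral_const, lintegral_tsum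
            (f := fun n => {ω | S n ω ≤ t}.indicator
              fun ω => (Set.Ioi (M:ℝ)).indicator ENNReal.ofReal (T n ω))
            (fun n => (Measurable.indicator (by exact (hψmeas M).comp (hmeas n))
              (hAmeas n t)).aemeasurable)]
          simp
      _ = ENNReal.ofReal M + e M * ∫⁻ ω, (N t ω : ℝ≥0∞) ∂μ := by
          rw [tsum_congr (fun n => key _ (hψmeas M) n t),
            ENNReal.tsum_mul_right, ← hcount t ht, mul_comm]
  -- finiteness of I
  have hIfin : I < ⊤ := by
    have h : I = ∫⁻ ω, ‖T 0 ω‖ₑ ∂μ := lintegral_congr fun ω => by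
      rw [Real.enorm_eq_ofReal (hpos 0 ω).le]
    rw [h]
    exact hTint.2
  have heI : ∀ M : ℕ, e M ≤ I := by
    intro M
    refine lintegral_mono fun ω => ?_
    exact Set.indicator_le_self _ _ _
  have hefin : ∀ M : ℕ, e M < ⊤ := fun M => lt_of_le_of_lt (heI M) hIfin
  -- e M → 0
  have hlim : Tendsto e atTop (nhds 0) := by
    have h0 : (0:ℝ≥0∞) = ∫⁻ _ : Ω, 0 ∂μ := by simp
    rw [hedef, h0]
    refine tendsto_lintegral_of_dominated_convergence
      (bound := fun ω => ENNReal.ofReal (T 0 ω))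
      (fun M => (hψmeas M).comp (hmeas 0)) (fun M => ae_of_all μ fun ω => ?_) hIfin.ne
      (ae_of_all μ fun ω => ?_)
    · exact Set.indicator_le_self _ _ _
    · have hev : ∀ᶠ M : ℕ in atTop,
          (Set.Ioi (M:ℝ)).indicator ENNReal.ofReal (T 0 ω) = 0 := by
        filter_upwards [eventually_ge_atTop ⌈T 0 ω⌉₊] with M hM
        have hle : T 0 ω ≤ (M:ℝ) := (Nat.le_ceil _).trans (Nat.cast_le.2 hM)
        exact Set.indicator_of_notMem (by simpa using hle.not_gt) _
      exact Tendsto.congr' (hev.mono fun M h => h.symm) tendsto_const_nhds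
  -- mean of T 0
  have hI : I = ENNReal.ofReal (1/lam) := by
    rw [hIdef, ← ofReal_integral_eq_lintegral_ofReal hTint
      (ae_of_all μ fun ω => (hpos 0 ω).le), hmean]
  -- finiteness of m t
  have hmfin : ∀ t : ℝ, 0 ≤ t → (∫⁻ ω, (N t ω : ℝ≥0∞) ∂μ) < ⊤ := by
    intro t ht
    refine lt_of_le_of_lt (lintegral_mono fun ω => ?_) (hNint t ht).2
    rw [← ENNReal.ofReal_natCast]
    exact Real.ofReal_le_enorm _
  -- integral conversion
  have hint_eq : ∀ t : ℝ, 0 ≤ t →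
      ∫ ω, (N t ω : ℝ) ∂μ = (∫⁻ ω, (N t ω : ℝ≥0∞) ∂μ).toReal := by
    intro t ht
    rw [integral_eq_lintegral_of_nonneg_ae (ae_of_all μ fun ω => Nat.cast_nonneg _)
      (hNint t ht).aestronglyMeasurable]
    congr 1
    exact lintegral_congr fun ω => by rw [ENNReal.ofReal_natCast]
  -- real-side bounds
  have hlow : ∀ t : ℝ, 0 ≤ t → lam * t ≤ (∫⁻ ω, (N t ω : ℝ≥0∞) ∂μ).toReal := by
    intro t ht
    have h1 : ENNReal.ofReal t ≤ I * ∫⁻ ω, (N t ω : ℝ≥0∞) ∂μ := by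
      rw [hwald2 t ht]; exact le_self_add
    have hfin : I * ∫⁻ ω, (N t ω : ℝ≥0∞) ∂μ ≠ ⊤ :=
      (ENNReal.mul_lt_top hIfin (hmfin t ht)).ne
    have h2 := ENNReal.toReal_le_toReal (by simp) hfin |>.2 h1
    rw [ENNReal.toReal_ofReal ht, ENNReal.toReal_mul, hI,
      ENNReal.toReal_ofReal (by positivity)] at h2
    have h5 : lam * (1/lam * (∫⁻ ω, (N t ω : ℝ≥0∞) ∂μ).toReal)
        = (∫⁻ ω, (N t ω : ℝ≥0∞) ∂μ).toReal := by
      field_simp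
    have h6 := mul_le_mul_of_nonneg_left h2 hlam.le
    linarith
  have hup : ∀ (M : ℕ) (t : ℝ), 0 ≤ t →
      (1/lam) * (∫⁻ ω, (N t ω : ℝ≥0∞) ∂μ).toReal
        ≤ t + M + (e M).toReal * (∫⁻ ω, (N t ω : ℝ≥0∞) ∂μ).toReal := by
    intro M t ht
    have h1 : I * (∫⁻ ω, (N t ω : ℝ≥0∞) ∂μ)
        ≤ ENNReal.ofReal t + (ENNReal.ofReal M + e M * ∫⁻ ω, (N t ω : ℝ≥0∞) ∂μ) := by
      rw [hwald2 t ht]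
      exact add_le_add_right (htail M t ht) _
    have hfin2 : ENNReal.ofReal t + (ENNReal.ofReal M + e M * ∫⁻ ω, (N t ω : ℝ≥0∞) ∂μ) ≠ ⊤ := by
      refine (ENNReal.add_lt_top.2 ⟨ENNReal.ofReal_lt_top, ENNReal.add_lt_top.2
        ⟨ENNReal.ofReal_lt_top, ENNReal.mul_lt_top (hefin M) (hmfin t ht)⟩⟩).ne
    have h2 := ENNReal.toReal_le_toReal
      (ENNReal.mul_lt_top hIfin (hmfin t ht)).ne hfin2 |>.2 h1
    rw [ENNReal.toReal_mul, hI, ENNReal.toReal_ofReal (by positivity),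
      ENNReal.toReal_add ENNReal.ofReal_ne_top (ENNReal.add_lt_top.2
        ⟨ENNReal.ofReal_lt_top, ENNReal.mul_lt_top (hefin M) (hmfin t ht)⟩).ne,
      ENNReal.toReal_add ENNReal.ofReal_ne_top
        (ENNReal.mul_lt_top (hefin M) (hmfin t ht)).ne,
      ENNReal.toReal_mul, ENNReal.toReal_ofReal ht,
      ENNReal.toReal_ofReal (Nat.cast_nonneg M)] at h2
    linarith
  -- conclusion
  rw [tendsto_order]
  constructor
  · intro a ha
    filter_upwards [eventually_gt_atTop (0:ℝ)] with t ht
    rw [hint_eq t ht.le]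
    have h1 := hlow t ht.le
    rw [lt_div_iff₀ ht]
    nlinarith
  · intro b hb
    set b' := (lam + b)/2 with hb'def
    have hb'1 : lam < b' := by rw [hb'def]; linarith
    have hb'2 : b' < b := by rw [hb'def]; linarith
    have hb'pos : 0 < b' := lt_trans hlam hb'1
    have hc : 0 < 1/lam - 1/b' := by
      have h := one_div_lt_one_div_of_lt hlam hb'1
      linarith
    obtain ⟨M, hM⟩ : ∃ M : ℕ, (e M).toReal < 1/lam - 1/b' := by
      have hev : ∀ᶠ M : ℕ in atTop, e M < ENNReal.ofReal (1/lam - 1/b') :=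
        hlim.eventually_lt_const (ENNReal.ofReal_pos.2 hc)
      obtain ⟨M, hM⟩ := hev.exists
      exact ⟨M, by
        rw [ENNReal.lt_ofReal_iff_toReal_lt (hefin M).ne] at hM
        exact hM⟩
    filter_upwards [eventually_gt_atTop (max 0 (b' * M / (b - b')))] with t ht
    have ht0 : 0 < t := lt_of_le_of_lt (le_max_left _ _) ht
    have htM : b' * M / (b - b') < t := lt_of_le_of_lt (le_max_right _ _) ht
    set nt := (∫⁻ ω, (N t ω : ℝ≥0∞) ∂μ).toReal with hntdef
    have hnt0 : 0 ≤ nt := ENNReal.toReal_nonneg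
    have h2 := hup M t ht0.le
    -- (1/b') * nt ≤ t + M
    have h3 : (1/b') * nt ≤ t + M := by nlinarith
    have h4 : nt ≤ b' * (t + M) := by
      have := mul_le_mul_of_nonneg_left h3 hb'pos.le
      rw [← mul_assoc, mul_one_div, div_self hb'pos.ne'] at this
      linarith
    have h5 : b' * M < (b - b') * t := by
      have := (div_lt_iff₀ (by linarith : (0:ℝ) < b - b')).1 htM
      linarith
    rw [hint_eq t ht0.le, ← hntdef, div_lt_iff₀ ht0]
    nlinarith
end

section
/- Let N be a renewal process with i.i.d. inter-arrival times T with E[T²] < ∞. Suppose E[R²(t)] = o(t) and E[M²(t)] = λ³σ_T²(t + E[R(t)]) with E[R(t)] bounded. Then var N(t) = λ³σ_T² t + o(t) as t → ∞. -/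
open MeasureTheory ProbabilityTheory Filter Set Asymptotics
open scoped ENNReal

/-- If `E[R²(t)] = o(t)`, `E[M²(t)] = λ³σ_T²(t + E[R(t)])` and `E[R(t)]` is bounded,
then `var N(t) = λ³ σ_T² t + o(t)` as `t → ∞`. -/
theorem renewal_variance_asymptotics
    {Ω : Type*} {mΩ : MeasurableSpace Ω} (μ : Measure Ω) [IsProbabilityMeasure μ]
    (T : ℕ → Ω → ℝ) (N : ℝ → Ω → ℕ) (R : ℝ → Ω → ℝ) (lam σT2 : ℝ)
    (hmeas : ∀ n, Measurable (T n))
    (hpos : ∀ n ω, 0 < T n ω)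
    (hiid : iIndepFun T μ)
    (hident : ∀ n, IdentDistrib (T n) (T 0) μ μ)
    (hT2 : MemLp (T 0) 2 μ)
    (hlam : 0 < lam) (hmean : ∫ ω, T 0 ω ∂μ = 1 / lam)
    (hvar : σT2 = variance (T 0) μ)
    (hN : ∀ t : ℝ, 0 ≤ t → ∀ ω n, n < N t ω ↔ ∑ i ∈ Finset.range n, T i ω ≤ t)
    (hR : ∀ t : ℝ, ∀ ω, R t ω = ∑ i ∈ Finset.range (N t ω), T i ω - t)
    (hN2 : ∀ t : ℝ, 0 ≤ t → MemLp (fun ω => (N t ω : ℝ)) 2 μ)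
    (hR2 : ∀ t : ℝ, 0 ≤ t → MemLp (R t) 2 μ)
    (hR2o : (fun t : ℝ => ∫ ω, (R t ω)^2 ∂μ) =o[atTop] (fun t : ℝ => t))
    (hM2 : ∀ t : ℝ, 0 ≤ t →
      ∫ ω, (∑ i ∈ Finset.range (N t ω), (1 - lam * T i ω))^2 ∂μ
        = lam^3 * σT2 * (t + ∫ ω, R t ω ∂μ))
    (hRbdd : ∃ C : ℝ, ∀ t : ℝ, 0 ≤ t → ∫ ω, R t ω ∂μ ≤ C) :
    (fun t : ℝ => variance (fun ω => (N t ω : ℝ)) μ - lam^3 * σT2 * t)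
      =o[atTop] (fun t : ℝ => t) := by
  obtain ⟨C, hC⟩ := hRbdd
  have hσ : 0 ≤ σT2 := hvar ▸ variance_nonneg _ _
  set c : ℝ := lam ^ 3 * σT2 with hc
  have hc0 : 0 ≤ c := by positivity
  -- nonnegativity of R
  have hRnn : ∀ t : ℝ, 0 ≤ t → ∀ ω, 0 ≤ R t ω := by
    intro t ht ω
    have h1 : ¬ (∑ i ∈ Finset.range (N t ω), T i ω ≤ t) := by
      rw [← hN t ht ω (N t ω)]; exact lt_irrefl _
    rw [hR t ω]; linarith [not_le.mp h1]
  have hr1nn : ∀ t : ℝ, 0 ≤ t → 0 ≤ ∫ ω, R t ω ∂μ := fun t ht =>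
    integral_nonneg (hRnn t ht)
  have hr2nn : ∀ t : ℝ, 0 ≤ ∫ ω, (R t ω) ^ 2 ∂μ := fun t =>
    integral_nonneg fun ω => sq_nonneg _
  -- Wald's identity : E[N(t)] = lam * (t + E[R(t)])
  have wald : ∀ t : ℝ, 0 ≤ t →
      ∫ ω, (N t ω : ℝ) ∂μ = lam * (t + ∫ ω, R t ω ∂μ) := by
    intro t ht
    have hSmeas : ∀ n : ℕ, Measurable (fun ω => ∑ i ∈ Finset.range n, T i ω) :=
      fun n => Finset.measurable_sum _ fun i _ => hmeas i
    set A : ℕ → Set Ω := fun i => {ω | ∑ j ∈ Finset.range i, T j ω ≤ t} with hA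
    have hAmeas : ∀ i, MeasurableSet (A i) :=
      fun i => measurableSet_le (hSmeas i) measurable_const
    have key : ∀ i ω, ω ∈ A i ↔ i < N t ω := fun i ω => (hN t ht ω i).symm
    -- N as a tsum of indicators
    have hNsum : ∀ ω, (N t ω : ℝ≥0∞) = ∑' i, (A i).indicator (fun _ => (1:ℝ≥0∞)) ω := by
      intro ω
      rw [tsum_eq_sum (s := Finset.range (N t ω))
        (fun i hi => Set.indicator_of_notMem
          (fun hmem => hi (Finset.mem_range.mpr ((key i ω).mp hmem))) _)]
      rw [Finset.sum_congr rfl fun i hi =>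
        Set.indicator_of_mem ((key i ω).mpr (Finset.mem_range.mp hi)) _]
      simp
    -- t + R(t) as a tsum of indicators
    have hSsum : ∀ ω, ENNReal.ofReal (t + R t ω)
        = ∑' i, (A i).indicator (fun ω' => ENNReal.ofReal (T i ω')) ω := by
      intro ω
      have h0 : t + R t ω = ∑ i ∈ Finset.range (N t ω), T i ω := by rw [hR t ω]; ring
      rw [h0, ENNReal.ofReal_sum_of_nonneg fun i _ => (hpos i ω).le]
      rw [tsum_eq_sum (s := Finset.range (N t ω))
        (fun i hi => Set.indicator_of_notMem
          (fun hmem => hi (Finset.mem_range.mpr ((key i ω).mp hmem))) _)]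
      exact Finset.sum_congr rfl fun i hi =>
        (Set.indicator_of_mem ((key i ω).mpr (Finset.mem_range.mp hi))
          (fun ω' => ENNReal.ofReal (T i ω'))).symm
    have hTlint : ∀ i : ℕ, ∫⁻ ω, ENNReal.ofReal (T i ω) ∂μ = ENNReal.ofReal (1/lam) := by
      intro i
      have h1 : ∫⁻ ω, ENNReal.ofReal (T i ω) ∂μ = ∫⁻ ω, ENNReal.ofReal (T 0 ω) ∂μ :=
        ((hident i).comp ENNReal.measurable_ofReal).lintegral_eq
      rw [h1, ← ofReal_integral_eq_lintegral_ofReal (hT2.integrable one_le_two)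
        (ae_of_all _ fun ω => (hpos 0 ω).le), hmean]
    have hterm : ∀ i : ℕ, ∫⁻ ω, (A i).indicator (fun ω' => ENNReal.ofReal (T i ω')) ω ∂μ
        = ENNReal.ofReal (1/lam) * μ (A i) := by
      intro i
      have hsum_eq : (∑ j ∈ Finset.range i, T j) = fun ω => ∑ j ∈ Finset.range i, T j ω := by
        funext ω; simp
      have hi1 : IndepFun (fun ω => ∑ j ∈ Finset.range i, T j ω) (T i) μ := by
        have h := hiid.indepFun_sum_range_succ hmeas i
        rwa [hsum_eq] at h
      have hi2 : IndepFun (fun ω => ENNReal.ofReal (T i ω))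
          (fun ω => (A i).indicator (fun _ => (1:ℝ≥0∞)) ω) μ := by
        have hφ : Measurable fun x : ℝ => (Set.Iic t).indicator (fun _ => (1:ℝ≥0∞)) x :=
          measurable_const.indicator measurableSet_Iic
        have h := (hi1.symm).comp ENNReal.measurable_ofReal hφ
        have he : ((fun x : ℝ => (Set.Iic t).indicator (fun _ => (1:ℝ≥0∞)) x)
              ∘ (fun ω => ∑ j ∈ Finset.range i, T j ω))
            = fun ω => (A i).indicator (fun _ => (1:ℝ≥0∞)) ω := by
          funext ω
          by_cases hω : ω ∈ A i
          · simp only [Function.comp_apply]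
            rw [Set.indicator_of_mem hω, Set.indicator_of_mem (by exact hω)]
          · simp only [Function.comp_apply]
            rw [Set.indicator_of_notMem hω, Set.indicator_of_notMem (by exact hω)]
        rwa [he] at h
      have hprod : ∀ ω, (A i).indicator (fun ω' => ENNReal.ofReal (T i ω')) ω
          = ENNReal.ofReal (T i ω) * (A i).indicator (fun _ => (1:ℝ≥0∞)) ω := by
        intro ω
        by_cases hω : ω ∈ A i
        · rw [Set.indicator_of_mem hω, Set.indicator_of_mem hω, mul_one]
        · rw [Set.indicator_of_notMem hω, Set.indicator_of_notMem hω, mul_zero]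
      rw [lintegral_congr hprod,
        lintegral_mul_eq_lintegral_mul_lintegral_of_indepFun''
          ((hmeas i).ennreal_ofReal).aemeasurable
          (((measurable_const.indicator (hAmeas i)) :
            Measurable fun ω => (A i).indicator (fun _ => (1:ℝ≥0∞)) ω).aemeasurable :
            AEMeasurable (fun ω => (A i).indicator (fun _ => (1:ℝ≥0∞)) ω) μ) hi2,
        hTlint i, lintegral_indicator_const (hAmeas i), one_mul]
    have hLHS : ∫⁻ ω, ENNReal.ofReal (t + R t ω) ∂μ
        = ENNReal.ofReal (1/lam) * ∫⁻ ω, (N t ω : ℝ≥0∞) ∂μ := by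
      rw [lintegral_congr hSsum,
        lintegral_tsum (fun i =>
          ((hmeas i).ennreal_ofReal.indicator (hAmeas i)).aemeasurable),
        lintegral_congr hNsum,
        lintegral_tsum (fun i =>
          (((measurable_const.indicator (hAmeas i)) :
            Measurable fun ω => (A i).indicator (fun _ => (1:ℝ≥0∞)) ω).aemeasurable :
            AEMeasurable (fun ω => (A i).indicator (fun _ => (1:ℝ≥0∞)) ω) μ))]
      simp_rw [hterm]
      rw [ENNReal.tsum_mul_left]
      congr 1
      exact tsum_congr fun i => by rw [lintegral_indicator_const (hAmeas i), one_mul]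
    have hRInt : Integrable (R t) μ := (hR2 t ht).integrable one_le_two
    have hNInt : Integrable (fun ω => (N t ω : ℝ)) μ := (hN2 t ht).integrable one_le_two
    have htR : Integrable (fun ω => t + R t ω) μ := (integrable_const t).add hRInt
    have hLa : ∫⁻ ω, ENNReal.ofReal (t + R t ω) ∂μ
        = ENNReal.ofReal (t + ∫ ω, R t ω ∂μ) := by
      rw [← ofReal_integral_eq_lintegral_ofReal htR
        (ae_of_all _ fun ω => add_nonneg ht (hRnn t ht ω))]
      congr 1
      rw [integral_add (integrable_const t) hRInt, integral_const]
      simp [measure_univ]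
    have hLb : ∫⁻ ω, (N t ω : ℝ≥0∞) ∂μ = ENNReal.ofReal (∫ ω, (N t ω : ℝ) ∂μ) := by
      calc ∫⁻ ω, (N t ω : ℝ≥0∞) ∂μ
          = ∫⁻ ω, ENNReal.ofReal ((N t ω : ℝ)) ∂μ :=
            lintegral_congr fun ω => (ENNReal.ofReal_natCast _).symm
        _ = ENNReal.ofReal (∫ ω, (N t ω : ℝ) ∂μ) :=
            (ofReal_integral_eq_lintegral_ofReal hNInt
              (ae_of_all _ fun ω => Nat.cast_nonneg _)).symm
    have hfin : ENNReal.ofReal (t + ∫ ω, R t ω ∂μ)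
        = ENNReal.ofReal ((1/lam) * ∫ ω, (N t ω : ℝ) ∂μ) := by
      rw [← hLa, hLHS, hLb, ← ENNReal.ofReal_mul (by positivity)]
    have h2 := (ENNReal.ofReal_eq_ofReal_iff
      (add_nonneg ht (integral_nonneg (hRnn t ht)))
      (mul_nonneg (by positivity) (integral_nonneg fun ω => Nat.cast_nonneg _))).mp hfin
    have hlam' : lam ≠ 0 := ne_of_gt hlam
    field_simp at h2
    linarith
  -- the martingale term
  set Mf : ℝ → Ω → ℝ := fun t ω => ∑ i ∈ Finset.range (N t ω), (1 - lam * T i ω) with hMf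
  have hMeq : ∀ t : ℝ, ∀ ω, Mf t ω = (N t ω : ℝ) - lam * t - lam * R t ω := by
    intro t ω
    have hs : ∑ i ∈ Finset.range (N t ω), T i ω = R t ω + t := by rw [hR t ω]; ring
    simp only [hMf, Finset.sum_sub_distrib, Finset.sum_const, Finset.card_range,
      nsmul_eq_mul, mul_one, ← Finset.mul_sum, hs]
    ring
  have hM2p : ∀ t : ℝ, 0 ≤ t → MemLp (Mf t) 2 μ := by
    intro t ht
    have he : Mf t = fun ω => ((N t ω : ℝ) - lam * t) - lam * R t ω := by
      funext ω; rw [hMeq]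
    rw [he]
    exact ((hN2 t ht).sub (memLp_const _)).sub ((hR2 t ht).const_mul lam)
  have hEM : ∀ t : ℝ, 0 ≤ t → ∫ ω, Mf t ω ∂μ = 0 := by
    intro t ht
    have hRInt : Integrable (R t) μ := (hR2 t ht).integrable one_le_two
    have hNInt : Integrable (fun ω => (N t ω : ℝ)) μ := (hN2 t ht).integrable one_le_two
    have he : ∀ ω, Mf t ω = ((N t ω : ℝ) - lam * t) - lam * R t ω := by
      intro ω; rw [hMeq]
    have hint1 : Integrable (fun ω => (N t ω : ℝ) - lam * t) μ :=
      hNInt.sub (integrable_const _)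
    have hint2 : Integrable (fun ω => lam * R t ω) μ := hRInt.const_mul lam
    rw [integral_congr_ae (ae_of_all _ he), integral_sub hint1 hint2,
      integral_sub hNInt (integrable_const _), integral_const, integral_const_mul,
      wald t ht]
    simp only [measure_univ, ENNReal.toReal_one, smul_eq_mul, one_mul, probReal_univ]
    ring
  -- integrability of the cross product
  have hRMInt : ∀ t : ℝ, 0 ≤ t → Integrable (fun ω => R t ω * Mf t ω) μ := by
    intro t ht
    have h := (hM2p t ht).smul (hR2 t ht) (r := 1)
      (hpqr := ⟨by rw [inv_one, ENNReal.inv_two_add_inv_two]⟩)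
    exact memLp_one_iff_integrable.mp h
  -- Cauchy–Schwarz for the cross term
  have hCS : ∀ t : ℝ, 0 ≤ t →
      (∫ ω, R t ω * Mf t ω ∂μ) ^ 2
        ≤ (∫ ω, (R t ω) ^ 2 ∂μ) * (c * (t + ∫ ω, R t ω ∂μ)) := by
    intro t ht
    have hM2' : ∫ ω, (Mf t ω) ^ 2 ∂μ = c * (t + ∫ ω, R t ω ∂μ) := hM2 t ht
    have habs2 : ∀ x : ℝ, |x| ^ (2:ℝ) = x ^ 2 := fun x => by
      rw [show (2:ℝ) = ((2:ℕ):ℝ) by norm_num, Real.rpow_natCast, sq_abs]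
    have hconj : Real.HolderConjugate 2 2 := Real.HolderConjugate.two_two
    have hfR : MemLp (fun ω => |R t ω|) (ENNReal.ofReal 2) μ := by
      rw [show ENNReal.ofReal (2:ℝ) = 2 by norm_num]
      exact (hR2 t ht).norm
    have hfM : MemLp (fun ω => |Mf t ω|) (ENNReal.ofReal 2) μ := by
      rw [show ENNReal.ofReal (2:ℝ) = 2 by norm_num]
      exact (hM2p t ht).norm
    have hH := integral_mul_le_Lp_mul_Lq_of_nonneg hconj
      (ae_of_all _ fun ω => abs_nonneg (R t ω))
      (ae_of_all _ fun ω => abs_nonneg (Mf t ω)) hfR hfM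
    have he1 : ∫ ω, |R t ω| ^ (2:ℝ) ∂μ = ∫ ω, (R t ω) ^ 2 ∂μ :=
      integral_congr_ae (ae_of_all _ fun ω => habs2 _)
    have he2 : ∫ ω, |Mf t ω| ^ (2:ℝ) ∂μ = ∫ ω, (Mf t ω) ^ 2 ∂μ :=
      integral_congr_ae (ae_of_all _ fun ω => habs2 _)
    rw [he1, he2] at hH
    have hm2nn : 0 ≤ ∫ ω, (Mf t ω) ^ 2 ∂μ := integral_nonneg fun ω => sq_nonneg _
    have hle : |∫ ω, R t ω * Mf t ω ∂μ|
        ≤ Real.sqrt (∫ ω, (R t ω) ^ 2 ∂μ) * Real.sqrt (∫ ω, (Mf t ω) ^ 2 ∂μ) := by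
      calc |∫ ω, R t ω * Mf t ω ∂μ| ≤ ∫ ω, |R t ω| * |Mf t ω| ∂μ := by
            simpa [Real.norm_eq_abs, abs_mul] using
              norm_integral_le_integral_norm (μ := μ) (fun ω => R t ω * Mf t ω)
        _ ≤ (∫ ω, (R t ω) ^ 2 ∂μ) ^ (1/(2:ℝ)) * (∫ ω, (Mf t ω) ^ 2 ∂μ) ^ (1/(2:ℝ)) := hH
        _ = Real.sqrt (∫ ω, (R t ω) ^ 2 ∂μ) * Real.sqrt (∫ ω, (Mf t ω) ^ 2 ∂μ) := by
            rw [Real.sqrt_eq_rpow, Real.sqrt_eq_rpow]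
    calc (∫ ω, R t ω * Mf t ω ∂μ) ^ 2 = |∫ ω, R t ω * Mf t ω ∂μ| ^ 2 := (sq_abs _).symm
      _ ≤ (Real.sqrt (∫ ω, (R t ω) ^ 2 ∂μ) * Real.sqrt (∫ ω, (Mf t ω) ^ 2 ∂μ)) ^ 2 := by
          exact pow_le_pow_left₀ (abs_nonneg _) hle 2
      _ = (∫ ω, (R t ω) ^ 2 ∂μ) * (∫ ω, (Mf t ω) ^ 2 ∂μ) := by
          rw [mul_pow, Real.sq_sqrt (hr2nn t), Real.sq_sqrt hm2nn]
      _ = (∫ ω, (R t ω) ^ 2 ∂μ) * (c * (t + ∫ ω, R t ω ∂μ)) := by rw [hM2']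
  -- variance identity
  have hvarEq : ∀ t : ℝ, 0 ≤ t →
      variance (fun ω => (N t ω : ℝ)) μ - c * t
        = lam ^ 2 * (∫ ω, (R t ω) ^ 2 ∂μ) + 2 * lam * (∫ ω, R t ω * Mf t ω ∂μ)
          + c * (∫ ω, R t ω ∂μ) - lam ^ 2 * (∫ ω, R t ω ∂μ) ^ 2 := by
    intro t ht
    have hRInt : Integrable (R t) μ := (hR2 t ht).integrable one_le_two
    have hMInt : Integrable (Mf t) μ := (hM2p t ht).integrable one_le_two
    have hR2Int : Integrable (fun ω => (R t ω) ^ 2) μ := (hR2 t ht).integrable_sq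
    have hM2Int : Integrable (fun ω => (Mf t ω) ^ 2) μ := (hM2p t ht).integrable_sq
    have hRMI : Integrable (fun ω => R t ω * Mf t ω) μ := hRMInt t ht
    have hM2' : ∫ ω, (Mf t ω) ^ 2 ∂μ = c * (t + ∫ ω, R t ω ∂μ) := hM2 t ht
    have hNe : ∀ ω, (N t ω : ℝ) = lam * t + lam * R t ω + Mf t ω := fun ω => by
      rw [hMeq]; ring
    have hexp : ∀ ω, ((N t ω : ℝ)) ^ 2
        = lam^2*t^2 + lam^2*(R t ω)^2 + (Mf t ω)^2 + 2*lam^2*t*(R t ω)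
          + 2*lam*t*(Mf t ω) + 2*lam*(R t ω * Mf t ω) := fun ω => by
      rw [hNe]; ring
    have i1 : Integrable (fun _ : Ω => lam^2*t^2) μ := integrable_const _
    have i2 : Integrable (fun ω => lam^2*(R t ω)^2) μ := hR2Int.const_mul _
    have i3 : Integrable (fun ω => (Mf t ω)^2) μ := hM2Int
    have i4 : Integrable (fun ω => 2*lam^2*t*(R t ω)) μ := hRInt.const_mul _
    have i5 : Integrable (fun ω => 2*lam*t*(Mf t ω)) μ := hMInt.const_mul _
    have i6 : Integrable (fun ω => 2*lam*(R t ω * Mf t ω)) μ := hRMI.const_mul _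
    have i12 : Integrable (fun ω => lam^2*t^2 + lam^2*(R t ω)^2) μ := i1.add i2
    have i123 : Integrable (fun ω => lam^2*t^2 + lam^2*(R t ω)^2 + (Mf t ω)^2) μ := i12.add i3
    have i1234 : Integrable (fun ω => lam^2*t^2 + lam^2*(R t ω)^2 + (Mf t ω)^2
        + 2*lam^2*t*(R t ω)) μ := i123.add i4
    have i12345 : Integrable (fun ω => lam^2*t^2 + lam^2*(R t ω)^2 + (Mf t ω)^2
        + 2*lam^2*t*(R t ω) + 2*lam*t*(Mf t ω)) μ := i1234.add i5
    have hEN2 : ∫ ω, ((N t ω : ℝ)) ^ 2 ∂μ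
        = lam^2*t^2 + lam^2 * (∫ ω, (R t ω)^2 ∂μ) + (c * (t + ∫ ω, R t ω ∂μ))
          + 2*lam^2*t*(∫ ω, R t ω ∂μ) + 2*lam*t*(∫ ω, Mf t ω ∂μ)
          + 2*lam*(∫ ω, R t ω * Mf t ω ∂μ) := by
      rw [integral_congr_ae (ae_of_all _ hexp),
        integral_add i12345 i6, integral_add i1234 i5, integral_add i123 i4,
        integral_add i12 i3, integral_add i1 i2, integral_const]
      simp only [measure_univ, ENNReal.toReal_one, smul_eq_mul, one_mul, probReal_univ]
      rw [integral_const_mul, integral_const_mul, integral_const_mul, integral_const_mul, hM2']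
    rw [variance_eq_sub (hN2 t ht)]
    simp only [Pi.pow_apply]
    rw [hEN2, wald t ht, hEM t ht]
    ring
  -- assembling the asymptotics
  have hC0 : 0 ≤ C := le_trans (hr1nn 0 le_rfl) (hC 0 le_rfl)
  have hxo : (fun t : ℝ => ∫ ω, R t ω * Mf t ω ∂μ) =o[atTop] (fun t : ℝ => t) := by
    rw [isLittleO_iff]
    intro ε hε
    set K : ℝ := c * (1 + C) + 1 with hK
    have hK0 : (0:ℝ) < K := by positivity
    have h' := (isLittleO_iff.mp hR2o) (c := ε ^ 2 / K) (by positivity)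
    filter_upwards [h', eventually_ge_atTop (1 : ℝ)] with t hr2 ht1
    have ht0 : (0:ℝ) ≤ t := le_trans zero_le_one ht1
    have hr2' : ∫ ω, (R t ω) ^ 2 ∂μ ≤ ε ^ 2 / K * t := by
      rw [Real.norm_of_nonneg (hr2nn t), Real.norm_of_nonneg ht0] at hr2; exact hr2
    have hm2b : c * (t + ∫ ω, R t ω ∂μ) ≤ K * t := by
      have h1 : t + ∫ ω, R t ω ∂μ ≤ (1 + C) * t := by
        nlinarith [hC t ht0, hr1nn t ht0]
      nlinarith [hc0, mul_le_mul_of_nonneg_left h1 hc0]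
    have hsq : (∫ ω, R t ω * Mf t ω ∂μ) ^ 2 ≤ (ε * t) ^ 2 := by
      have h1 := hCS t ht0
      have h2 : (∫ ω, (R t ω) ^ 2 ∂μ) * (c * (t + ∫ ω, R t ω ∂μ))
          ≤ (ε ^ 2 / K * t) * (K * t) := by
        apply mul_le_mul hr2' hm2b ?_ (by positivity)
        nlinarith [hc0, hr1nn t ht0, mul_nonneg hc0 (add_nonneg ht0 (hr1nn t ht0))]
      have h3 : (ε ^ 2 / K * t) * (K * t) = (ε * t) ^ 2 := by
        field_simp
      nlinarith
    have habs : |∫ ω, R t ω * Mf t ω ∂μ| ≤ ε * t := by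
      have h4 := Real.sqrt_le_sqrt hsq
      rwa [Real.sqrt_sq_eq_abs, Real.sqrt_sq_eq_abs, abs_of_nonneg (mul_nonneg hε.le ht0)] at h4
    rw [Real.norm_eq_abs, Real.norm_of_nonneg ht0]
    exact habs
  have h1 : (fun t : ℝ => lam ^ 2 * (∫ ω, (R t ω) ^ 2 ∂μ)) =o[atTop] (fun t : ℝ => t) :=
    hR2o.const_mul_left _
  have h2 : (fun t : ℝ => c * (∫ ω, R t ω ∂μ) - lam ^ 2 * (∫ ω, R t ω ∂μ) ^ 2)
      =o[atTop] (fun t : ℝ => t) := by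
    have hb : (fun t : ℝ => c * (∫ ω, R t ω ∂μ) - lam ^ 2 * (∫ ω, R t ω ∂μ) ^ 2)
        =O[atTop] (fun _ : ℝ => (1:ℝ)) := by
      rw [isBigO_iff]
      refine ⟨c * C + lam ^ 2 * C ^ 2, ?_⟩
      filter_upwards [eventually_ge_atTop (0 : ℝ)] with t ht
      have ha := hr1nn t ht
      have hb' := hC t ht
      rw [Real.norm_eq_abs, norm_one, mul_one, abs_le]
      constructor <;> nlinarith [sq_nonneg lam, sq_nonneg (∫ ω, R t ω ∂μ),
        mul_le_mul_of_nonneg_left hb' hc0, sq_nonneg C,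
        mul_le_mul hb' hb' ha hC0, sq_nonneg (lam * C), sq_nonneg (lam * (∫ ω, R t ω ∂μ))]
    exact hb.trans_isLittleO (isLittleO_const_id_atTop (1:ℝ))
  have h3 : (fun t : ℝ => 2 * lam * (∫ ω, R t ω * Mf t ω ∂μ)) =o[atTop] (fun t : ℝ => t) :=
    hxo.const_mul_left _
  have heq : (fun t : ℝ => variance (fun ω => (N t ω : ℝ)) μ - c * t) =ᶠ[atTop]
      (fun t : ℝ => lam ^ 2 * (∫ ω, (R t ω) ^ 2 ∂μ)
        + 2 * lam * (∫ ω, R t ω * Mf t ω ∂μ)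
        + (c * (∫ ω, R t ω ∂μ) - lam ^ 2 * (∫ ω, R t ω ∂μ) ^ 2)) := by
    filter_upwards [eventually_ge_atTop (0 : ℝ)] with t ht
    rw [hvarEq t ht]; ring
  exact heq.trans_isLittleO ((h1.add h3).add h2)
end

section
/- Let N(t) be a general counting process with counting times t_0 = 0 < t_1 < ..., inter-arrival times T_n = t_n − t_{n−1} with E[T_n] < ∞, E[N(t)] < ∞ for all t, adapted to a filtration F containing the natural filtration of (N, R). For v > 0 define λ̃^(v)(t) = 1 / E[min(v, T_{N(t)}) | F_{t_{N(t)−1}−}]. Then N(t) = ∫₀ᵗ λ̃^(v)(s) 1(R(s) ≤ v) ds + λ̃^(v)(t)·min(v, R(t)) + M^(v)(t), where M^(v)(t) = Σ_{n=1}^{N(t)} (1 − λ̃^(v)(t_{n−1})·min(v, T_n)) is an F-martingale. -/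
open MeasureTheory ProbabilityTheory Filter Set
open scoped ENNReal NNReal

section Aux

lemma GCT_vol_between {x y : ℝ} {S : Set ℝ} (h1 : Set.Ioo x y ⊆ S) (h2 : S ⊆ Set.Icc x y) :
    MeasureTheory.volume S = ENNReal.ofReal (y - x) :=
  le_antisymm ((measure_mono h2).trans_eq Real.volume_Icc)
    (le_trans (le_of_eq Real.volume_Ioo.symm) (measure_mono h1))

lemma GCT_condexp_pos {Ω : Type*} {m : MeasurableSpace Ω} {mΩ : MeasurableSpace Ω}
    {μ : Measure Ω} [IsProbabilityMeasure μ] (hm : m ≤ mΩ)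
    {f : Ω → ℝ} (hf : Integrable f μ) (hpos : ∀ ω, 0 < f ω) :
    ∀ᵐ ω ∂μ, 0 < (μ[f|m]) ω := by
  set g := μ[f|m] with hg
  have hgm : StronglyMeasurable[m] g := stronglyMeasurable_condExp
  have hA : MeasurableSet[m] {ω | g ω ≤ 0} := hgm.measurable measurableSet_Iic
  have hA0 : MeasurableSet {ω | g ω ≤ 0} := hm _ hA
  have h1 : ∫ ω in {ω | g ω ≤ 0}, g ω ∂μ = ∫ ω in {ω | g ω ≤ 0}, f ω ∂μ :=
    setIntegral_condExp hm hf hA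
  have h2 : ∫ ω in {ω | g ω ≤ 0}, g ω ∂μ ≤ 0 :=
    setIntegral_nonpos hA0 fun ω hω => hω
  have h3 : 0 ≤ ∫ ω in {ω | g ω ≤ 0}, f ω ∂μ :=
    setIntegral_nonneg hA0 fun ω _ => (hpos ω).le
  have h4 : ∫ ω in {ω | g ω ≤ 0}, f ω ∂μ = 0 := le_antisymm (h1 ▸ h2) h3
  have h5 : f =ᵐ[μ.restrict {ω | g ω ≤ 0}] 0 :=
    (integral_eq_zero_iff_of_nonneg_ae (Eventually.of_forall fun ω => (hpos ω).le)
      hf.integrableOn).mp h4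
  have h6 : μ {ω | g ω ≤ 0} = 0 := by
    by_contra h
    have : μ.restrict {ω | g ω ≤ 0} {ω | ¬ f ω = 0} = 0 := h5
    rw [show {ω | ¬ f ω = (0:ℝ)} = univ from eq_univ_of_forall fun ω => (hpos ω).ne',
      Measure.restrict_apply_univ] at this
    exact h this
  have : ∀ᵐ ω ∂μ, ¬ g ω ≤ 0 := (ae_iff).mpr (by simpa using h6)
  filter_upwards [this] with ω hω using lt_of_not_ge hω

lemma GCT_key {Ω : Type*} {m : MeasurableSpace Ω} {mΩ : MeasurableSpace Ω}
    {μ : Measure Ω} [IsProbabilityMeasure μ] (hm : m ≤ mΩ)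
    {f : Ω → ℝ} (hf : Integrable f μ) (hfm : Measurable f) (hpos : ∀ ω, 0 < f ω)
    (hKpos : ∀ᵐ ω ∂μ, 0 < (μ[f|m]) ω)
    {B : Set Ω} (hB : MeasurableSet[m] B) :
    Integrable (B.indicator (fun ω => ((μ[f|m]) ω)⁻¹ * f ω)) μ ∧
      ∫ ω, B.indicator (fun ω' => ((μ[f|m]) ω')⁻¹ * f ω') ω ∂μ = (μ B).toReal := by
  set K := μ[f|m] with hKdef
  have hKm : StronglyMeasurable[m] K := stronglyMeasurable_condExp
  have hK0 : Measurable[mΩ] K := hKm.measurable.mono hm le_rfl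
  have hBm : MeasurableSet[mΩ] B := hm _ hB
  set g : ℕ → Ω → ℝ := fun n ω => B.indicator (fun ω' => max (min (K ω')⁻¹ (n : ℝ)) 0) ω
    with hgdef
  have hgm : ∀ n, StronglyMeasurable[m] (g n) := fun n =>
    (((hKm.measurable.inv.min measurable_const).max measurable_const).indicator hB
      ).stronglyMeasurable
  have hg_nonneg : ∀ n ω, 0 ≤ g n ω := fun n ω =>
    Set.indicator_nonneg (fun ω' _ => le_max_right _ _) ω
  have hg_le : ∀ n ω, g n ω ≤ (n : ℝ) := by
    intro n ω
    by_cases hω : ω ∈ B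
    · simp only [hgdef, Set.indicator_of_mem hω]
      exact max_le ((min_le_right _ _)) (Nat.cast_nonneg n)
    · simp only [hgdef, Set.indicator_of_notMem hω]; exact Nat.cast_nonneg n
  have hg_bound : ∀ n, ∀ᵐ ω ∂μ, ‖g n ω‖ ≤ (n : ℝ) := fun n =>
    Eventually.of_forall fun ω => by
      rw [Real.norm_eq_abs, abs_of_nonneg (hg_nonneg n ω)]; exact hg_le n ω
  have hgf_int : ∀ n, Integrable (fun ω => g n ω * f ω) μ := fun n =>
    hf.bdd_mul ((hgm n).mono hm).aestronglyMeasurable (hg_bound n)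
  have hgK_int : ∀ n, Integrable (fun ω => g n ω * K ω) μ := fun n =>
    integrable_condExp.bdd_mul ((hgm n).mono hm).aestronglyMeasurable (hg_bound n)
  have hmulK : ∀ n, ∫ ω, g n ω * f ω ∂μ = ∫ ω, g n ω * K ω ∂μ := by
    intro n
    have h1 := condExp_stronglyMeasurable_mul_of_bound hm (hgm n) hf (n : ℝ) (hg_bound n)
    have h2 : ∫ ω, (g n * f) ω ∂μ = ∫ ω, (μ[g n * f|m]) ω ∂μ := (integral_condExp hm).symm
    calc ∫ ω, g n ω * f ω ∂μ = ∫ ω, (μ[g n * f|m]) ω ∂μ := h2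
      _ = ∫ ω, g n ω * K ω ∂μ := integral_congr_ae h1
  have hbd : ∀ n, ∀ᵐ ω ∂μ, 0 ≤ g n ω * K ω ∧ g n ω * K ω ≤ B.indicator (fun _ => (1:ℝ)) ω := by
    intro n
    filter_upwards [hKpos] with ω hK
    have hlam : 0 < (K ω)⁻¹ := inv_pos.mpr hK
    constructor
    · exact mul_nonneg (hg_nonneg n ω) hK.le
    · by_cases hω : ω ∈ B
      · simp only [hgdef, Set.indicator_of_mem hω]
        have : max (min (K ω)⁻¹ (n : ℝ)) 0 ≤ (K ω)⁻¹ :=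
          max_le (min_le_left _ _) hlam.le
        calc max (min (K ω)⁻¹ (n : ℝ)) 0 * K ω ≤ (K ω)⁻¹ * K ω :=
              mul_le_mul_of_nonneg_right this hK.le
          _ = 1 := inv_mul_cancel₀ hK.ne'
      · simp [hgdef, Set.indicator_of_notMem hω]
  have h_tendK : ∀ᵐ ω ∂μ, Tendsto (fun n => g n ω * K ω) atTop
      (nhds (B.indicator (fun _ => (1:ℝ)) ω)) := by
    filter_upwards [hKpos] with ω hK
    obtain ⟨Nn, hNn⟩ := exists_nat_ge (K ω)⁻¹
    apply tendsto_const_nhds.congr'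
    filter_upwards [eventually_ge_atTop Nn] with n hn
    have hminn : min (K ω)⁻¹ (n : ℝ) = (K ω)⁻¹ :=
      min_eq_left (hNn.trans (Nat.cast_le.mpr hn))
    by_cases hω : ω ∈ B
    · simp only [hgdef, Set.indicator_of_mem hω, hminn,
        max_eq_left (inv_pos.mpr hK).le, inv_mul_cancel₀ hK.ne']
    · simp [hgdef, Set.indicator_of_notMem hω]
  have hind_int : Integrable (B.indicator (fun _ => (1:ℝ))) μ :=
    (integrable_const (1:ℝ)).indicator hBm
  have hlim1 : Tendsto (fun n => ∫ ω, g n ω * K ω ∂μ) atTop (nhds ((μ B).toReal)) := by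
    have h := tendsto_integral_of_dominated_convergence (B.indicator (fun _ => (1:ℝ)))
      (fun n => (hgK_int n).aestronglyMeasurable) hind_int
      (fun n => by
        filter_upwards [hbd n] with ω h
        rw [Real.norm_eq_abs, abs_of_nonneg h.1]; exact h.2)
      h_tendK
    have : ∫ ω, B.indicator (fun _ => (1:ℝ)) ω ∂μ = (μ B).toReal := by
      rw [integral_indicator_const (1:ℝ) hBm, smul_eq_mul, mul_one, measureReal_def]
    rwa [this] at h
  have hlim2 : Tendsto (fun n => ∫ ω, g n ω * f ω ∂μ) atTop (nhds ((μ B).toReal)) := by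
    apply hlim1.congr; intro n; exact (hmulK n).symm
  set L : Ω → ℝ := fun ω => B.indicator (fun ω' => max (K ω')⁻¹ 0 * f ω') ω with hLdef
  have hLmeas : Measurable[mΩ] L := ((hK0.inv.max measurable_const).mul hfm).indicator hBm
  have hL_nonneg : ∀ ω, 0 ≤ L ω := fun ω =>
    Set.indicator_nonneg (fun ω' _ => mul_nonneg (le_max_right _ _) (hpos ω').le) ω
  have hgfL : ∀ n ω, g n ω * f ω ≤ L ω := by
    intro n ω
    by_cases hω : ω ∈ B
    · simp only [hgdef, hLdef, Set.indicator_of_mem hω]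
      exact mul_le_mul_of_nonneg_right
        (max_le_max (min_le_left _ _) le_rfl) (hpos ω).le
    · simp [hgdef, hLdef, Set.indicator_of_notMem hω]
  have hgf_nonneg : ∀ n ω, 0 ≤ g n ω * f ω := fun n ω =>
    mul_nonneg (hg_nonneg n ω) (hpos ω).le
  have hgf_mono : ∀ ω, Monotone fun n => g n ω * f ω := by
    intro ω i j hij
    by_cases hω : ω ∈ B
    · simp only [hgdef, Set.indicator_of_mem hω]
      exact mul_le_mul_of_nonneg_right
        (max_le_max (min_le_min le_rfl (Nat.cast_le.mpr hij)) le_rfl) (hpos ω).le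
    · simp [hgdef, Set.indicator_of_notMem hω]
  have hLn : ∀ ω, ∃ Nn : ℕ, ∀ n ≥ Nn, g n ω * f ω = L ω := by
    intro ω
    obtain ⟨Nn, hNn⟩ := exists_nat_ge (K ω)⁻¹
    refine ⟨Nn, fun n hn => ?_⟩
    have hminn : min (K ω)⁻¹ (n : ℝ) = (K ω)⁻¹ :=
      min_eq_left (hNn.trans (Nat.cast_le.mpr hn))
    by_cases hω : ω ∈ B
    · simp only [hgdef, hLdef, Set.indicator_of_mem hω, hminn]
    · simp [hgdef, hLdef, Set.indicator_of_notMem hω]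
  have hsup : ∀ ω, (⨆ n, ENNReal.ofReal (g n ω * f ω)) = ENNReal.ofReal (L ω) := by
    intro ω
    obtain ⟨Nn, hNn⟩ := hLn ω
    refine le_antisymm (iSup_le fun n => ENNReal.ofReal_le_ofReal (hgfL n ω)) ?_
    rw [← hNn Nn le_rfl]
    exact le_iSup (fun n => ENNReal.ofReal (g n ω * f ω)) Nn
  have hint_le : ∀ n, ∫ ω, g n ω * f ω ∂μ ≤ (μ B).toReal := by
    intro n
    rw [hmulK n]
    have h1 : ∫ ω, g n ω * K ω ∂μ ≤ ∫ ω, B.indicator (fun _ => (1:ℝ)) ω ∂μ :=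
      integral_mono_ae (hgK_int n) hind_int ((hbd n).mono fun ω h => h.2)
    rwa [integral_indicator_const (1:ℝ) hBm, smul_eq_mul, mul_one, measureReal_def] at h1
  have hLint : Integrable L μ := by
    refine ⟨hLmeas.aestronglyMeasurable, ?_⟩
    rw [hasFiniteIntegral_iff_norm]
    have heq : ∀ ω, ENNReal.ofReal ‖L ω‖ = ENNReal.ofReal (L ω) := fun ω => by
      rw [Real.norm_eq_abs, abs_of_nonneg (hL_nonneg ω)]
    simp_rw [heq]
    have h1 : ∫⁻ ω, ENNReal.ofReal (L ω) ∂μ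
        = ⨆ n, ∫⁻ ω, ENNReal.ofReal (g n ω * f ω) ∂μ := by
      rw [← lintegral_iSup' (f := fun n ω => ENNReal.ofReal (g n ω * f ω)) (fun n =>
          ((((hgm n).measurable.mono hm le_rfl).mul hfm).ennreal_ofReal).aemeasurable)
        (Eventually.of_forall fun ω => fun i j hij =>
          ENNReal.ofReal_le_ofReal (hgf_mono ω hij))]
      congr 1; funext ω; rw [hsup ω]
    rw [h1]
    refine lt_of_le_of_lt (iSup_le fun n => ?_) (ENNReal.ofReal_lt_top (r := (μ B).toReal + 1))
    rw [← ofReal_integral_eq_lintegral_ofReal (hgf_int n)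
      (Eventually.of_forall (hgf_nonneg n))]
    exact ENNReal.ofReal_le_ofReal ((hint_le n).trans (by linarith))
  have hLlim : Tendsto (fun n => ∫ ω, g n ω * f ω ∂μ) atTop (nhds (∫ ω, L ω ∂μ)) := by
    refine tendsto_integral_of_dominated_convergence L
      (fun n => (hgf_int n).aestronglyMeasurable) hLint
      (fun n => Eventually.of_forall fun ω => by
        rw [Real.norm_eq_abs, abs_of_nonneg (hgf_nonneg n ω)]; exact hgfL n ω)
      (Eventually.of_forall fun ω => ?_)
    obtain ⟨Nn, hNn⟩ := hLn ω
    apply tendsto_const_nhds.congr'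
    filter_upwards [eventually_ge_atTop Nn] with n hn
    exact (hNn n hn).symm
  have hintL : ∫ ω, L ω ∂μ = (μ B).toReal := tendsto_nhds_unique hLlim hlim2
  have hTL : (B.indicator (fun ω' => ((μ[f|m]) ω')⁻¹ * f ω')) =ᵐ[μ] L := by
    filter_upwards [hKpos] with ω hK
    by_cases hω : ω ∈ B
    · simp only [hLdef, Set.indicator_of_mem hω, ← hKdef,
        max_eq_left (inv_pos.mpr hK).le]
    · simp [hLdef, Set.indicator_of_notMem hω]
  exact ⟨hLint.congr hTL.symm, by rw [integral_congr_ae hTL, hintL]⟩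

lemma GCT_trace {Ω : Type*} {mΩ : MeasurableSpace Ω} (𝔽 : Filtration ℝ mΩ) {τ : Ω → ℝ}
    (hτ : ∀ t : ℝ, MeasurableSet[𝔽 t] {ω | τ ω ≤ t}) {Gm : MeasurableSpace Ω}
    (hGm : Gm = MeasurableSpace.generateFrom
      {s | ∃ t : ℝ, ∃ A : Set Ω, MeasurableSet[𝔽 t] A ∧ s = A ∩ {ω | t < τ ω}})
    (t : ℝ) {S : Set Ω} (hS : MeasurableSet[Gm] S) :
    MeasurableSet[𝔽 t] (S ∩ {ω | τ ω ≤ t}) := by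
  set E := {ω | τ ω ≤ t} with hEdef
  have hE : MeasurableSet[𝔽 t] E := hτ t
  let m' : MeasurableSpace Ω :=
    { MeasurableSet' := fun s => MeasurableSet[𝔽 t] (s ∩ E)
      measurableSet_empty := by simpa using @MeasurableSet.empty _ (𝔽 t)
      measurableSet_compl := fun s hs => by
        show MeasurableSet[𝔽 t] (sᶜ ∩ E)
        have h : sᶜ ∩ E = E \ (s ∩ E) := by
          ext ω; simp only [Set.mem_inter_iff, Set.mem_compl_iff, Set.mem_diff]; tauto
        rw [h]; exact hE.diff hs
      measurableSet_iUnion := fun f hf => by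
        show MeasurableSet[𝔽 t] ((⋃ i, f i) ∩ E)
        rw [Set.iUnion_inter]; exact MeasurableSet.iUnion hf }
  have hle : Gm ≤ m' := by
    rw [hGm]; apply MeasurableSpace.generateFrom_le
    rintro s ⟨u, A, hA, rfl⟩
    show MeasurableSet[𝔽 t] ((A ∩ {ω | u < τ ω}) ∩ E)
    by_cases hu : u < t
    · have h1 : MeasurableSet[𝔽 t] A := 𝔽.mono hu.le _ hA
      have h2 : MeasurableSet[𝔽 t] {ω | u < τ ω} := by
        have : {ω | u < τ ω} = {ω | τ ω ≤ u}ᶜ := by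
          ext ω; simp [not_le]
        rw [this]; exact (𝔽.mono hu.le _ (hτ u)).compl
      exact (h1.inter h2).inter hE
    · have h : (A ∩ {ω | u < τ ω}) ∩ E = ∅ := by
        apply Set.eq_empty_of_forall_notMem
        rintro ω ⟨⟨-, h1⟩, h2⟩
        rw [hEdef] at h2
        exact hu (lt_of_lt_of_le h1 h2)
      rw [h]; exact @MeasurableSet.empty _ (𝔽 t)
  exact hle S hS

lemma GCT_indicator_meas {Ω : Type*} {m1 m2 : MeasurableSpace Ω} {E : Set Ω}
    (hE : MeasurableSet[m2] E)
    (htr : ∀ S, MeasurableSet[m1] S → MeasurableSet[m2] (S ∩ E))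
    {g : Ω → ℝ} (hg : Measurable[m1] g) : Measurable[m2] (E.indicator g) := by
  intro B hB
  classical
  by_cases h0 : (0:ℝ) ∈ B
  · have h : E.indicator g ⁻¹' B = (g ⁻¹' B ∩ E) ∪ Eᶜ := by
      ext ω; by_cases hω : ω ∈ E <;>
        simp [Set.indicator_of_mem, Set.indicator_of_notMem, hω, h0]
    rw [h]; exact (htr _ (hg hB)).union hE.compl
  · have h : E.indicator g ⁻¹' B = g ⁻¹' B ∩ E := by
      ext ω; by_cases hω : ω ∈ E <;>
        simp [Set.indicator_of_mem, Set.indicator_of_notMem, hω, h0]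
    rw [h]; exact htr _ (hg hB)

lemma GCT_tsum_count (k : ℕ) : ∑' i : ℕ, (if i < k then (1:ℝ≥0∞) else 0) = k := by
  have h : ∀ i ∉ Finset.range k, (if i < k then (1:ℝ≥0∞) else 0) = 0 := by
    intro i hi
    simp only [Finset.mem_range, not_lt] at hi
    simp [Nat.not_lt.mpr hi]
  rw [tsum_eq_sum h, Finset.sum_congr rfl (fun i hi => if_pos (Finset.mem_range.mp hi)),
    Finset.sum_const, Finset.card_range, nsmul_eq_mul, mul_one]

end Aux

/-- Truncated semimartingale representation for a general counting process
(Lemma 5.1): with `λ̃⁽ᵛ⁾(t) = 1/E[v ∧ T_{N(t)} | F_{t_{N(t)-1}-}]`,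
`N(t) = ∫₀ᵗ λ̃⁽ᵛ⁾(s) 1(R(s) ≤ v) ds + λ̃⁽ᵛ⁾(t)(v ∧ R(t)) + M⁽ᵛ⁾(t)` and
`M⁽ᵛ⁾` is an `F`-martingale. Here `tn 0 = 0`, `T_{n+1} = tn (n+1) - tn n`, and
`G n` is the strict past `σ`-field `F_{tn n -}`. -/
theorem general_counting_truncated_representation
    {Ω : Type*} {mΩ : MeasurableSpace Ω} (μ : Measure Ω) [IsProbabilityMeasure μ]
    (𝔽 : Filtration ℝ mΩ)
    (N : ℝ → Ω → ℕ) (tn : ℕ → Ω → ℝ) (R : ℝ → Ω → ℝ) (v : ℝ)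
    (G : ℕ → MeasurableSpace Ω)
    (hv : 0 < v)
    (htn0 : ∀ ω, tn 0 ω = 0)
    (htn_mono : ∀ ω, StrictMono (fun n => tn n ω))
    (hst : ∀ n, IsStoppingTime 𝔽 (fun ω => ((tn n ω : ℝ) : WithTop ℝ)))
    (hTint : ∀ n, Integrable (fun ω => tn (n+1) ω - tn n ω) μ)
    (hN : ∀ (t : ℝ) (ω : Ω) (n : ℕ), n < N t ω ↔ tn n ω ≤ t)
    (hNint : ∀ t : ℝ, 0 ≤ t → Integrable (fun ω => (N t ω : ℝ)) μ)
    (hR : ∀ t : ℝ, ∀ ω, R t ω = tn (N t ω) ω - t)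
    (hG : ∀ n, G n = MeasurableSpace.generateFrom
        {s | ∃ t : ℝ, ∃ A : Set Ω, MeasurableSet[𝔽 t] A ∧ s = A ∩ {ω | t < tn n ω}})
    (hGle : ∀ n, G n ≤ mΩ)
    (hnat : ∀ t : ℝ,
      (⨆ s ∈ Set.Iic t, MeasurableSpace.comap (fun ω => (N s ω, R s ω)) inferInstance)
        ≤ (𝔽 t : MeasurableSpace Ω)) :
    (∀ t : ℝ, 0 ≤ t → ∀ ω,
      (N t ω : ℝ)
        = (∫ s in Set.Ioc (0:ℝ) t,
            ((μ[(fun ω' => min v (tn (N s ω) ω' - tn (N s ω - 1) ω'))|G (N s ω - 1)]) ω)⁻¹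
              * (if R s ω ≤ v then (1:ℝ) else 0))
          + ((μ[(fun ω' => min v (tn (N t ω) ω' - tn (N t ω - 1) ω'))|G (N t ω - 1)]) ω)⁻¹
              * min v (R t ω)
          + ∑ i ∈ Finset.range (N t ω),
              (1 - ((μ[(fun ω' => min v (tn (i+1) ω' - tn i ω'))|G i]) ω)⁻¹
                    * min v (tn (i+1) ω - tn i ω))) ∧
    Martingale (fun t ω => ∑ i ∈ Finset.range (N t ω),
        (1 - ((μ[(fun ω' => min v (tn (i+1) ω' - tn i ω'))|G i]) ω)⁻¹
              * min v (tn (i+1) ω - tn i ω))) 𝔽 μ := by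
  classical
  have hle : ∀ u : ℝ, 𝔽 u ≤ mΩ := fun u => 𝔽.le u
  have hst' : ∀ n (t : ℝ), MeasurableSet[𝔽 t] {ω | tn n ω ≤ t} := fun n t => by
    simpa using hst n t
  have htn_meas : ∀ n, Measurable[mΩ] (tn n) := by
    intro n
    apply measurable_of_Iic
    intro a
    exact hle a _ (hst' n a)
  have htn_nonneg : ∀ n ω, 0 ≤ tn n ω := by
    intro n ω
    have h := (htn_mono ω).monotone (Nat.zero_le n)
    simpa [htn0 ω] using h
  have hT_pos : ∀ (i : ℕ) ω, 0 < tn (i+1) ω - tn i ω := fun i ω =>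
    sub_pos.mpr (htn_mono ω (Nat.lt_succ_self i))
  set f : ℕ → Ω → ℝ := fun i ω' => min v (tn (i+1) ω' - tn i ω') with hfdef
  have hfpos : ∀ i ω, 0 < f i ω := fun i ω => lt_min hv (hT_pos i ω)
  have hfmeas : ∀ i, Measurable[mΩ] (f i) := fun i =>
    measurable_const.min ((htn_meas (i+1)).sub (htn_meas i))
  have hfint : ∀ i, Integrable (f i) μ := fun i =>
    (integrable_const v).mono' (hfmeas i).aestronglyMeasurable
      (Eventually.of_forall fun ω => by
        rw [Real.norm_eq_abs, abs_of_pos (hfpos i ω)]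
        exact min_le_left _ _)
  set K : ℕ → Ω → ℝ := fun i => μ[f i|G i] with hKdef
  set X : ℕ → Ω → ℝ := fun i ω => 1 - (K i ω)⁻¹ * f i ω with hXdef
  set M : ℝ → Ω → ℝ := fun t ω => ∑ i ∈ Finset.range (N t ω), X i ω with hMdef
  set E : ℝ → ℕ → Set Ω := fun t i => {ω | tn i ω ≤ t} with hEdef
  have hEF : ∀ (t : ℝ) i, MeasurableSet[𝔽 t] (E t i) := fun t i => hst' i t
  have hEmΩ : ∀ (t : ℝ) i, MeasurableSet[mΩ] (E t i) := fun t i => hle t _ (hEF t i)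
  have hgen : ∀ (u : ℝ) (i : ℕ), MeasurableSet[G i] {ω | u < tn i ω} := by
    intro u i
    rw [hG i]
    exact MeasurableSpace.measurableSet_generateFrom
      ⟨u, univ, MeasurableSet.univ, (univ_inter _).symm⟩
  have hEG : ∀ (t : ℝ) i, MeasurableSet[G i] (E t i) := by
    intro t i
    have h : E t i = {ω | t < tn i ω}ᶜ := by
      ext ω; simp [hEdef, not_lt]
    rw [h]
    exact (hgen t i).compl
  have htrace : ∀ (i : ℕ) (t : ℝ) (S : Set Ω), MeasurableSet[G i] S →
      MeasurableSet[𝔽 t] (S ∩ E t i) := fun i t S hS =>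
    GCT_trace 𝔽 (hst' i) (hG i) t hS
  have hKm : ∀ i, StronglyMeasurable[G i] (K i) := fun i => stronglyMeasurable_condExp
  have hKmeas : ∀ i, Measurable[mΩ] (K i) := fun i =>
    (hKm i).measurable.mono (hGle i) le_rfl
  have hXmeas : ∀ i, Measurable[mΩ] (X i) := fun i =>
    measurable_const.sub (((hKmeas i).inv).mul (hfmeas i))
  have hKpos : ∀ i, ∀ᵐ ω ∂μ, 0 < K i ω := fun i =>
    GCT_condexp_pos (hGle i) (hfint i) (hfpos i)
  have hkey : ∀ (i : ℕ) (B : Set Ω), MeasurableSet[G i] B →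
      Integrable (B.indicator (fun ω => (K i ω)⁻¹ * f i ω)) μ ∧
        ∫ ω, B.indicator (fun ω' => (K i ω')⁻¹ * f i ω') ω ∂μ = (μ B).toReal := fun i B hB =>
    GCT_key (hGle i) (hfint i) (hfmeas i) (hfpos i) (hKpos i) hB
  -- integrability and integral of indicator of X over G i sets
  have hXsplit : ∀ (i : ℕ) (B : Set Ω), B.indicator (X i)
      = fun ω => B.indicator (fun _ => (1:ℝ)) ω - B.indicator (fun ω' => (K i ω')⁻¹ * f i ω') ω := by
    intro i B
    funext ω
    by_cases hω : ω ∈ B <;>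
      simp [Set.indicator_of_mem, Set.indicator_of_notMem, hω, hXdef, sub_eq_add_neg]
  have hXB : ∀ (i : ℕ) (B : Set Ω), MeasurableSet[G i] B →
      Integrable (B.indicator (X i)) μ ∧ ∫ ω, B.indicator (X i) ω ∂μ = 0 := by
    intro i B hB
    have hBm : MeasurableSet[mΩ] B := hGle i _ hB
    have h1 : Integrable (B.indicator (fun _ => (1:ℝ))) μ := (integrable_const _).indicator hBm
    have h2 := hkey i B hB
    constructor
    · rw [hXsplit i B]
      exact h1.sub h2.1
    · rw [hXsplit i B, integral_sub h1 h2.1, h2.2, integral_indicator_const (1:ℝ) hBm, measureReal_def]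
      simp
  -- the ℓ¹ bound for indicators of X
  have hlnorm : ∀ (i : ℕ) (t : ℝ) (S : Set Ω), S ⊆ E t i →
      ∫⁻ ω, (‖S.indicator (X i) ω‖₊ : ℝ≥0∞) ∂μ ≤ 2 * μ (E t i) := by
    intro i t S hS
    have hmono1 : ∀ ω, (‖S.indicator (X i) ω‖₊ : ℝ≥0∞) ≤ (‖(E t i).indicator (X i) ω‖₊ : ℝ≥0∞) := by
      intro ω
      by_cases hω : ω ∈ S
      · rw [Set.indicator_of_mem hω, Set.indicator_of_mem (hS hω)]
      · rw [Set.indicator_of_notMem hω]; simp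
    refine le_trans (lintegral_mono hmono1) ?_
    have hbound : ∀ᵐ ω ∂μ, (‖(E t i).indicator (X i) ω‖₊ : ℝ≥0∞)
        ≤ ENNReal.ofReal ((E t i).indicator (fun ω' => 1 + (K i ω')⁻¹ * f i ω') ω) := by
      filter_upwards [hKpos i] with ω hK
      by_cases hω : ω ∈ E t i
      · rw [Set.indicator_of_mem hω, Set.indicator_of_mem hω, ← enorm_eq_nnnorm, ← ofReal_norm]
        apply ENNReal.ofReal_le_ofReal
        rw [hXdef, Real.norm_eq_abs]
        have h1 : 0 ≤ (K i ω)⁻¹ * f i ω := mul_nonneg (inv_pos.mpr hK).le (hfpos i ω).le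
        exact abs_le.mpr ⟨by linarith, by linarith⟩
      · rw [Set.indicator_of_notMem hω, Set.indicator_of_notMem hω]; simp
    refine le_trans (lintegral_mono_ae hbound) ?_
    have hint1 : Integrable ((E t i).indicator (fun _ => (1:ℝ))) μ :=
      (integrable_const _).indicator (hEmΩ t i)
    have hint2 := (hkey i (E t i) (hEG t i)).1
    have hsplit2 : (E t i).indicator (fun ω' => 1 + (K i ω')⁻¹ * f i ω')
        = fun ω => (E t i).indicator (fun _ => (1:ℝ)) ω
            + (E t i).indicator (fun ω' => (K i ω')⁻¹ * f i ω') ω := by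
      funext ω
      by_cases hω : ω ∈ E t i <;>
        simp [Set.indicator_of_mem, Set.indicator_of_notMem, hω]
    have hint : Integrable ((E t i).indicator (fun ω' => 1 + (K i ω')⁻¹ * f i ω')) μ := by
      rw [hsplit2]; exact hint1.add hint2
    have hnn : 0 ≤ᵐ[μ] (E t i).indicator (fun ω' => 1 + (K i ω')⁻¹ * f i ω') := by
      filter_upwards [hKpos i] with ω hK
      simp only [Pi.zero_apply]
      by_cases hω : ω ∈ E t i
      · rw [Set.indicator_of_mem hω]
        have h1 : 0 ≤ (K i ω)⁻¹ * f i ω := mul_nonneg (inv_pos.mpr hK).le (hfpos i ω).le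
        linarith
      · rw [Set.indicator_of_notMem hω]
    rw [← ofReal_integral_eq_lintegral_ofReal hint hnn]
    have hval : ∫ ω, (E t i).indicator (fun ω' => 1 + (K i ω')⁻¹ * f i ω') ω ∂μ
        = (μ (E t i)).toReal + (μ (E t i)).toReal := by
      rw [hsplit2, integral_add hint1 hint2, (hkey i (E t i) (hEG t i)).2,
        integral_indicator_const (1:ℝ) (hEmΩ t i), measureReal_def]
      simp
    rw [hval, ENNReal.ofReal_add ENNReal.toReal_nonneg ENNReal.toReal_nonneg,
      ENNReal.ofReal_toReal (measure_ne_top μ _), two_mul]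
  have hNsum : ∀ t : ℝ, (∑' i, μ (E t i)) ≠ ∞ := by
    intro t
    by_cases ht : 0 ≤ t
    · have hcalc : ∑' i, μ (E t i) = ∫⁻ ω, (N t ω : ℝ≥0∞) ∂μ := by
        have h1 : ∀ i, μ (E t i) = ∫⁻ ω, (E t i).indicator (fun _ => (1:ℝ≥0∞)) ω ∂μ :=
          fun i => (lintegral_indicator_one (hEmΩ t i)).symm
        calc ∑' i, μ (E t i)
            = ∑' i, ∫⁻ ω, (E t i).indicator (fun _ => (1:ℝ≥0∞)) ω ∂μ := by simp_rw [h1]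
          _ = ∫⁻ ω, ∑' i, (E t i).indicator (fun _ => (1:ℝ≥0∞)) ω ∂μ :=
              (lintegral_tsum fun i =>
                ((measurable_const.indicator (hEmΩ t i))).aemeasurable).symm
          _ = ∫⁻ ω, (N t ω : ℝ≥0∞) ∂μ := by
              congr 1; funext ω
              have h2 : ∀ i : ℕ, (E t i).indicator (fun _ => (1:ℝ≥0∞)) ω
                  = if i < N t ω then 1 else 0 := by
                intro i
                by_cases hω : ω ∈ E t i
                · rw [Set.indicator_of_mem hω, if_pos ((hN t ω i).mpr hω)]
                · rw [Set.indicator_of_notMem hω, if_neg (fun h => hω ((hN t ω i).mp h))]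
              simp_rw [h2]
              exact GCT_tsum_count (N t ω)
      rw [hcalc]
      have h3 : ∀ ω, (N t ω : ℝ≥0∞) = (‖(N t ω : ℝ)‖₊ : ℝ≥0∞) := fun ω => by
        rw [← enorm_eq_nnnorm, Real.enorm_eq_ofReal (Nat.cast_nonneg _), ENNReal.ofReal_natCast]
      simp_rw [h3]
      exact (hNint t ht).2.ne
    · have h4 : ∀ i, E t i = ∅ := by
        intro i
        apply Set.eq_empty_of_forall_notMem
        intro ω hω
        exact ht (le_trans (htn_nonneg i ω) hω)
      simp [h4]
  -- pointwise identities for M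
  have hsum_eq : ∀ (t : ℝ) (ω : Ω) (k : ℕ), N t ω ≤ k →
      ∑ i ∈ Finset.range k, (E t i).indicator (X i) ω = M t ω := by
    intro t ω k hk
    rw [hMdef]
    have hzero : ∀ i ∈ Finset.range k, i ∉ Finset.range (N t ω) →
        (E t i).indicator (X i) ω = 0 := by
      intro i _ hi
      have h1 : ω ∉ E t i := fun h => hi (Finset.mem_range.mpr ((hN t ω i).mpr h))
      exact Set.indicator_of_notMem h1 (X i)
    rw [← Finset.sum_subset (Finset.range_subset_range.mpr hk) hzero]
    refine Finset.sum_congr rfl fun i hi => ?_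
    have h1 : ω ∈ E t i := (hN t ω i).mp (Finset.mem_range.mp hi)
    exact Set.indicator_of_mem h1 (X i)
  have hadapted : ∀ t : ℝ, StronglyMeasurable[𝔽 t] (M t) := by
    intro t
    have hcomap : MeasurableSpace.comap (fun ω => (N t ω, R t ω)) inferInstance ≤ 𝔽 t :=
      le_trans (le_biSup (fun s => MeasurableSpace.comap (fun ω => (N s ω, R s ω))
          inferInstance) (Set.mem_Iic.mpr (le_refl t))) (hnat t)
    have hpair : Measurable[𝔽 t] fun ω => (N t ω, R t ω) := Measurable.of_comap_le hcomap
    have hNmeasF : Measurable[𝔽 t] (N t) := measurable_fst.comp hpair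
    have hRmeasF : Measurable[𝔽 t] (R t) := measurable_snd.comp hpair
    have hminmeas : ∀ j : ℕ, Measurable[𝔽 t] (fun ω => min (tn j ω) t) := fun j => by
      apply measurable_of_Iic
      intro a
      by_cases ha : t ≤ a
      · have h : (fun ω => min (tn j ω) t) ⁻¹' Set.Iic a = Set.univ := by
          ext ω; simp [min_le_iff, ha]
        rw [h]; exact @MeasurableSet.univ _ (𝔽 t)
      · have h : (fun ω => min (tn j ω) t) ⁻¹' Set.Iic a = {ω | tn j ω ≤ a} := by
          ext ω; simp [min_le_iff, ha]
        rw [h]; exact 𝔽.mono (not_le.mp ha).le _ (hst' j a)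
    have hterm : ∀ i, Measurable[𝔽 t] ((E t i).indicator (X i)) := by
      intro i
      set F : Ω → ℝ := fun ω => if i+1 < N t ω
          then min v (min (tn (i+1) ω) t - min (tn i ω) t)
          else min v (R t ω + t - min (tn i ω) t) with hFdef
      have hFmeas : Measurable[𝔽 t] F := by
        refine Measurable.ite ?_ ?_ ?_
        · exact hNmeasF (show MeasurableSet (Set.Ioi (i+1)) from trivial)
        · exact measurable_const.min ((hminmeas (i+1)).sub (hminmeas i))
        · exact measurable_const.min ((hRmeasF.add measurable_const).sub (hminmeas i))
      have hFeq : ∀ ω, ω ∈ E t i → F ω = f i ω := by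
        intro ω hω
        have hi : i < N t ω := (hN t ω i).mpr hω
        have htni : min (tn i ω) t = tn i ω := min_eq_left hω
        by_cases hc : i + 1 < N t ω
        · have h1 : tn (i+1) ω ≤ t := (hN t ω (i+1)).mp hc
          rw [hFdef]
          simp only [if_pos hc, htni, min_eq_left h1, hfdef]
        · have hNt : N t ω = i + 1 := le_antisymm (not_lt.mp hc) hi
          have h2 : R t ω + t = tn (i+1) ω := by rw [hR t ω, hNt]; ring
          rw [hFdef]
          simp only [if_neg hc, htni, h2, hfdef]
      have hsplit : (E t i).indicator (X i) = fun ω =>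
          (E t i).indicator (fun _ => (1:ℝ)) ω
            - ((E t i).indicator (fun ω' => (K i ω')⁻¹) ω) * F ω := by
        funext ω
        by_cases hω : ω ∈ E t i
        · rw [Set.indicator_of_mem hω, Set.indicator_of_mem hω, Set.indicator_of_mem hω,
            hFeq ω hω]
        · rw [Set.indicator_of_notMem hω, Set.indicator_of_notMem hω,
            Set.indicator_of_notMem hω]
          ring
      rw [hsplit]
      exact (measurable_const.indicator (hEF t i)).sub
        ((GCT_indicator_meas (hEF t i) (fun S hS => htrace i t S hS)
          (hKm i).measurable.inv).mul hFmeas)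
    refine stronglyMeasurable_of_tendsto atTop
      (fun k => (Finset.measurable_sum (Finset.range k)
        (fun i _ => hterm i)).stronglyMeasurable) ?_
    rw [tendsto_pi_nhds]
    intro ω
    apply tendsto_const_nhds.congr'
    filter_upwards [eventually_ge_atTop (N t ω)] with k hk
    exact (hsum_eq t ω k hk).symm
  have hMint : ∀ t : ℝ, Integrable (M t) μ := by
    intro t
    refine ⟨((hadapted t).mono (hle t)).aestronglyMeasurable, ?_⟩
    have hpt : ∀ ω, (‖M t ω‖₊ : ℝ≥0∞) ≤ ∑' i, (‖(E t i).indicator (X i) ω‖₊ : ℝ≥0∞) := by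
      intro ω
      have h1 : M t ω = ∑ i ∈ Finset.range (N t ω), (E t i).indicator (X i) ω :=
        (hsum_eq t ω _ le_rfl).symm
      rw [h1]
      refine le_trans ?_ (ENNReal.sum_le_tsum (Finset.range (N t ω)))
      rw [← ENNReal.coe_finset_sum]
      exact ENNReal.coe_le_coe.mpr (nnnorm_sum_le _ _)
    calc ∫⁻ ω, (‖M t ω‖₊ : ℝ≥0∞) ∂μ
        ≤ ∫⁻ ω, ∑' i, (‖(E t i).indicator (X i) ω‖₊ : ℝ≥0∞) ∂μ := lintegral_mono hpt
      _ = ∑' i, ∫⁻ ω, (‖(E t i).indicator (X i) ω‖₊ : ℝ≥0∞) ∂μ :=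
          lintegral_tsum fun i => ((hXmeas i).indicator (hEmΩ t i)).enorm.aemeasurable
      _ ≤ ∑' i, 2 * μ (E t i) :=
          ENNReal.tsum_le_tsum fun i => hlnorm i t (E t i) (subset_refl _)
      _ = 2 * ∑' i, μ (E t i) := ENNReal.tsum_mul_left
      _ < ∞ := ENNReal.mul_lt_top (by simp) (lt_top_iff_ne_top.mpr (hNsum t))
  have hNmono : ∀ (s t : ℝ), s ≤ t → ∀ ω, N s ω ≤ N t ω := by
    intro s t h ω
    by_contra hc
    push_neg at hc
    have h1 : tn (N t ω) ω ≤ s := (hN s ω (N t ω)).mp hc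
    exact lt_irrefl _ ((hN t ω (N t ω)).mpr (h1.trans h))
  have hsetint : ∀ s t : ℝ, s ≤ t → ∀ A : Set Ω, MeasurableSet[𝔽 s] A →
      ∫ ω in A, M s ω ∂μ = ∫ ω in A, M t ω ∂μ := by
    intro s t hst' A hA
    have hAm : MeasurableSet[mΩ] A := hle s _ hA
    set C : ℕ → Set Ω := fun i => {ω | s < tn i ω} ∩ E t i with hCdef
    have hCE : ∀ i, C i ⊆ E t i := fun i => Set.inter_subset_right
    have hCm : ∀ i, MeasurableSet[mΩ] (C i) := fun i =>
      ((htn_meas i) measurableSet_Ioi).inter (hEmΩ t i)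
    have hCG : ∀ i, MeasurableSet[G i] (A ∩ C i) := by
      intro i
      have h1 : MeasurableSet[G i] (A ∩ {ω | s < tn i ω}) := by
        rw [hG i]
        exact MeasurableSpace.measurableSet_generateFrom ⟨s, A, hA, rfl⟩
      have h2 : A ∩ C i = (A ∩ {ω | s < tn i ω}) ∩ E t i := by
        rw [hCdef]; ext ω
        simp only [Set.mem_inter_iff, Set.mem_setOf_eq]; tauto
      rw [h2]
      exact h1.inter (hEG t i)
    have hdiff : ∀ ω, M t ω = M s ω + ∑' i, (C i).indicator (X i) ω := by
      intro ω
      have htsum : ∑' i, (C i).indicator (X i) ω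
          = ∑ i ∈ Finset.range (N t ω), (C i).indicator (X i) ω := by
        apply tsum_eq_sum
        intro i hi
        apply Set.indicator_of_notMem
        intro hmem
        exact hi (Finset.mem_range.mpr ((hN t ω i).mpr hmem.2))
      have hterm : ∀ i ∈ Finset.range (N t ω),
          (C i).indicator (X i) ω = X i ω - (if i < N s ω then X i ω else 0) := by
        intro i hi
        by_cases hc : i < N s ω
        · have h1 : tn i ω ≤ s := (hN s ω i).mp hc
          have h2 : ω ∉ C i := fun hmem => absurd h1 (not_le.mpr hmem.1)
          rw [Set.indicator_of_notMem h2, if_pos hc]; ring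
        · have h1 : s < tn i ω := not_le.mp (fun hle' => hc ((hN s ω i).mpr hle'))
          have h2 : ω ∈ E t i := (hN t ω i).mp (Finset.mem_range.mp hi)
          have hmem : ω ∈ C i := ⟨h1, h2⟩
          rw [Set.indicator_of_mem hmem, if_neg hc]; ring
      have hlast : ∑ i ∈ Finset.range (N t ω), (if i < N s ω then X i ω else 0)
          = ∑ i ∈ Finset.range (N s ω), X i ω := by
        rw [← Finset.sum_subset (Finset.range_subset_range.mpr (hNmono s t hst' ω))
          (fun i _ hi => if_neg (fun hc => hi (Finset.mem_range.mpr hc)))]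
        exact Finset.sum_congr rfl fun i hi => if_pos (Finset.mem_range.mp hi)
      rw [htsum, Finset.sum_congr rfl hterm, Finset.sum_sub_distrib, hlast, hMdef]
      ring
    have htsum_int : Integrable (fun ω => ∑' i, (C i).indicator (X i) ω) μ := by
      have h : (fun ω => ∑' i, (C i).indicator (X i) ω) = fun ω => M t ω - M s ω := by
        funext ω; rw [hdiff ω]; ring
      rw [h]; exact (hMint t).sub (hMint s)
    have hmeas2 : ∀ i, AEStronglyMeasurable ((C i).indicator (X i)) (μ.restrict A) :=
      fun i => (((hXmeas i).indicator (hCm i)).aestronglyMeasurable).restrict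
    have hfin2 : ∑' i, ∫⁻ ω, (‖(C i).indicator (X i) ω‖₊ : ℝ≥0∞) ∂(μ.restrict A) ≠ ∞ := by
      have hb : ∑' i, ∫⁻ ω, (‖(C i).indicator (X i) ω‖₊ : ℝ≥0∞) ∂(μ.restrict A)
          ≤ 2 * ∑' i, μ (E t i) := by
        rw [← ENNReal.tsum_mul_left]
        refine ENNReal.tsum_le_tsum fun i =>
          le_trans (lintegral_mono' Measure.restrict_le_self le_rfl) (hlnorm i t (C i) (hCE i))
      exact ne_top_of_le_ne_top (ENNReal.mul_ne_top (by simp) (hNsum t)) hb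
    have h2 : ∫ ω in A, (∑' i, (C i).indicator (X i) ω) ∂μ = 0 := by
      rw [integral_tsum hmeas2 hfin2]
      have h3 : ∀ i, ∫ ω in A, (C i).indicator (X i) ω ∂μ = 0 := by
        intro i
        rw [← integral_indicator hAm, Set.indicator_indicator]
        exact (hXB i (A ∩ C i) (hCG i)).2
      simp_rw [h3]
      exact tsum_zero
    have h1 : ∫ ω in A, M t ω ∂μ
        = ∫ ω in A, M s ω ∂μ + ∫ ω in A, (∑' i, (C i).indicator (X i) ω) ∂μ := by
      rw [← integral_add ((hMint s).integrableOn) (htsum_int.integrableOn)]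
      refine setIntegral_congr_fun hAm fun ω _ => ?_
      rw [hdiff ω]
    rw [h1, h2, add_zero]
  have hmart : Martingale M 𝔽 μ := by
    constructor
    · exact fun t => hadapted t
    · intro s t hst'
      refine (ae_eq_condExp_of_forall_setIntegral_eq (𝔽.le s) (hMint t)
        (fun A hA _ => (hMint s).integrableOn)
        (fun A hA _ => hsetint s t hst' A hA)
        ((hadapted s).aestronglyMeasurable)).symm
  constructor
  · -- pathwise representation
    intro t ht ω
    obtain ⟨n, hn⟩ : ∃ n, N t ω = n + 1 := by
      have h0 : 0 < N t ω := (hN t ω 0).mpr (by rw [htn0 ω]; exact ht)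
      exact ⟨N t ω - 1, (Nat.succ_pred_eq_of_pos h0).symm⟩
    have htmono : Monotone fun i => tn i ω := (htn_mono ω).monotone
    have htnn : tn n ω ≤ t := (hN t ω n).mp (by rw [hn]; exact Nat.lt_succ_self n)
    have htn1 : t < tn (n+1) ω := by
      by_contra h
      push_neg at h
      have h2 := (hN t ω (n+1)).mpr h
      rw [hn] at h2
      exact lt_irrefl _ h2
    set c : ℕ → ℝ := fun i => (K i ω)⁻¹ with hcdef
    set a : ℕ → ℝ := fun i => max (tn i ω) (tn (i+1) ω - v) with hadef
    have ha_nonneg : ∀ i, 0 ≤ a i := fun i =>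
      le_trans (htn_nonneg i ω) (le_max_left _ _)
    set S : ℕ → Set ℝ := fun i => Set.Ico (a i) (tn (i+1) ω) ∩ Set.Ioc (0:ℝ) t with hSdef
    have hSmeas : ∀ i, MeasurableSet (S i) := fun i =>
      measurableSet_Ico.inter measurableSet_Ioc
    have hvol : ∀ i, volume (S i) = ENNReal.ofReal (min (tn (i+1) ω) t - a i) := by
      intro i
      apply GCT_vol_between
      · rintro x ⟨hx1, hx2⟩
        exact ⟨⟨hx1.le, lt_of_lt_of_le hx2 (min_le_left _ _)⟩,
          ⟨lt_of_le_of_lt (ha_nonneg i) hx1, (lt_of_lt_of_le hx2 (min_le_right _ _)).le⟩⟩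
      · rintro x ⟨⟨hx1, hx2⟩, hx3, hx4⟩
        exact ⟨hx1, le_min hx2.le hx4⟩
    have hIeq : Set.EqOn
        (fun s => ((μ[(fun ω' => min v (tn (N s ω) ω' - tn (N s ω - 1) ω'))|G (N s ω - 1)]) ω)⁻¹
              * (if R s ω ≤ v then (1:ℝ) else 0))
        (fun s => ∑ i ∈ Finset.range (n+1), (S i).indicator (fun _ => c i) s)
        (Set.Ioc (0:ℝ) t) := by
      intro s hs
      obtain ⟨hs0, hst_le⟩ := hs
      obtain ⟨j, hj⟩ : ∃ j, N s ω = j + 1 := by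
        have h0 : 0 < N s ω := (hN s ω 0).mpr (by rw [htn0 ω]; exact hs0.le)
        exact ⟨N s ω - 1, (Nat.succ_pred_eq_of_pos h0).symm⟩
      have hjn : j ≤ n := by
        have h1 : N s ω ≤ N t ω := hNmono s t hst_le ω
        omega
      have hjs : tn j ω ≤ s := (hN s ω j).mp (by rw [hj]; exact Nat.lt_succ_self j)
      have hjs1 : s < tn (j+1) ω := by
        by_contra h
        push_neg at h
        have h2 := (hN s ω (j+1)).mpr h
        rw [hj] at h2
        exact lt_irrefl _ h2
      have hRs : R s ω = tn (j+1) ω - s := by rw [hR s ω, hj]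
      have h0 : ∀ i ∈ Finset.range (n+1), i ≠ j → (S i).indicator (fun _ => c i) s = 0 := by
        intro i _ hij
        apply Set.indicator_of_notMem
        rintro ⟨⟨h1, h2⟩, -⟩
        have hi1 : tn i ω ≤ s := le_trans (le_max_left _ _) h1
        have e1 : i < N s ω := (hN s ω i).mpr hi1
        have e2 : N s ω ≤ i + 1 := by
          by_contra hcon
          push_neg at hcon
          exact absurd ((hN s ω (i+1)).mp hcon) (not_le.mpr h2)
        omega
      have h1 : j ∉ Finset.range (n+1) → (S j).indicator (fun _ => c j) s = 0 := by
        intro hj'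
        exact absurd (Finset.mem_range.mpr (Nat.lt_succ_of_le hjn)) hj'
      have hsum := Finset.sum_eq_single (s := Finset.range (n+1))
        (f := fun i => (S i).indicator (fun _ => c i) s) j h0 h1
      show _ = ∑ i ∈ Finset.range (n+1), (S i).indicator (fun _ => c i) s
      rw [hsum]
      simp only [hj, Nat.add_sub_cancel]
      by_cases hv' : R s ω ≤ v
      · have hmem : s ∈ S j := by
          refine ⟨⟨max_le hjs ?_, hjs1⟩, hs0, hst_le⟩
          rw [hRs] at hv'
          linarith
        rw [Set.indicator_of_mem hmem, if_pos hv', mul_one]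
      · have hmem : s ∉ S j := by
          rintro ⟨⟨hm1, -⟩, -⟩
          apply hv'
          rw [hRs]
          have hm2 : tn (j+1) ω - v ≤ a j := le_max_right _ _
          linarith
        rw [Set.indicator_of_notMem hmem, if_neg hv', mul_zero]
    haveI hfinres : IsFiniteMeasure (volume.restrict (Set.Ioc (0:ℝ) t)) := by
      constructor
      rw [Measure.restrict_apply_univ, Real.volume_Ioc]
      exact ENNReal.ofReal_lt_top
    have hint_eq : (∫ s in Set.Ioc (0:ℝ) t,
          ((μ[(fun ω' => min v (tn (N s ω) ω' - tn (N s ω - 1) ω'))|G (N s ω - 1)]) ω)⁻¹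
            * (if R s ω ≤ v then (1:ℝ) else 0))
        = ∑ i ∈ Finset.range (n+1), max (min (tn (i+1) ω) t - a i) 0 * c i := by
      rw [setIntegral_congr_fun measurableSet_Ioc hIeq]
      rw [integral_finset_sum _ (fun i _ => (integrable_const (c i)).indicator (hSmeas i))]
      refine Finset.sum_congr rfl fun i _ => ?_
      rw [integral_indicator_const (c i) (hSmeas i), measureReal_def, Measure.restrict_apply (hSmeas i)]
      have hSsub : S i ∩ Set.Ioc (0:ℝ) t = S i :=
        Set.inter_eq_self_of_subset_left (by rw [hSdef]; exact Set.inter_subset_right)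
      rw [hSsub, hvol i, smul_eq_mul, ENNReal.toReal_ofReal']
    -- algebra
    have hRt : R t ω = tn (n+1) ω - t := by rw [hR t ω, hn]
    have hsum1 : ∑ i ∈ Finset.range (n+1), (1 - c i * f i ω)
        = (↑(n+1) : ℝ) - ∑ i ∈ Finset.range (n+1), c i * f i ω := by
      rw [Finset.sum_sub_distrib, Finset.sum_const, Finset.card_range, nsmul_eq_mul, mul_one]
    have hmain : ∑ i ∈ Finset.range (n+1), max (min (tn (i+1) ω) t - a i) 0 * c i
        + c n * min v (R t ω) = ∑ i ∈ Finset.range (n+1), c i * f i ω := by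
      rw [Finset.sum_range_succ, Finset.sum_range_succ (f := fun i => c i * f i ω)]
      have hsmall : ∀ i ∈ Finset.range n,
          max (min (tn (i+1) ω) t - a i) 0 * c i = c i * f i ω := by
        intro i hi
        have hi' : i < n := Finset.mem_range.mp hi
        have h1 : tn (i+1) ω ≤ t := le_trans (htmono (by omega : i+1 ≤ n)) htnn
        have hminr : min (tn (i+1) ω) t = tn (i+1) ω := min_eq_left h1
        have hf : f i ω = min v (tn (i+1) ω - tn i ω) := rfl
        simp only [hadef, hminr]
        rcases le_total (tn (i+1) ω - v) (tn i ω) with h | h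
        · have hT : tn (i+1) ω - tn i ω ≤ v := by linarith
          rw [max_eq_left h, hf, min_eq_right hT,
            max_eq_left (by linarith [hT_pos i ω])]
          ring
        · have he : tn (i+1) ω - max (tn i ω) (tn (i+1) ω - v) = v := by
            rw [max_eq_right h]; ring
          rw [he, max_eq_left hv.le, hf, min_eq_left (by linarith)]
          ring
      rw [Finset.sum_congr rfl hsmall]
      have hminr : min (tn (n+1) ω) t = t := min_eq_right htn1.le
      have hfn : f n ω = min v (tn (n+1) ω - tn n ω) := rfl
      have hkey2 : max (t - a n) 0 + min v (tn (n+1) ω - t) = min v (tn (n+1) ω - tn n ω) := by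
        simp only [hadef, max_def, min_def]
        split_ifs <;> linarith
      rw [hminr, hRt]
      have hlast : max (t - a n) 0 * c n + c n * min v (tn (n+1) ω - t) = c n * f n ω := by
        rw [hfn, ← hkey2]
        ring
      linarith [hlast]
    have halg : (↑(n+1) : ℝ)
        = ∑ i ∈ Finset.range (n+1), max (min (tn (i+1) ω) t - a i) 0 * c i
          + c n * min v (R t ω)
          + ∑ i ∈ Finset.range (n+1), (1 - c i * f i ω) := by
      rw [hsum1, ← hmain]
      ring
    rw [hn, hint_eq]
    simp only [Nat.add_sub_cancel]
    exact halg
  · exact hmart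
end

section
/- Let N(t) be a general counting process as above, and suppose that for some v > 0 the expectations E[λ̃^(v)(t)·1(R(t) ≤ v)] and E[λ̃^(v)(t)·min(v, R(t))] converge to finite positive limits as t → ∞, with the first limit equal to λ^(v). Then lim_{t→∞} E[N(t)]/t = λ^(v), and for every 0 < h < ∞, lim_{t→∞} (E[N(t+h)] − E[N(t)]) = λ^(v)·h. -/
open MeasureTheory ProbabilityTheory Filter Set
open scoped ENNReal

/-- Pull-out lemma: `∫⁻_A f ⬝ (E[f|m])⁻¹ dμ = μ A` for `A ∈ m`, `f > 0` integrable. -/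
lemma gcb_aux_pullout {Ω : Type*} {m : MeasurableSpace Ω} {mΩ : MeasurableSpace Ω}
    (hm : m ≤ mΩ) (μ : Measure Ω) [IsProbabilityMeasure μ] {f : Ω → ℝ}
    (hf0 : ∀ ω, 0 < f ω) (hfi : Integrable f μ)
    {A : Set Ω} (hA : MeasurableSet[m] A) :
    ∫⁻ ω, A.indicator (fun ω => ENNReal.ofReal (f ω * ((μ[f|m]) ω)⁻¹)) ω ∂μ = μ A := by
  haveI : SigmaFinite (μ.trim hm) := inferInstance
  set e : Ω → ℝ := μ[f|m] with he_def
  have he_sm : StronglyMeasurable[m] e := stronglyMeasurable_condExp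
  have he_meas : Measurable[m] e := he_sm.measurable
  have he_nonneg : 0 ≤ᵐ[μ] e := condExp_nonneg (ae_of_all _ fun ω => (hf0 ω).le)
  -- positivity of e a.e.
  have he_pos : ∀ᵐ ω ∂μ, 0 < e ω := by
    have hAneg : MeasurableSet[m] {ω | e ω ≤ 0} := he_meas measurableSet_Iic
    have h1 : ∫ ω in {ω | e ω ≤ 0}, e ω ∂μ = ∫ ω in {ω | e ω ≤ 0}, f ω ∂μ :=
      setIntegral_condExp hm hfi hAneg
    have h2 : ∫ ω in {ω | e ω ≤ 0}, e ω ∂μ ≤ 0 :=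
      setIntegral_nonpos (hm _ hAneg) fun ω hω => hω
    have h3 : 0 ≤ ∫ ω in {ω | e ω ≤ 0}, f ω ∂μ :=
      setIntegral_nonneg (hm _ hAneg) fun ω _ => (hf0 ω).le
    have h4 : ∫ ω in {ω | e ω ≤ 0}, f ω ∂μ = 0 := le_antisymm (h1 ▸ h2) h3
    have h5 : f =ᵐ[μ.restrict {ω | e ω ≤ 0}] 0 :=
      (integral_eq_zero_iff_of_nonneg (fun ω => (hf0 ω).le)
        (hfi.restrict (s := {ω | e ω ≤ 0}))).mp h4
    have h6 : μ.restrict {ω | e ω ≤ 0} univ = 0 := by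
      have h7 : μ.restrict {ω | e ω ≤ 0} {ω | f ω ≠ 0} = 0 := by
        simpa [EventuallyEq, ae_iff] using h5
      have huniv : {ω | f ω ≠ 0} = univ := by ext ω; simp [(hf0 ω).ne']
      rwa [huniv] at h7
    have h7 : μ {ω | e ω ≤ 0} = 0 := by rwa [Measure.restrict_apply_univ] at h6
    filter_upwards [measure_eq_zero_iff_ae_notMem.mp h7] with ω hω
    simpa using lt_of_not_ge hω
  -- truncations
  set g : ℕ → Ω → ℝ := fun M ω => max 0 (min (e ω)⁻¹ M) with hg_def
  have hg_meas : ∀ M, Measurable[m] (g M) :=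
    fun M => measurable_const.max (he_meas.inv.min measurable_const)
  have hg_nonneg : ∀ M ω, 0 ≤ g M ω := fun M ω => le_max_left _ _
  have hg_le : ∀ M ω, g M ω ≤ (M : ℝ) := fun M ω =>
    max_le (Nat.cast_nonneg M) (min_le_right _ _)
  have hg_mono : ∀ ω, Monotone fun M => g M ω := fun ω M M' hMM' =>
    max_le_max le_rfl (min_le_min le_rfl (Nat.cast_le.2 hMM'))
  set GA : ℕ → Ω → ℝ := fun M => A.indicator (g M) with hGA_def
  have hGA_sm : ∀ M, StronglyMeasurable[m] (GA M) :=
    fun M => ((hg_meas M).stronglyMeasurable).indicator hA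
  have hGA_nonneg : ∀ M ω, 0 ≤ GA M ω := fun M ω => by
    by_cases h : ω ∈ A <;> simp [GA, indicator_of_mem, indicator_of_notMem, h, hg_nonneg]
  have hGA_bdd : ∀ M ω, ‖GA M ω‖ ≤ (M : ℝ) := fun M ω => by
    rw [Real.norm_eq_abs, abs_of_nonneg (hGA_nonneg M ω)]
    by_cases h : ω ∈ A
    · simpa [GA, indicator_of_mem h] using hg_le M ω
    · simp [GA, indicator_of_notMem h]
  have hGA_mono : ∀ ω, Monotone fun M => GA M ω := fun ω M M' hMM' => by
    by_cases h : ω ∈ A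
    · simpa [GA, indicator_of_mem h] using hg_mono ω hMM'
    · simp [GA, indicator_of_notMem h]
  have hGA_aesm : ∀ M, AEStronglyMeasurable (GA M) μ :=
    fun M => ((hGA_sm M).mono hm).aestronglyMeasurable
  have hprod_int : ∀ M, Integrable (fun ω => GA M ω * f ω) μ :=
    fun M => hfi.bdd_mul (hGA_aesm M) (ae_of_all _ (hGA_bdd M))
  have hint2 : ∀ M, Integrable (fun ω => GA M ω * e ω) μ :=
    fun M => integrable_condExp.bdd_mul (hGA_aesm M) (ae_of_all _ (hGA_bdd M))
  have hpull : ∀ M, μ[fun ω => GA M ω * f ω|m] =ᵐ[μ] fun ω => GA M ω * e ω :=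
    fun M => condExp_mul_of_stronglyMeasurable_left (hGA_sm M) (hprod_int M) hfi
  have hIeq : ∀ M, ∫ ω, GA M ω * f ω ∂μ = ∫ ω, GA M ω * e ω ∂μ := fun M => by
    rw [← integral_condExp hm (f := fun ω => GA M ω * f ω)]
    exact integral_congr_ae (hpull M)
  have hLeq : ∀ M, ∫⁻ ω, ENNReal.ofReal (GA M ω * f ω) ∂μ
      = ∫⁻ ω, ENNReal.ofReal (GA M ω * e ω) ∂μ := fun M => by
    rw [← ofReal_integral_eq_lintegral_ofReal (hprod_int M)
        (ae_of_all _ fun ω => mul_nonneg (hGA_nonneg M ω) (hf0 ω).le),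
      ← ofReal_integral_eq_lintegral_ofReal (hint2 M)
        (he_nonneg.mono fun ω hω => mul_nonneg (hGA_nonneg M ω) hω),
      hIeq]
  -- sup identifications
  have hsup_left : ∀ᵐ ω ∂μ,
      (⨆ M : ℕ, ENNReal.ofReal (GA M ω * f ω))
        = A.indicator (fun ω => ENNReal.ofReal (f ω * (e ω)⁻¹)) ω := by
    filter_upwards [he_nonneg] with ω hω
    have hinv : 0 ≤ (e ω)⁻¹ := inv_nonneg.2 hω
    by_cases hA' : ω ∈ A
    · simp only [GA, indicator_of_mem hA']
      apply le_antisymm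
      · refine iSup_le fun M => ENNReal.ofReal_le_ofReal ?_
        rw [mul_comm (f ω)]
        exact mul_le_mul_of_nonneg_right (max_le hinv (min_le_left _ _)) (hf0 ω).le
      · refine le_iSup_of_le (Nat.ceil (e ω)⁻¹) (le_of_eq ?_)
        rw [mul_comm (f ω)]
        congr 2
        have h1 : (e ω)⁻¹ ≤ ((Nat.ceil (e ω)⁻¹ : ℕ) : ℝ) := Nat.le_ceil _
        rw [hg_def]
        simp only [min_eq_left h1, max_eq_right hinv]
    · simp [GA, indicator_of_notMem hA']
  have hsup_right : ∀ᵐ ω ∂μ,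
      (⨆ M : ℕ, ENNReal.ofReal (GA M ω * e ω))
        = A.indicator (fun _ => (1 : ℝ≥0∞)) ω := by
    filter_upwards [he_pos] with ω hω
    have hinv : 0 ≤ (e ω)⁻¹ := inv_nonneg.2 hω.le
    by_cases hA' : ω ∈ A
    · simp only [GA, indicator_of_mem hA']
      apply le_antisymm
      · refine iSup_le fun M => ?_
        have : g M ω * e ω ≤ (e ω)⁻¹ * e ω :=
          mul_le_mul_of_nonneg_right (max_le hinv (min_le_left _ _)) hω.le
        rw [inv_mul_cancel₀ hω.ne'] at this
        simpa using ENNReal.ofReal_le_ofReal this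
      · refine le_iSup_of_le (Nat.ceil (e ω)⁻¹) (le_of_eq ?_)
        have : g (Nat.ceil (e ω)⁻¹) ω = (e ω)⁻¹ := by
          have h1 : (e ω)⁻¹ ≤ ((Nat.ceil (e ω)⁻¹ : ℕ) : ℝ) := Nat.le_ceil _
          rw [hg_def]
          simp only [min_eq_left h1, max_eq_right hinv]
        rw [this, inv_mul_cancel₀ hω.ne', ENNReal.ofReal_one]
    · simp [GA, indicator_of_notMem hA']
  -- measurability of truncated products
  have hmeas_left : ∀ M : ℕ, AEMeasurable (fun ω => ENNReal.ofReal (GA M ω * f ω)) μ :=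
    fun M => ENNReal.measurable_ofReal.comp_aemeasurable
      (((hGA_sm M).mono hm).measurable.aemeasurable.mul hfi.1.aemeasurable)
  have hmeas_right : ∀ M : ℕ, AEMeasurable (fun ω => ENNReal.ofReal (GA M ω * e ω)) μ :=
    fun M => ENNReal.measurable_ofReal.comp_aemeasurable
      (((hGA_sm M).mono hm).measurable.aemeasurable.mul
        ((he_sm.mono hm).measurable.aemeasurable))
  calc ∫⁻ ω, A.indicator (fun ω => ENNReal.ofReal (f ω * (e ω)⁻¹)) ω ∂μ
      = ∫⁻ ω, ⨆ M : ℕ, ENNReal.ofReal (GA M ω * f ω) ∂μ :=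
        (lintegral_congr_ae hsup_left).symm
    _ = ⨆ M : ℕ, ∫⁻ ω, ENNReal.ofReal (GA M ω * f ω) ∂μ := by
        rw [lintegral_iSup' hmeas_left (ae_of_all _ fun ω M M' h =>
          ENNReal.ofReal_le_ofReal (mul_le_mul_of_nonneg_right (hGA_mono ω h) (hf0 ω).le))]
    _ = ⨆ M : ℕ, ∫⁻ ω, ENNReal.ofReal (GA M ω * e ω) ∂μ := by
        exact iSup_congr hLeq
    _ = ∫⁻ ω, ⨆ M : ℕ, ENNReal.ofReal (GA M ω * e ω) ∂μ := by
        rw [lintegral_iSup' hmeas_right (he_nonneg.mono fun ω hω M M' h =>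
          ENNReal.ofReal_le_ofReal (mul_le_mul_of_nonneg_right (hGA_mono ω h) hω))]
    _ = ∫⁻ ω, A.indicator (fun _ => (1 : ℝ≥0∞)) ω ∂μ := lintegral_congr_ae hsup_right
    _ = μ A := by
        rw [lintegral_indicator_const (hm _ hA)]
        simp

lemma gcb_lintegral_nat {Ω : Type*} {mΩ : MeasurableSpace Ω} (μ : Measure Ω)
    {g : Ω → ℕ} (hg : ∀ k : ℕ, MeasurableSet {ω | k < g ω}) :
    ∫⁻ ω, (g ω : ℝ≥0∞) ∂μ = ∑' k : ℕ, μ {ω | k < g ω} := by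
  have h1 : ∀ ω, (g ω : ℝ≥0∞)
      = ∑' k : ℕ, {ω | k < g ω}.indicator (fun _ => (1 : ℝ≥0∞)) ω := by
    intro ω
    rw [tsum_eq_sum (s := Finset.range (g ω))
      (fun k hk => indicator_of_notMem (by simpa using hk) _)]
    rw [Finset.sum_congr rfl (fun k hk =>
      indicator_of_mem (by simpa using Finset.mem_range.mp hk) _)]
    simp
  calc ∫⁻ ω, (g ω : ℝ≥0∞) ∂μ
      = ∫⁻ ω, ∑' k : ℕ, {ω | k < g ω}.indicator (fun _ => (1 : ℝ≥0∞)) ω ∂μ := by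
        exact lintegral_congr h1
    _ = ∑' k : ℕ, ∫⁻ ω, {ω | k < g ω}.indicator (fun _ => (1 : ℝ≥0∞)) ω ∂μ :=
        lintegral_tsum fun k => (measurable_const.indicator (hg k)).aemeasurable
    _ = ∑' k : ℕ, μ {ω | k < g ω} := by
        refine tsum_congr fun k => ?_
        rw [lintegral_indicator_const (hg k)]
        simp

lemma gcb_vol {a b t : ℝ} (ha : 0 ≤ a) :
    volume (Ioc 0 t ∩ Ico a b) = ENNReal.ofReal (min t b - a) := by
  apply le_antisymm
  · refine le_trans (measure_mono fun x hx => ?_) (le_of_eq Real.volume_Icc)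
    exact ⟨hx.2.1, le_min hx.1.2 hx.2.2.le⟩
  · refine le_trans (le_of_eq Real.volume_Ioo.symm) (measure_mono fun x hx => ?_)
    obtain ⟨hax, hxm⟩ := hx
    exact ⟨⟨ha.trans_lt hax, (lt_min_iff.mp hxm).1.le⟩, hax.le, (lt_min_iff.mp hxm).2⟩

lemma gcb_window {φ : ℝ → ℝ} {L h : ℝ} (hh : 0 < h)
    (hint : ∀ t : ℝ, IntegrableOn φ (Ioc t (t + h)) volume)
    (hφ : Tendsto φ atTop (nhds L)) :
    Tendsto (fun t => ∫ s in Ioc t (t + h), φ s) atTop (nhds (L * h)) := by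
  rw [Metric.tendsto_atTop] at hφ ⊢
  intro ε hε
  obtain ⟨T₀, hT₀⟩ := hφ (ε / (2 * h)) (by positivity)
  refine ⟨T₀, fun t ht => ?_⟩
  have hvol : volume (Ioc t (t + h)) = ENNReal.ofReal h := by
    rw [Real.volume_Ioc]; ring_nf
  haveI : IsFiniteMeasure (volume.restrict (Ioc t (t + h))) :=
    ⟨by rw [Measure.restrict_apply_univ, hvol]; exact ENNReal.ofReal_lt_top⟩
  have hLc : IntegrableOn (fun _ => L) (Ioc t (t + h)) volume :=
    integrableOn_const (by rw [hvol]; exact ENNReal.ofReal_ne_top)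
  have hLh : ∫ _ in Ioc t (t + h), L = L * h := by
    rw [setIntegral_const, measureReal_def, hvol, ENNReal.toReal_ofReal hh.le, smul_eq_mul, mul_comm]
  have key : (∫ s in Ioc t (t + h), φ s) - L * h = ∫ s in Ioc t (t + h), (φ s - L) := by
    rw [integral_sub (hint t) hLc, hLh]
  have hbd : ‖∫ s in Ioc t (t + h), (φ s - L)‖ ≤ ε / (2 * h) * h := by
    have hae : ∀ᵐ s ∂volume.restrict (Ioc t (t + h)), ‖φ s - L‖ ≤ ε / (2 * h) := by
      rw [ae_restrict_iff' measurableSet_Ioc]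
      refine ae_of_all _ fun s hs => ?_
      have := hT₀ s (le_of_lt (lt_of_le_of_lt ht hs.1))
      rw [Real.dist_eq] at this
      exact le_of_lt this
    calc ‖∫ s in Ioc t (t + h), (φ s - L)‖
        ≤ ε / (2 * h) * (volume.restrict (Ioc t (t + h)) univ).toReal :=
          norm_integral_le_of_norm_le_const hae
      _ = ε / (2 * h) * h := by
          rw [Measure.restrict_apply_univ, hvol, ENNReal.toReal_ofReal hh.le]
  rw [Real.dist_eq, key]
  rw [Real.norm_eq_abs] at hbd
  have : ε / (2 * h) * h = ε / 2 := by field_simp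
  rw [this] at hbd
  linarith

lemma gcb_cesaro {φ : ℝ → ℝ} {L : ℝ}
    (hint : ∀ t : ℝ, IntegrableOn φ (Ioc 0 t) volume)
    (hφ : Tendsto φ atTop (nhds L)) :
    Tendsto (fun t => (∫ s in Ioc (0:ℝ) t, φ s) / t) atTop (nhds L) := by
  rw [Metric.tendsto_atTop] at hφ ⊢
  intro ε hε
  obtain ⟨T₀', hT₀'⟩ := hφ (ε / 2) (by positivity)
  set T₀ : ℝ := max T₀' 0 with hT₀_def
  have hT₀0 : 0 ≤ T₀ := le_max_right _ _
  have hT₀ : ∀ s ≥ T₀, |φ s - L| ≤ ε / 2 := fun s hs => by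
    have := hT₀' s (le_trans (le_max_left _ _) hs)
    rw [Real.dist_eq] at this; exact this.le
  set a1 : ℝ := ∫ s in Ioc (0:ℝ) T₀, φ s with ha1
  set C : ℝ := |a1| + |L| * T₀ + 1 with hC
  have hC0 : 0 < C := by positivity
  refine ⟨max (max T₀ 1) (2 * C / ε), fun t ht => ?_⟩
  have htT₀ : T₀ ≤ t := le_trans (le_trans (le_max_left _ _) (le_max_left _ _)) ht
  have ht1 : (1:ℝ) ≤ t := le_trans (le_trans (le_max_right _ _) (le_max_left _ _)) ht
  have ht0 : 0 < t := lt_of_lt_of_le one_pos ht1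
  have htC : 2 * C / ε ≤ t := le_trans (le_max_right _ _) ht
  -- split the integral
  have hI2 : IntegrableOn φ (Ioc T₀ t) volume :=
    (hint t).mono_set (Ioc_subset_Ioc_left hT₀0)
  set D : ℝ := ∫ s in Ioc T₀ t, φ s with hD
  have hsplit : ∫ s in Ioc (0:ℝ) t, φ s = a1 + D := by
    rw [ha1, hD, ← setIntegral_union (Ioc_disjoint_Ioc_of_le le_rfl) measurableSet_Ioc (hint T₀) hI2,
      Ioc_union_Ioc_eq_Ioc hT₀0 htT₀]
  -- estimate middle part
  have hvol : volume (Ioc T₀ t) = ENNReal.ofReal (t - T₀) := Real.volume_Ioc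
  haveI : IsFiniteMeasure (volume.restrict (Ioc T₀ t)) :=
    ⟨by rw [Measure.restrict_apply_univ, hvol]; exact ENNReal.ofReal_lt_top⟩
  have hLc : IntegrableOn (fun _ => L) (Ioc T₀ t) volume :=
    integrableOn_const (by rw [hvol]; exact ENNReal.ofReal_ne_top)
  have hLt : ∫ _ in Ioc T₀ t, L = L * (t - T₀) := by
    rw [setIntegral_const, measureReal_def, hvol, ENNReal.toReal_ofReal (by linarith), smul_eq_mul, mul_comm]
  have h2 : |D - L * (t - T₀)| ≤ ε / 2 * (t - T₀) := by
    have key : D - L * (t - T₀) = ∫ s in Ioc T₀ t, (φ s - L) := by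
      rw [hD, integral_sub hI2 hLc, hLt]
    rw [key, ← Real.norm_eq_abs]
    have hae : ∀ᵐ s ∂volume.restrict (Ioc T₀ t), ‖φ s - L‖ ≤ ε / 2 := by
      rw [ae_restrict_iff' measurableSet_Ioc]
      exact ae_of_all _ fun s hs => by
        simpa [Real.norm_eq_abs] using hT₀ s hs.1.le
    calc ‖∫ s in Ioc T₀ t, (φ s - L)‖
        ≤ ε / 2 * (volume.restrict (Ioc T₀ t) univ).toReal :=
          norm_integral_le_of_norm_le_const hae
      _ = ε / 2 * (t - T₀) := by
          rw [Measure.restrict_apply_univ, hvol, ENNReal.toReal_ofReal (by linarith)]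
  -- combine
  have hLT : L * T₀ ≤ |L| * T₀ ∧ -(|L| * T₀) ≤ L * T₀ := by
    constructor
    · exact mul_le_mul_of_nonneg_right (le_abs_self L) hT₀0
    · have := mul_le_mul_of_nonneg_right (neg_abs_le L) hT₀0
      linarith
  have hnum : |a1 + D - L * t| ≤ C - 1 + ε / 2 * t := by
    rw [abs_le]
    have h2' := abs_le.mp h2
    have ha1' := abs_le.mp (le_refl |a1|)
    constructor <;> nlinarith [abs_nonneg a1, hε.le, hT₀0, htT₀]
  have hC2 : C ≤ ε / 2 * t := by
    have h' : ε / 2 * (2 * C / ε) = C := by field_simp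
    calc C = ε / 2 * (2 * C / ε) := h'.symm
      _ ≤ ε / 2 * t := mul_le_mul_of_nonneg_left htC (by positivity)
  rw [Real.dist_eq, hsplit]
  have heq : (a1 + D) / t - L = (a1 + D - L * t) / t := by field_simp
  rw [heq, abs_div, abs_of_pos ht0]
  calc |a1 + D - L * t| / t ≤ (C - 1 + ε / 2 * t) / t := (div_le_div_iff_of_pos_right ht0).mpr hnum
    _ < ε := by
      rw [div_lt_iff₀ ht0]
      nlinarith

/-- Extended Blackwell theorem for a general counting process (Theorem 5.1):
if `E[λ̃⁽ᵛ⁾(t) 1(R(t) ≤ v)] → λ⁽ᵛ⁾ > 0` and `E[λ̃⁽ᵛ⁾(t)(v ∧ R(t))]` converges to a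
finite positive limit, then `E[N(t)]/t → λ⁽ᵛ⁾` and
`E[N(t+h)] - E[N(t)] → λ⁽ᵛ⁾ h` for every `0 < h < ∞`. -/
theorem general_counting_blackwell
    {Ω : Type*} {mΩ : MeasurableSpace Ω} (μ : Measure Ω) [IsProbabilityMeasure μ]
    (𝔽 : Filtration ℝ mΩ)
    (N : ℝ → Ω → ℕ) (tn : ℕ → Ω → ℝ) (R : ℝ → Ω → ℝ) (v lamv c : ℝ)
    (G : ℕ → MeasurableSpace Ω)
    (hv : 0 < v)
    (htn0 : ∀ ω, tn 0 ω = 0)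
    (htn_mono : ∀ ω, StrictMono (fun n => tn n ω))
    (hst : ∀ n, IsStoppingTime 𝔽 (fun ω => (tn n ω : WithTop ℝ)))
    (hTint : ∀ n, Integrable (fun ω => tn (n+1) ω - tn n ω) μ)
    (hN : ∀ (t : ℝ) (ω : Ω) (n : ℕ), n < N t ω ↔ tn n ω ≤ t)
    (hNint : ∀ t : ℝ, 0 ≤ t → Integrable (fun ω => (N t ω : ℝ)) μ)
    (hR : ∀ t : ℝ, ∀ ω, R t ω = tn (N t ω) ω - t)
    (hG : ∀ n, G n = MeasurableSpace.generateFrom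
        {s | ∃ t : ℝ, ∃ A : Set Ω, MeasurableSet[𝔽 t] A ∧ s = A ∩ {ω | t < tn n ω}})
    (hGle : ∀ n, G n ≤ mΩ)
    (hnat : ∀ t : ℝ,
      (⨆ s ∈ Set.Iic t, MeasurableSpace.comap (fun ω => (N s ω, R s ω)) inferInstance)
        ≤ (𝔽 t : MeasurableSpace Ω))
    (hlamv : 0 < lamv) (hcpos : 0 < c)
    (hconv1 : Tendsto (fun t : ℝ =>
        ∫ ω, ((μ[(fun ω' => min v (tn (N t ω) ω' - tn (N t ω - 1) ω'))|G (N t ω - 1)]) ω)⁻¹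
              * (if R t ω ≤ v then (1:ℝ) else 0) ∂μ)
      atTop (nhds lamv))
    (hconv2 : Tendsto (fun t : ℝ =>
        ∫ ω, ((μ[(fun ω' => min v (tn (N t ω) ω' - tn (N t ω - 1) ω'))|G (N t ω - 1)]) ω)⁻¹
              * min v (R t ω) ∂μ)
      atTop (nhds c)) :
    Tendsto (fun t : ℝ => (∫ ω, (N t ω : ℝ) ∂μ) / t) atTop (nhds lamv) ∧
    ∀ h : ℝ, 0 < h →
      Tendsto (fun t : ℝ => (∫ ω, (N (t + h) ω : ℝ) ∂μ) - ∫ ω, (N t ω : ℝ) ∂μ)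
        atTop (nhds (lamv * h)) := by
  classical
  have htn_meas : ∀ n, Measurable (tn n) := by
    intro n
    apply measurable_of_Iic
    intro x
    have hx := 𝔽.le x _ (hst n x)
    simp only [WithTop.coe_le_coe] at hx
    exact hx
  have htn_nonneg : ∀ n ω, 0 ≤ tn n ω := by
    intro n ω
    have h := (htn_mono ω).monotone (Nat.zero_le n)
    simpa [htn0 ω] using h
  have hNgt : ∀ t ω, t < tn (N t ω) ω := by
    intro t ω
    by_contra h
    push_neg at h
    exact lt_irrefl _ ((hN t ω (N t ω)).mpr h)
  have hNpos : ∀ t ω, 0 ≤ t → 1 ≤ N t ω := fun t ω ht =>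
    (hN t ω 0).mpr (by rw [htn0]; exact ht)
  have hNmono : ∀ s t ω, s ≤ t → N s ω ≤ N t ω := by
    intro s t ω hst'
    by_contra h
    push_neg at h
    have h1 : tn (N t ω) ω ≤ s := (hN s ω _).mp h
    exact absurd ((hN t ω _).mpr (h1.trans hst')) (lt_irrefl _)
  have hNzero : ∀ t ω, N t ω = 0 ↔ t < 0 := by
    intro t ω
    constructor
    · intro h
      by_contra hc
      push_neg at hc
      have := hNpos t ω hc
      omega
    · intro h
      by_contra hc
      have h1 : 0 < N t ω := Nat.pos_of_ne_zero hc
      have := (hN t ω 0).mp h1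
      rw [htn0] at this
      linarith
  have hNeq : ∀ t ω (k : ℕ), N t ω = k + 1 ↔ (tn k ω ≤ t ∧ ¬ tn (k+1) ω ≤ t) := by
    intro t ω k
    constructor
    · intro h
      refine ⟨(hN t ω k).mp (by omega), fun hc => ?_⟩
      have := (hN t ω (k+1)).mpr hc
      omega
    · rintro ⟨h1, h2⟩
      have ha := (hN t ω k).mpr h1
      have hb : ¬ (k+1 < N t ω) := fun hc => h2 ((hN t ω (k+1)).mp hc)
      omega
  have hNj : Measurable (fun p : ℝ × Ω => N p.1 p.2) := by
    apply measurable_to_countable'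
    intro k
    cases k with
    | zero =>
      have h1 : (fun p : ℝ × Ω => N p.1 p.2) ⁻¹' {0} = (fun p : ℝ × Ω => p.1) ⁻¹' Iio 0 := by
        ext p
        simp [hNzero]
      rw [h1]
      exact measurable_fst measurableSet_Iio
    | succ k =>
      have h1 : (fun p : ℝ × Ω => N p.1 p.2) ⁻¹' {k+1}
          = ((fun p : ℝ × Ω => tn k p.2 - p.1) ⁻¹' Iic 0)
            ∩ ((fun p : ℝ × Ω => tn (k+1) p.2 - p.1) ⁻¹' Iic 0)ᶜ := by
        ext p
        simp [hNeq, sub_nonpos]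
      rw [h1]
      have hm1 : Measurable (fun p : ℝ × Ω => tn k p.2 - p.1) :=
        ((htn_meas k).comp measurable_snd).sub measurable_fst
      have hm2 : Measurable (fun p : ℝ × Ω => tn (k+1) p.2 - p.1) :=
        ((htn_meas (k+1)).comp measurable_snd).sub measurable_fst
      exact (hm1 measurableSet_Iic).inter (hm2 measurableSet_Iic).compl
  -- conditional-expectation intensities
  set f : ℕ → Ω → ℝ := fun k ω => min v (tn k ω - tn (k-1) ω) with hf_def
  set e : ℕ → Ω → ℝ := fun k => μ[f k|G (k-1)] with he_def
  set L : ℕ → Ω → ℝ := fun k ω => (e k ω)⁻¹ with hL_def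
  have hf_eq : ∀ (k : ℕ) (ω : Ω), f k ω = min v (tn k ω - tn (k-1) ω) := fun k ω => rfl
  have hf_nonneg : ∀ k ω, 0 ≤ f k ω := fun k ω =>
    le_min hv.le (sub_nonneg.2 ((htn_mono ω).monotone (Nat.sub_le k 1)))
  have hf_pos : ∀ k, 1 ≤ k → ∀ ω, 0 < f k ω := fun k hk ω =>
    lt_min hv (sub_pos.2 (htn_mono ω (Nat.sub_lt hk one_pos)))
  have hf_le : ∀ k ω, f k ω ≤ v := fun k ω => min_le_left _ _
  have hf_meas : ∀ k, Measurable (f k) := fun k =>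
    measurable_const.min ((htn_meas k).sub (htn_meas (k-1)))
  have hf_int : ∀ k, Integrable (f k) μ := fun k =>
    Integrable.mono' (integrable_const v) (hf_meas k).aestronglyMeasurable
      (ae_of_all _ fun ω => by
        rw [Real.norm_eq_abs, abs_of_nonneg (hf_nonneg k ω)]; exact hf_le k ω)
  have hL_meas : ∀ k, Measurable (L k) := fun k =>
    ((stronglyMeasurable_condExp.mono (hGle (k-1))).measurable).inv
  have hL_nonneg_ae : ∀ᵐ ω ∂μ, ∀ k, 0 ≤ L k ω := by
    rw [ae_all_iff]
    intro k
    filter_upwards [condExp_nonneg (μ := μ) (m := G (k-1)) (f := f k)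
      (ae_of_all _ (hf_nonneg k))] with ω hω
    exact inv_nonneg.2 hω
  have hf0_zero : f 0 = (fun _ : Ω => (0:ℝ)) := by
    funext ω
    rw [hf_eq]
    simp [htn0 ω, min_eq_right hv.le]
  have hL0 : ∀ ω, L 0 ω = 0 := by
    intro ω
    have he0 : e 0 = 0 := by
      calc e 0 = μ[(fun _ : Ω => (0:ℝ))|G (0-1)] := by rw [he_def]; simp only []; rw [hf0_zero]
        _ = 0 := condExp_zero
    rw [hL_def]
    simp only [he0, Pi.zero_apply, inv_zero]
  have hA_mem : ∀ (j : ℕ) (t : ℝ), MeasurableSet[G j] {ω | tn j ω ≤ t} := by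
    intro j t
    have h1 : MeasurableSet[G j] {ω | t < tn j ω} := by
      rw [hG j]
      exact MeasurableSpace.measurableSet_generateFrom
        ⟨t, univ, MeasurableSet.univ, (univ_inter _).symm⟩
    have h2 : {ω | tn j ω ≤ t} = {ω | t < tn j ω}ᶜ := by
      ext ω; simp [not_lt]
    rw [h2]
    exact h1.compl
  have hperk : ∀ (j : ℕ) (t : ℝ),
      ∫⁻ ω, {ω' | tn j ω' ≤ t}.indicator
        (fun ω' => ENNReal.ofReal (f (j+1) ω' * L (j+1) ω')) ω ∂μ
        = μ {ω | tn j ω ≤ t} := by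
    intro j t
    exact gcb_aux_pullout (hGle j) μ (hf_pos (j+1) (Nat.succ_le_succ (Nat.zero_le j)))
      (hf_int (j+1)) (hA_mem j t)
  -- the pointwise semimartingale identity
  have hpointwise : ∀ (t : ℝ), 0 ≤ t → ∀ ω,
      (∫⁻ s in Ioc (0:ℝ) t,
          ENNReal.ofReal (L (N s ω) ω * (if tn (N s ω) ω - s ≤ v then (1:ℝ) else 0)))
        + ENNReal.ofReal (L (N t ω) ω * min v (tn (N t ω) ω - t))
        = ∑' j : ℕ, {ω' | tn j ω' ≤ t}.indicator
            (fun ω' => ENNReal.ofReal (f (j+1) ω' * L (j+1) ω')) ω := by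
    intro t ht ω
    set n := N t ω with hn
    have hn1 : 1 ≤ n := hNpos t ω ht
    -- RHS as finite sum
    have hRHS : (∑' j : ℕ, {ω' | tn j ω' ≤ t}.indicator
          (fun ω' => ENNReal.ofReal (f (j+1) ω' * L (j+1) ω')) ω)
        = ∑ j ∈ Finset.range n, ENNReal.ofReal (f (j+1) ω * L (j+1) ω) := by
      have hvan : ∀ j ∉ Finset.range n, {ω' | tn j ω' ≤ t}.indicator
          (fun ω' => ENNReal.ofReal (f (j+1) ω' * L (j+1) ω')) ω = 0 := fun j hj =>
        indicator_of_notMem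
          (show ω ∉ {ω' | tn j ω' ≤ t} from
            fun hc => hj (Finset.mem_range.mpr ((hN t ω j).mpr hc))) _
      rw [tsum_eq_sum hvan]
      refine Finset.sum_congr rfl fun j hj => ?_
      exact indicator_of_mem
        (show ω ∈ {ω' | tn j ω' ≤ t} from (hN t ω j).mp (Finset.mem_range.mp hj)) _
    -- decomposition of the integrand over s
    have hdecomp : (fun s => (Ioc (0:ℝ) t).indicator
          (fun s => ENNReal.ofReal (L (N s ω) ω * (if tn (N s ω) ω - s ≤ v then (1:ℝ) else 0))) s)
        = fun s => ∑ j ∈ Finset.range n,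
            (Ioc (0:ℝ) t ∩ Ico (tn j ω) (tn (j+1) ω)).indicator
              (fun s => if tn (j+1) ω - s ≤ v then ENNReal.ofReal (L (j+1) ω) else 0) s := by
      funext s
      by_cases hs : s ∈ Ioc (0:ℝ) t
      · rw [indicator_of_mem hs]
        set m := N s ω with hm
        have hm1 : 1 ≤ m := hNpos s ω (le_of_lt hs.1)
        have hmn : m ≤ n := hNmono s t ω hs.2
        have hs1 : tn (m-1) ω ≤ s := (hN s ω (m-1)).mp (Nat.sub_lt hm1 one_pos)
        have hs2 : ¬ tn m ω ≤ s := fun hc => lt_irrefl m ((hN s ω m).mpr hc)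
        rw [Finset.sum_eq_single (m-1)]
        · rw [indicator_of_mem]
          · rw [Nat.sub_add_cancel hm1]
            split_ifs with hc
            · rw [mul_one]
            · rw [mul_zero, ENNReal.ofReal_zero]
          · refine ⟨hs, ?_, ?_⟩
            · exact hs1
            · rw [Nat.sub_add_cancel hm1]; exact lt_of_not_ge hs2
        · intro j hj hjm
          apply indicator_of_notMem
          rintro ⟨-, hj1, hj2⟩
          have h1 : j < m := (hN s ω j).mpr hj1
          have h2 : ¬ (j+1 < m) := fun hc => absurd ((hN s ω (j+1)).mp hc) (not_le.mpr hj2)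
          omega
        · intro hc
          exact absurd (Finset.mem_range.mpr (by omega)) hc
      · rw [indicator_of_notMem hs]
        symm
        apply Finset.sum_eq_zero
        intro j hj
        exact indicator_of_notMem (fun hc => hs hc.1) _
    -- ite to indicator
    have hfun : ∀ j : ℕ, (fun s : ℝ => if tn (j+1) ω - s ≤ v then ENNReal.ofReal (L (j+1) ω) else 0)
        = (Ici (tn (j+1) ω - v)).indicator (fun _ => ENNReal.ofReal (L (j+1) ω)) := by
      intro j
      funext s
      by_cases hc : tn (j+1) ω - s ≤ v
      · rw [if_pos hc, indicator_of_mem (by rwa [mem_Ici, ← sub_le_comm])]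
      · rw [if_neg hc, indicator_of_notMem (by rwa [mem_Ici, ← sub_le_comm])]
    -- compute the inner integral
    have hLHS : (∫⁻ s in Ioc (0:ℝ) t,
          ENNReal.ofReal (L (N s ω) ω * (if tn (N s ω) ω - s ≤ v then (1:ℝ) else 0)))
        = ∑ j ∈ Finset.range n, ENNReal.ofReal (L (j+1) ω)
            * ENNReal.ofReal (min t (tn (j+1) ω) - max (tn j ω) (tn (j+1) ω - v)) := by
      rw [← lintegral_indicator measurableSet_Ioc, hdecomp, lintegral_finset_sum]
      · refine Finset.sum_congr rfl fun j hj => ?_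
        rw [hfun j, lintegral_indicator (measurableSet_Ioc.inter measurableSet_Ico),
          lintegral_indicator measurableSet_Ici, Measure.restrict_restrict measurableSet_Ici,
          setLIntegral_const]
        have hseteq : Ici (tn (j+1) ω - v) ∩ (Ioc 0 t ∩ Ico (tn j ω) (tn (j+1) ω))
            = Ioc 0 t ∩ Ico (max (tn j ω) (tn (j+1) ω - v)) (tn (j+1) ω) := by
          ext s
          simp only [mem_inter_iff, mem_Ici, mem_Ioc, mem_Ico, max_le_iff]
          tauto
        rw [hseteq, gcb_vol (le_max_of_le_left (htn_nonneg j ω))]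
      · intro j hj
        rw [hfun j]
        exact (measurable_const.indicator measurableSet_Ici).indicator
          (measurableSet_Ioc.inter measurableSet_Ico)
    -- combine
    rw [hLHS, hRHS]
    obtain ⟨n', hn'⟩ : ∃ n', n = n' + 1 := ⟨n - 1, (Nat.sub_add_cancel hn1).symm⟩
    have hNtn : N t ω = n' + 1 := hn.symm.trans hn'
    have htb : t < tn (n'+1) ω := hNtn ▸ hNgt t ω
    have hta : tn n' ω ≤ t := (hN t ω n').mp (by omega)
    rw [hn', Finset.sum_range_succ, Finset.sum_range_succ]
    have hterm : ∀ j ∈ Finset.range n',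
        ENNReal.ofReal (L (j+1) ω)
          * ENNReal.ofReal (min t (tn (j+1) ω) - max (tn j ω) (tn (j+1) ω - v))
        = ENNReal.ofReal (f (j+1) ω * L (j+1) ω) := by
      intro j hj
      have hj1 : j + 1 < N t ω := by
        have := Finset.mem_range.mp hj; omega
      have hle : tn (j+1) ω ≤ t := (hN t ω (j+1)).mp hj1
      have harith : min t (tn (j+1) ω) - max (tn j ω) (tn (j+1) ω - v) = f (j+1) ω := by
        rw [hf_eq]
        have h1 : (j + 1 : ℕ) - 1 = j := by omega
        rw [h1, min_eq_right hle]
        rcases le_total (tn j ω) (tn (j+1) ω - v) with h|h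
        · rw [max_eq_right h, min_eq_left (by linarith)]
          ring
        · rw [max_eq_left h, min_eq_right (by linarith)]
      rw [harith, mul_comm, ← ENNReal.ofReal_mul (hf_nonneg _ ω)]
    rw [Finset.sum_congr rfl hterm, add_assoc]
    congr 1
    -- last term
    have hF : f (n'+1) ω = min v (tn (n'+1) ω - tn n' ω) := by
      rw [hf_eq]
      have h1 : (n' + 1 : ℕ) - 1 = n' := by omega
      rw [h1]
    have hY0 : (0:ℝ) ≤ min v (tn (n'+1) ω - t) := le_min hv.le (by linarith)
    have key : ENNReal.ofReal (min t (tn (n'+1) ω) - max (tn n' ω) (tn (n'+1) ω - v))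
        + ENNReal.ofReal (min v (tn (n'+1) ω - t))
        = ENNReal.ofReal (min v (tn (n'+1) ω - tn n' ω)) := by
      rw [min_eq_left htb.le]
      rcases le_total (tn (n'+1) ω - v) (tn n' ω) with h|h
      · rw [max_eq_left h, min_eq_right (by linarith : tn (n'+1) ω - t ≤ v),
          min_eq_right (by linarith : tn (n'+1) ω - tn n' ω ≤ v),
          ← ENNReal.ofReal_add (by linarith) (by linarith)]
        congr 1
        ring
      · rw [max_eq_right h, min_eq_left (by linarith : v ≤ tn (n'+1) ω - tn n' ω)]
        rcases le_total (tn (n'+1) ω - v) t with h2|h2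
        · rw [min_eq_right (by linarith : tn (n'+1) ω - t ≤ v),
            ← ENNReal.ofReal_add (by linarith) (by linarith)]
          congr 1
          ring
        · rw [min_eq_left (by linarith : v ≤ tn (n'+1) ω - t),
            ENNReal.ofReal_of_nonpos (by linarith : t - (tn (n'+1) ω - v) ≤ 0),
            zero_add]
    calc ENNReal.ofReal (L (n'+1) ω)
          * ENNReal.ofReal (min t (tn (n'+1) ω) - max (tn n' ω) (tn (n'+1) ω - v))
        + ENNReal.ofReal (L (n'+1) ω * min v (tn (n'+1) ω - t))
        = (ENNReal.ofReal (min t (tn (n'+1) ω) - max (tn n' ω) (tn (n'+1) ω - v))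
            + ENNReal.ofReal (min v (tn (n'+1) ω - t))) * ENNReal.ofReal (L (n'+1) ω) := by
          rw [add_mul, mul_comm]
          congr 1
          rw [mul_comm (L (n'+1) ω), ENNReal.ofReal_mul hY0]
      _ = ENNReal.ofReal (min v (tn (n'+1) ω - tn n' ω)) * ENNReal.ofReal (L (n'+1) ω) := by
          rw [key]
      _ = ENNReal.ofReal (f (n'+1) ω * L (n'+1) ω) := by
          rw [← hF, ENNReal.ofReal_mul (hf_nonneg _ ω)]
  -- rewrite the convergence hypotheses
  have hconv1' : Tendsto (fun t : ℝ =>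
      ∫ ω, L (N t ω) ω * (if tn (N t ω) ω - t ≤ v then (1:ℝ) else 0) ∂μ)
      atTop (nhds lamv) := by
    have heq : (fun t : ℝ =>
        ∫ ω, L (N t ω) ω * (if tn (N t ω) ω - t ≤ v then (1:ℝ) else 0) ∂μ)
        = fun t : ℝ => ∫ ω, ((μ[(fun ω' => min v (tn (N t ω) ω' - tn (N t ω - 1) ω'))|G
            (N t ω - 1)]) ω)⁻¹ * (if R t ω ≤ v then (1:ℝ) else 0) ∂μ := by
      funext t
      apply integral_congr_ae
      apply ae_of_all
      intro ω
      simp only [hR]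
      rfl
    rw [heq]
    exact hconv1
  have hconv2' : Tendsto (fun t : ℝ =>
      ∫ ω, L (N t ω) ω * min v (tn (N t ω) ω - t) ∂μ) atTop (nhds c) := by
    have heq : (fun t : ℝ => ∫ ω, L (N t ω) ω * min v (tn (N t ω) ω - t) ∂μ)
        = fun t : ℝ => ∫ ω, ((μ[(fun ω' => min v (tn (N t ω) ω' - tn (N t ω - 1) ω'))|G
            (N t ω - 1)]) ω)⁻¹ * min v (R t ω) ∂μ := by
      funext t
      apply integral_congr_ae
      apply ae_of_all
      intro ω
      simp only [hR]
      rfl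
    rw [heq]
    exact hconv2
  set Jr : ℝ → Ω → ℝ :=
    fun s ω => L (N s ω) ω * (if tn (N s ω) ω - s ≤ v then (1:ℝ) else 0) with hJr_def
  set Br : ℝ → Ω → ℝ := fun t ω => L (N t ω) ω * min v (tn (N t ω) ω - t) with hBr_def
  -- joint measurability
  have hLNj : Measurable (fun p : ℝ × Ω => L (N p.1 p.2) p.2) := by
    have h1 : Measurable (fun q : Ω × ℕ => L q.2 q.1) :=
      measurable_from_prod_countable_left fun k => hL_meas k
    exact h1.comp (measurable_snd.prodMk hNj)
  have htnNj : Measurable (fun p : ℝ × Ω => tn (N p.1 p.2) p.2) := by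
    have h1 : Measurable (fun q : Ω × ℕ => tn q.2 q.1) :=
      measurable_from_prod_countable_left fun k => htn_meas k
    exact h1.comp (measurable_snd.prodMk hNj)
  have hJr_j : Measurable (Function.uncurry Jr) := by
    show Measurable fun p : ℝ × Ω =>
      L (N p.1 p.2) p.2 * (if tn (N p.1 p.2) p.2 - p.1 ≤ v then (1:ℝ) else 0)
    apply hLNj.mul
    exact Measurable.ite ((htnNj.sub measurable_fst) measurableSet_Iic)
      measurable_const measurable_const
  have hBr_j : Measurable (Function.uncurry Br) := by
    show Measurable fun p : ℝ × Ω =>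
      L (N p.1 p.2) p.2 * min v (tn (N p.1 p.2) p.2 - p.1)
    exact hLNj.mul (measurable_const.min (htnNj.sub measurable_fst))
  have hJr_t : ∀ t, Measurable (Jr t) :=
    fun t => hJr_j.comp (measurable_const.prodMk measurable_id)
  have hBr_t : ∀ t, Measurable (Br t) :=
    fun t => hBr_j.comp (measurable_const.prodMk measurable_id)
  -- ENNReal versions
  have hJj : Measurable (Function.uncurry fun s ω => ENNReal.ofReal (Jr s ω)) :=
    ENNReal.measurable_ofReal.comp hJr_j
  -- KEY identity
  have hKEY : ∀ t : ℝ, 0 ≤ t →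
      (∫⁻ ω, (∫⁻ s in Ioc (0:ℝ) t, ENNReal.ofReal (Jr s ω))
        + ENNReal.ofReal (Br t ω) ∂μ) = ∫⁻ ω, (N t ω : ℝ≥0∞) ∂μ := by
    intro t ht
    calc ∫⁻ ω, (∫⁻ s in Ioc (0:ℝ) t, ENNReal.ofReal (Jr s ω)) + ENNReal.ofReal (Br t ω) ∂μ
        = ∫⁻ ω, ∑' j : ℕ, {ω' | tn j ω' ≤ t}.indicator
            (fun ω' => ENNReal.ofReal (f (j+1) ω' * L (j+1) ω')) ω ∂μ :=
          lintegral_congr (hpointwise t ht)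
      _ = ∑' j : ℕ, ∫⁻ ω, {ω' | tn j ω' ≤ t}.indicator
            (fun ω' => ENNReal.ofReal (f (j+1) ω' * L (j+1) ω')) ω ∂μ :=
          lintegral_tsum fun j =>
            ((ENNReal.measurable_ofReal.comp
              ((hf_meas (j+1)).mul (hL_meas (j+1)))).indicator
              ((htn_meas j) measurableSet_Iic)).aemeasurable
      _ = ∑' j : ℕ, μ {ω | tn j ω ≤ t} := tsum_congr fun j => hperk j t
      _ = ∑' j : ℕ, μ {ω | j < N t ω} := by
          refine tsum_congr fun j => ?_
          congr 1
          ext ω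
          simp [hN t ω j]
      _ = ∫⁻ ω, (N t ω : ℝ≥0∞) ∂μ :=
          (gcb_lintegral_nat μ fun k => by
            have : {ω | k < N t ω} = {ω | tn k ω ≤ t} := by ext ω; simp [hN t ω k]
            rw [this]
            exact (htn_meas k) measurableSet_Iic).symm
  -- Tonelli
  have hswap : ∀ t : ℝ,
      ∫⁻ ω, (∫⁻ s in Ioc (0:ℝ) t, ENNReal.ofReal (Jr s ω)) ∂μ
        = ∫⁻ s in Ioc (0:ℝ) t, (∫⁻ ω, ENNReal.ofReal (Jr s ω) ∂μ) := by
    intro t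
    exact lintegral_lintegral_swap ((hJj.comp measurable_swap).aemeasurable)
  set F : ℝ → ℝ≥0∞ := fun s => ∫⁻ ω, ENNReal.ofReal (Jr s ω) ∂μ with hF_def
  have hF_meas : Measurable F := Measurable.lintegral_prod_right' (f := fun p : ℝ × Ω => ENNReal.ofReal (Jr p.1 p.2)) hJj
  set Gg : ℝ → ℝ≥0∞ := fun t => ∫⁻ ω, ENNReal.ofReal (Br t ω) ∂μ with hGg_def
  have hKEY2 : ∀ t : ℝ, 0 ≤ t →
      (∫⁻ s in Ioc (0:ℝ) t, F s) + Gg t = ∫⁻ ω, (N t ω : ℝ≥0∞) ∂μ := by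
    intro t ht
    rw [← hswap t, ← hKEY t ht]
    rw [← lintegral_add_right]
    exact (ENNReal.measurable_ofReal.comp (hBr_t t))
  -- finiteness
  have hMfin : ∀ t : ℝ, 0 ≤ t → ∫⁻ ω, (N t ω : ℝ≥0∞) ∂μ < ∞ := by
    intro t ht
    have h1 := (hNint t ht).lintegral_lt_top
    refine lt_of_le_of_lt (le_of_eq (lintegral_congr fun ω => ?_)) h1
    rw [ENNReal.ofReal_natCast]
  have hFfin : ∀ t : ℝ, 0 ≤ t → (∫⁻ s in Ioc (0:ℝ) t, F s) ≠ ∞ := fun t ht =>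
    ne_of_lt (lt_of_le_of_lt (le_trans le_self_add (le_of_eq (hKEY2 t ht))) (hMfin t ht))
  have hGfin : ∀ t : ℝ, 0 ≤ t → Gg t ≠ ∞ := fun t ht =>
    ne_of_lt (lt_of_le_of_lt (le_trans le_add_self (le_of_eq (hKEY2 t ht))) (hMfin t ht))
  -- Bochner bridges
  have hJr_nonneg : ∀ t, 0 ≤ᵐ[μ] Jr t := by
    intro t
    filter_upwards [hL_nonneg_ae] with ω hω
    exact mul_nonneg (hω _) (by split_ifs <;> norm_num)
  have hBr_nonneg : ∀ t, 0 ≤ᵐ[μ] Br t := by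
    intro t
    filter_upwards [hL_nonneg_ae] with ω hω
    exact mul_nonneg (hω _) (le_min hv.le (sub_nonneg.2 (hNgt t ω).le))
  set φ1 : ℝ → ℝ := fun s => (F s).toReal with hφ1_def
  set φ2 : ℝ → ℝ := fun t => (Gg t).toReal with hφ2_def
  have hbridge1 : ∀ t, (∫ ω, Jr t ω ∂μ) = φ1 t := by
    intro t
    rw [integral_eq_lintegral_of_nonneg_ae (hJr_nonneg t) (hJr_t t).aestronglyMeasurable]
  have hbridge2 : ∀ t, (∫ ω, Br t ω ∂μ) = φ2 t := by
    intro t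
    rw [integral_eq_lintegral_of_nonneg_ae (hBr_nonneg t) (hBr_t t).aestronglyMeasurable]
  have hm_eq : ∀ t, 0 ≤ t →
      (∫ ω, (N t ω : ℝ) ∂μ) = (∫⁻ ω, (N t ω : ℝ≥0∞) ∂μ).toReal := by
    intro t ht
    rw [integral_eq_lintegral_of_nonneg_ae (ae_of_all _ fun ω => Nat.cast_nonneg _)
      (hNint t ht).1]
    congr 1
    exact lintegral_congr fun ω => ENNReal.ofReal_natCast _
  have hφ1_intOn : ∀ t : ℝ, 0 ≤ t → IntegrableOn φ1 (Ioc 0 t) volume := fun t ht =>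
    integrable_toReal_of_lintegral_ne_top hF_meas.aemeasurable.restrict (hFfin t ht)
  have hφ1_int' : ∀ t : ℝ, IntegrableOn φ1 (Ioc 0 t) volume := by
    intro t
    rcases le_or_gt 0 t with h|h
    · exact hφ1_intOn t h
    · rw [Ioc_eq_empty (by intro hc; linarith)]
      exact integrableOn_empty
  have hreal : ∀ t : ℝ, 0 ≤ t →
      (∫ ω, (N t ω : ℝ) ∂μ) = (∫ s in Ioc (0:ℝ) t, φ1 s) + φ2 t := by
    intro t ht
    rw [hm_eq t ht, ← hKEY2 t ht, ENNReal.toReal_add (hFfin t ht) (hGfin t ht)]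
    congr 1
    rw [integral_toReal hF_meas.aemeasurable.restrict
      (ae_lt_top' hF_meas.aemeasurable.restrict (hFfin t ht))]
  -- limit statements in terms of φ1, φ2
  have hconv1'' : Tendsto φ1 atTop (nhds lamv) := by
    have heq : (fun t : ℝ => ∫ ω, Jr t ω ∂μ) = φ1 := funext hbridge1
    rw [← heq]
    exact hconv1'
  have hconv2'' : Tendsto φ2 atTop (nhds c) := by
    have heq : (fun t : ℝ => ∫ ω, Br t ω ∂μ) = φ2 := funext hbridge2
    rw [← heq]
    exact hconv2'
  constructor
  · have h1 : Tendsto (fun t => (∫ s in Ioc (0:ℝ) t, φ1 s) / t) atTop (nhds lamv) :=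
      gcb_cesaro hφ1_int' hconv1''
    have h2 : Tendsto (fun t => φ2 t / t) atTop (nhds 0) :=
      hconv2''.div_atTop tendsto_id
    have h3 := h1.add h2
    rw [add_zero] at h3
    apply Filter.Tendsto.congr' _ h3
    filter_upwards [eventually_ge_atTop (0:ℝ)] with t ht
    rw [hreal t ht, add_div]
  · intro h hh
    -- φ1 vanishes on negatives
    have hφ1_zero : ∀ s : ℝ, s < 0 → φ1 s = 0 := by
      intro s hs
      have hFz : F s = 0 := by
        rw [hF_def]
        simp only []
        have : ∀ ω, ENNReal.ofReal (Jr s ω) = 0 := by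
          intro ω
          have hNs : N s ω = 0 := (hNzero s ω).mpr hs
          rw [hJr_def]
          simp only [hNs, hL0 ω, zero_mul, ENNReal.ofReal_zero]
        rw [lintegral_congr this, lintegral_zero]
      rw [hφ1_def]
      simp only [hFz, ENNReal.toReal_zero]
    have hφ1_intW : ∀ t : ℝ, IntegrableOn φ1 (Ioc t (t + h)) volume := by
      intro t
      have hsub : Ioc t (t + h) ⊆ Iio 0 ∪ {0} ∪ Ioc 0 (t + h) := by
        intro s hs
        rcases lt_trichotomy s 0 with h0|h0|h0
        · exact Or.inl (Or.inl h0)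
        · exact Or.inl (Or.inr (by simp [h0]))
        · exact Or.inr ⟨h0, hs.2⟩
      have hneg : IntegrableOn φ1 (Iio (0:ℝ)) volume := by
        have hz : IntegrableOn (fun _ : ℝ => (0:ℝ)) (Iio (0:ℝ)) volume := integrableOn_zero
        exact (integrableOn_congr_fun (fun s hs => hφ1_zero s hs) measurableSet_Iio).mpr hz
      have hzero : IntegrableOn φ1 {(0:ℝ)} volume := by
        unfold IntegrableOn
        rw [Measure.restrict_eq_zero.mpr (measure_singleton 0)]
        exact integrable_zero_measure
      exact (((hneg.union hzero).union (hφ1_int' (t + h))).mono_set hsub)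
    have hwin : Tendsto (fun t => ∫ s in Ioc t (t + h), φ1 s) atTop (nhds (lamv * h)) :=
      gcb_window hh hφ1_intW hconv1''
    have hshift : Tendsto (fun t : ℝ => φ2 (t + h)) atTop (nhds c) :=
      hconv2''.comp (tendsto_atTop_add_const_right atTop h tendsto_id)
    have hdiff : Tendsto (fun t : ℝ => φ2 (t + h) - φ2 t) atTop (nhds 0) := by
      have := hshift.sub hconv2''
      rwa [sub_self] at this
    have h4 := hwin.add hdiff
    rw [add_zero] at h4
    apply Filter.Tendsto.congr' _ h4
    filter_upwards [eventually_ge_atTop (0:ℝ)] with t ht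
    have hth : (0:ℝ) ≤ t + h := by linarith
    rw [hreal (t + h) hth, hreal t ht]
    have hsplit : ∫ s in Ioc (0:ℝ) (t + h), φ1 s
        = (∫ s in Ioc (0:ℝ) t, φ1 s) + ∫ s in Ioc t (t + h), φ1 s := by
      rw [← setIntegral_union (Ioc_disjoint_Ioc_of_le le_rfl) measurableSet_Ioc (hφ1_int' t)
        ((hφ1_int' (t+h)).mono_set (Ioc_subset_Ioc_left ht)),
        Ioc_union_Ioc_eq_Ioc ht (by linarith)]
    rw [hsplit]
    ring
end
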